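/- arXiv:1611.09273 — 8 statements merged into one kernel-verified Lean document; each statement's English description precedes it below -/
import Mathlib

section
/- Let A, B, C, D be points in ℝ^d and let U ⊆ S^{d-1} be a nonempty open set of unit vectors. If for every ξ ∈ U the orthogonal projections of the segments AB and CD onto the hyperplane ξ^⊥ have equal nonzero length, then B − A = D − C or B − A = −(D − C); in particular the segments AB and CD are parallel and have equal length. -/
open scoped RealInnerProductSpace

theorem stmt0 {d : ℕ} (A B C D : EuclideanSpace ℝ (Fin d))
    (U : Set (EuclideanSpace ℝ (Fin d))) (hUs : U ⊆ Metric.sphere 0 1)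
    (hUopen : ∃ V : Set (EuclideanSpace ℝ (Fin d)), IsOpen V ∧ U = V ∩ Metric.sphere 0 1)
    (hUne : U.Nonempty)
    (h : ∀ ξ ∈ U,
      ‖(A - ⟪A, ξ⟫ • ξ) - (B - ⟪B, ξ⟫ • ξ)‖ = ‖(C - ⟪C, ξ⟫ • ξ) - (D - ⟪D, ξ⟫ • ξ)‖ ∧
      ‖(A - ⟪A, ξ⟫ • ξ) - (B - ⟪B, ξ⟫ • ξ)‖ ≠ 0) :
    B - A = D - C ∨ B - A = -(D - C) := by
  classical
  obtain ⟨u, hu⟩ : ∃ u : EuclideanSpace ℝ (Fin d), u = A - B := ⟨_, rfl⟩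
  obtain ⟨v, hv⟩ : ∃ v : EuclideanSpace ℝ (Fin d), v = C - D := ⟨_, rfl⟩
  -- rewrite hypothesis in terms of u, v
  have key : ∀ ξ ∈ U, ‖u - ⟪u, ξ⟫ • ξ‖ = ‖v - ⟪v, ξ⟫ • ξ‖ ∧ u - ⟪u, ξ⟫ • ξ ≠ 0 := by
    intro ξ hξ
    obtain ⟨h1, h2⟩ := h ξ hξ
    have e1 : (A - ⟪A, ξ⟫ • ξ) - (B - ⟪B, ξ⟫ • ξ) = u - ⟪u, ξ⟫ • ξ := by
      rw [hu, inner_sub_left, sub_smul]; abel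
    have e2 : (C - ⟪C, ξ⟫ • ξ) - (D - ⟪D, ξ⟫ • ξ) = v - ⟪v, ξ⟫ • ξ := by
      rw [hv, inner_sub_left, sub_smul]; abel
    rw [e1, e2] at h1
    rw [e1] at h2
    exact ⟨h1, fun hz => h2 (by rw [hz, norm_zero])⟩
  obtain ⟨c, hc⟩ : ∃ c : ℝ, c = ⟪u, u⟫ - ⟪v, v⟫ := ⟨_, rfl⟩
  -- On U, the quadratic form vanishes
  have expand : ∀ (p ξ : EuclideanSpace ℝ (Fin d)), ⟪ξ, ξ⟫ = (1 : ℝ) →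
      ⟪p - ⟪p, ξ⟫ • ξ, p - ⟪p, ξ⟫ • ξ⟫ = ⟪p, p⟫ - ⟪p, ξ⟫ ^ 2 := by
    intro p ξ hξ2
    rw [inner_sub_left, inner_sub_right, inner_sub_right, real_inner_smul_left,
      real_inner_smul_left, real_inner_smul_right, real_inner_smul_right, hξ2,
      real_inner_comm ξ p]
    ring
  have hUq : ∀ ξ ∈ U, ⟪u, ξ⟫ ^ 2 - ⟪v, ξ⟫ ^ 2 - c = 0 := by
    intro ξ hξ
    have hξn : ‖ξ‖ = 1 := by simpa using hUs hξ
    have hξ2 : ⟪ξ, ξ⟫ = (1 : ℝ) := by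
      rw [real_inner_self_eq_norm_sq, hξn]; norm_num
    obtain ⟨h1, _⟩ := key ξ hξ
    have h1' : ⟪u - ⟪u, ξ⟫ • ξ, u - ⟪u, ξ⟫ • ξ⟫ = ⟪v - ⟪v, ξ⟫ • ξ, v - ⟪v, ξ⟫ • ξ⟫ := by
      rw [real_inner_self_eq_norm_sq, real_inner_self_eq_norm_sq, h1]
    rw [expand u ξ hξ2, expand v ξ hξ2] at h1'
    rw [hc]; linarith
  -- the quadratic form as a function
  obtain ⟨F, hF⟩ : ∃ F : EuclideanSpace ℝ (Fin d) → ℝ,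
      F = fun x => ⟪u, x⟫ ^ 2 - ⟪v, x⟫ ^ 2 - c * ⟪x, x⟫ := ⟨_, rfl⟩
  have hFanal : AnalyticOnNhd ℝ F Set.univ := by
    rw [hF]
    intro x _
    have hinner : ∀ w : EuclideanSpace ℝ (Fin d), AnalyticAt ℝ (fun y => ⟪w, y⟫) x :=
      fun w => (innerSL ℝ w).analyticAt x
    have hxx : AnalyticAt ℝ (fun y : EuclideanSpace ℝ (Fin d) => ⟪y, y⟫) x := by
      have hb : AnalyticAt ℝ (fun p : EuclideanSpace ℝ (Fin d) × EuclideanSpace ℝ (Fin d) =>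
          ((innerSL ℝ) p.1) p.2) (x, x) :=
        (innerSL ℝ (E := EuclideanSpace ℝ (Fin d))).analyticAt_bilinear (x, x)
      have := hb.comp₂ (analyticAt_id (𝕜 := ℝ)) (analyticAt_id (𝕜 := ℝ))
      simpa using this
    exact (((hinner u).pow 2).sub ((hinner v).pow 2)).sub ((analyticAt_const).mul hxx)
  obtain ⟨V, hVopen, hUV⟩ := hUopen
  obtain ⟨ξ₀, hξ₀U⟩ := hUne
  -- the open cone over U
  obtain ⟨Cn, hCn⟩ : ∃ Cn : Set (EuclideanSpace ℝ (Fin d)),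
      Cn = {x | x ≠ 0 ∧ ‖x‖⁻¹ • x ∈ V} := ⟨_, rfl⟩
  have hCnopen : IsOpen Cn := by
    have hco : ContinuousOn (fun x : EuclideanSpace ℝ (Fin d) => ‖x‖⁻¹ • x)
        {x : EuclideanSpace ℝ (Fin d) | x ≠ 0} := by
      exact (continuous_norm.continuousOn.inv₀
        (fun x hx => norm_ne_zero_iff.mpr hx)).smul continuousOn_id
    have hCe : Cn = {x : EuclideanSpace ℝ (Fin d) | x ≠ 0} ∩
        (fun x : EuclideanSpace ℝ (Fin d) => ‖x‖⁻¹ • x) ⁻¹' V := by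
      rw [hCn]; ext x; simp [Set.mem_inter_iff]
    rw [hCe]
    exact hco.isOpen_inter_preimage (isOpen_compl_singleton) hVopen
  have hFCn : ∀ x ∈ Cn, F x = 0 := by
    intro x hxC
    rw [hCn] at hxC
    obtain ⟨hx0, hxV⟩ := hxC
    obtain ⟨ξ, hξdef⟩ : ∃ ξ : EuclideanSpace ℝ (Fin d), ξ = ‖x‖⁻¹ • x := ⟨_, rfl⟩
    have hxn : ‖x‖ ≠ 0 := norm_ne_zero_iff.mpr hx0
    have hξn : ‖ξ‖ = 1 := by
      rw [hξdef, norm_smul, norm_inv, norm_norm, inv_mul_cancel₀ hxn]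
    have hξU : ξ ∈ U := by
      rw [hUV]
      exact ⟨hξdef ▸ hxV, by simpa using hξn⟩
    have hq := hUq ξ hξU
    have hξ2 : ⟪ξ, ξ⟫ = (1 : ℝ) := by
      rw [real_inner_self_eq_norm_sq, hξn]; norm_num
    have hx : x = ‖x‖ • ξ := by
      rw [hξdef, smul_smul, mul_inv_cancel₀ hxn, one_smul]
    have hFs : F (‖x‖ • ξ) = ‖x‖ ^ 2 * (⟪u, ξ⟫ ^ 2 - ⟪v, ξ⟫ ^ 2 - c * ⟪ξ, ξ⟫) := by
      rw [hF]
      simp only []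
      rw [real_inner_smul_right u, real_inner_smul_right v, real_inner_smul_left,
        real_inner_smul_right]
      ring
    rw [hx, hFs, hξ2]
    rw [mul_one] at *
    rw [show ⟪u, ξ⟫ ^ 2 - ⟪v, ξ⟫ ^ 2 - c = 0 from hq]
    ring
  have hξ₀n : ‖ξ₀‖ = 1 := by simpa using hUs hξ₀U
  have hξ₀0 : ξ₀ ≠ 0 := by
    intro hz'; rw [hz', norm_zero] at hξ₀n; norm_num at hξ₀n
  have hξ₀2 : ⟪ξ₀, ξ₀⟫ = (1 : ℝ) := by
    rw [real_inner_self_eq_norm_sq, hξ₀n]; norm_num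
  have hξ₀Cn : ξ₀ ∈ Cn := by
    rw [hCn]
    refine ⟨hξ₀0, ?_⟩
    rw [hξ₀n, inv_one, one_smul]
    exact (hUV ▸ hξ₀U).1
  -- identity theorem: F = 0 everywhere
  have hFzero : ∀ x : EuclideanSpace ℝ (Fin d), F x = 0 := by
    have hev : F =ᶠ[nhds ξ₀] 0 := by
      filter_upwards [hCnopen.mem_nhds hξ₀Cn] with x hx
      exact hFCn x hx
    have := hFanal.eqOn_zero_of_preconnected_of_eventuallyEq_zero
      isPreconnected_univ (Set.mem_univ ξ₀) hev
    intro x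
    exact this (Set.mem_univ x)
  -- rewrite as product of two linear forms
  obtain ⟨w, hw⟩ : ∃ w : EuclideanSpace ℝ (Fin d), w = u - v := ⟨_, rfl⟩
  obtain ⟨z, hz⟩ : ∃ z : EuclideanSpace ℝ (Fin d), z = u + v := ⟨_, rfl⟩
  have hprod : ∀ x : EuclideanSpace ℝ (Fin d), ⟪w, x⟫ * ⟪z, x⟫ = c * ⟪x, x⟫ := by
    intro x
    have hFx := hFzero x
    rw [hF] at hFx
    simp only [] at hFx
    rw [hw, hz, inner_sub_left, inner_add_left]
    nlinarith [hFx]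
  -- construct a nonzero vector orthogonal to w, derive c = 0
  obtain ⟨_, hy0⟩ := key ξ₀ hξ₀U
  obtain ⟨y, hy⟩ : ∃ y : EuclideanSpace ℝ (Fin d), y = u - ⟪u, ξ₀⟫ • ξ₀ := ⟨_, rfl⟩
  rw [← hy] at hy0
  have hξ₀y : ⟪ξ₀, y⟫ = 0 := by
    rw [hy, inner_sub_right, real_inner_smul_right, hξ₀2, real_inner_comm ξ₀ u]
    ring
  have hyξ₀ : ⟪y, ξ₀⟫ = 0 := by rw [real_inner_comm]; exact hξ₀y
  have hcz : c = 0 := by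
    obtain ⟨x, hx0, hwx⟩ : ∃ x : EuclideanSpace ℝ (Fin d), x ≠ 0 ∧ ⟪w, x⟫ = 0 := by
      by_cases hwξ : ⟪w, ξ₀⟫ = 0
      · exact ⟨ξ₀, hξ₀0, hwξ⟩
      · refine ⟨⟪w, y⟫ • ξ₀ - ⟪w, ξ₀⟫ • y, ?_, ?_⟩
        · intro hzz
          have h0 : ⟪y, ⟪w, y⟫ • ξ₀ - ⟪w, ξ₀⟫ • y⟫ = 0 := by rw [hzz, inner_zero_right]
          rw [inner_sub_right, real_inner_smul_right, real_inner_smul_right, hyξ₀] at h0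
          have hyy : ⟪y, y⟫ ≠ 0 := fun hh => hy0 (inner_self_eq_zero.mp hh)
          have hm : ⟪w, ξ₀⟫ * ⟪y, y⟫ = 0 := by linarith
          rcases mul_eq_zero.mp hm with h' | h'
          · exact hwξ h'
          · exact hyy h'
        · rw [inner_sub_right, real_inner_smul_right, real_inner_smul_right]
          ring
    have hp := hprod x
    rw [hwx, zero_mul] at hp
    have hxx : ⟪x, x⟫ ≠ 0 := fun hh => hx0 (inner_self_eq_zero.mp hh)
    rcases mul_eq_zero.mp hp.symm with h' | h'
    · exact h'
    · exact absurd h' hxx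
  have hprod0 : ∀ x : EuclideanSpace ℝ (Fin d), ⟪w, x⟫ * ⟪z, x⟫ = 0 := by
    intro x; rw [hprod x, hcz, zero_mul]
  -- conclude w = 0 or z = 0
  have hzw : ⟪z, w⟫ = 0 := by
    rcases mul_eq_zero.mp (hprod0 w) with h' | h'
    · rw [inner_self_eq_zero.mp h', inner_zero_right]
    · exact h'
  have hwz : ⟪w, z⟫ = 0 := by rw [real_inner_comm]; exact hzw
  have hfinal := hprod0 (w + z)
  rw [inner_add_right, inner_add_right, hwz, hzw] at hfinal
  have hww : ⟪w, w⟫ * ⟪z, z⟫ = 0 := by nlinarith [hfinal]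
  rcases mul_eq_zero.mp hww with h' | h'
  · left
    have hw0 : w = 0 := inner_self_eq_zero.mp h'
    have huv : u = v := by rw [hw] at hw0; rwa [sub_eq_zero] at hw0
    rw [show B - A = -(A - B) by abel, show D - C = -(C - D) by abel, ← hu, ← hv, huv]
  · right
    have hz0 : z = 0 := inner_self_eq_zero.mp h'
    have huv : u = -v := by rw [hz] at hz0; rw [eq_neg_iff_add_eq_zero]; exact hz0
    rw [show B - A = -(A - B) by abel, ← hu, huv, hv]
    abel
end

section
/- Let α and β be two (d−2)-dimensional linear subspaces of ℝ^d, d ≥ 3, with dim(α ∩ β) = d−3 (so α ≠ β and they are not parallel). Then the set of directions ξ ∈ S^{d-1} \ (α ∪ β) such that the hyperplanes-within-ξ^⊥ given by the projections α|ξ^⊥ and β|ξ^⊥ are orthogonal (i.e., their normal vectors inside ξ^⊥ are orthogonal) is a nowhere dense subset of S^{d-1}. -/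
open scoped RealInnerProductSpace

/-- The orthogonal projection onto the hyperplane `ξ^⊥`, as a linear map on the ambient space. -/
noncomputable def projPerp {d : ℕ} (ξ : EuclideanSpace ℝ (Fin d)) :
    EuclideanSpace ℝ (Fin d) →ₗ[ℝ] EuclideanSpace ℝ (Fin d) :=
  ((ℝ ∙ ξ)ᗮ).subtype ∘ₗ (Submodule.orthogonalProjection (ℝ ∙ ξ)ᗮ).toLinearMap

open Module in
private lemma stmt4_exists_unit {d : ℕ} (K : Submodule ℝ (EuclideanSpace ℝ (Fin d)))
    (h : 0 < finrank ℝ K) : ∃ v, v ∈ K ∧ ‖v‖ = 1 := by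
  have hne : K ≠ ⊥ := by
    intro hbot; rw [hbot] at h; simp at h
  obtain ⟨v, hv, hv0⟩ := Submodule.exists_mem_ne_zero_of_ne_bot hne
  refine ⟨‖v‖⁻¹ • v, K.smul_mem _ hv, ?_⟩
  have : ‖v‖ ≠ 0 := norm_ne_zero_iff.2 hv0
  simp [norm_smul, inv_mul_cancel₀ this, abs_of_nonneg]

private lemma stmt4_aux_nowhere {d : ℕ} (F : EuclideanSpace ℝ (Fin d) → ℝ)
    (hF : AnalyticOnNhd ℝ F Set.univ)
    (hhom : ∀ (t : ℝ) x, F (t • x) = t ^ 2 * F x)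
    (x₀ : EuclideanSpace ℝ (Fin d)) (hx₀ : F x₀ ≠ 0) :
    interior {ξ : Metric.sphere (0 : EuclideanSpace ℝ (Fin d)) 1 | F ξ.1 = 0} = ∅ := by
  by_contra h
  obtain ⟨ξ₀, hξ₀⟩ := Set.nonempty_iff_ne_empty.2 h
  obtain ⟨W, hWopen, hWeq⟩ := isOpen_induced_iff.1 (isOpen_interior
    (s := {ξ : Metric.sphere (0 : EuclideanSpace ℝ (Fin d)) 1 | F ξ.1 = 0}))
  set C : Set (EuclideanSpace ℝ (Fin d)) := {x | x ≠ 0 ∧ ‖x‖⁻¹ • x ∈ W} with hC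
  have hCopen : IsOpen C := by
    have hcont : ContinuousOn (fun x : EuclideanSpace ℝ (Fin d) => ‖x‖⁻¹ • x) {0}ᶜ := by
      apply ContinuousOn.fun_smul _ continuousOn_id
      exact (continuousOn_id.norm).inv₀ (fun x hx => norm_ne_zero_iff.2 hx)
    have h2 := hcont.isOpen_inter_preimage isOpen_compl_singleton hWopen
    have h3 : C = {(0 : EuclideanSpace ℝ (Fin d))}ᶜ ∩
        (fun x : EuclideanSpace ℝ (Fin d) => ‖x‖⁻¹ • x) ⁻¹' W := by
      ext x; simp [hC, Set.mem_setOf_eq]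
    rw [h3]; exact h2
  have hξ₀C : (ξ₀ : EuclideanSpace ℝ (Fin d)) ∈ C := by
    have hnorm : ‖(ξ₀ : EuclideanSpace ℝ (Fin d))‖ = 1 := by
      have := ξ₀.2; simpa using this
    refine ⟨by simp [← norm_ne_zero_iff, hnorm], ?_⟩
    rw [hnorm]; simp
    rw [← hWeq] at hξ₀; exact hξ₀
  have hvanish : ∀ x ∈ C, F x = 0 := by
    rintro x ⟨hx0, hxW⟩
    have hn : ‖x‖ ≠ 0 := norm_ne_zero_iff.2 hx0
    have hmem : (‖x‖⁻¹ • x) ∈ Metric.sphere (0 : EuclideanSpace ℝ (Fin d)) 1 := by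
      simp [norm_smul, abs_of_nonneg, inv_mul_cancel₀ hn]
    have hmem2 : (⟨_, hmem⟩ : Metric.sphere (0 : EuclideanSpace ℝ (Fin d)) 1) ∈
        interior {ξ : Metric.sphere (0 : EuclideanSpace ℝ (Fin d)) 1 | F ξ.1 = 0} := by
      rw [← hWeq]; exact hxW
    have hz : F (‖x‖⁻¹ • x) = 0 :=
      interior_subset
        (s := {ξ : Metric.sphere (0 : EuclideanSpace ℝ (Fin d)) 1 | F ξ.1 = 0}) hmem2
    have := hhom ‖x‖ (‖x‖⁻¹ • x)
    rw [smul_smul, mul_inv_cancel₀ hn, one_smul, hz, mul_zero] at this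
    exact this
  have hzero : Set.EqOn F 0 Set.univ := by
    apply hF.eqOn_zero_of_preconnected_of_eventuallyEq_zero isPreconnected_univ
      (Set.mem_univ (ξ₀ : EuclideanSpace ℝ (Fin d)))
    exact Filter.eventuallyEq_iff_exists_mem.2 ⟨C, hCopen.mem_nhds hξ₀C, hvanish⟩
  exact hx₀ (hzero (Set.mem_univ x₀))

open Module in
theorem stmt4 {d : ℕ} (hd : 3 ≤ d)
    (α β : Submodule ℝ (EuclideanSpace ℝ (Fin d)))
    (hα : Module.finrank ℝ α = d - 2) (hβ : Module.finrank ℝ β = d - 2)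
    (hαβ : Module.finrank ℝ (α ⊓ β : Submodule ℝ (EuclideanSpace ℝ (Fin d))) = d - 3) :
    IsNowhereDense
      ((↑) ⁻¹' {ξ : EuclideanSpace ℝ (Fin d) |
          ξ ∉ (α : Set (EuclideanSpace ℝ (Fin d))) ∧
          ξ ∉ (β : Set (EuclideanSpace ℝ (Fin d))) ∧
          ∀ u ∈ (α.map (projPerp ξ))ᗮ ⊓ (ℝ ∙ ξ)ᗮ,
            ∀ w ∈ (β.map (projPerp ξ))ᗮ ⊓ (ℝ ∙ ξ)ᗮ, ⟪u, w⟫ = 0}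
        : Set (Metric.sphere (0 : EuclideanSpace ℝ (Fin d)) 1)) := by
  -- Construct the frame v, a₂, b₂
  have hdim : finrank ℝ (EuclideanSpace ℝ (Fin d)) = d := by simp
  have hsup : finrank ℝ ((α ⊔ β : Submodule ℝ (EuclideanSpace ℝ (Fin d)))) = d - 1 := by
    have := Submodule.finrank_sup_add_finrank_inf_eq α β
    rw [hα, hβ, hαβ] at this; omega
  have hvsub : finrank ℝ ((α ⊔ β : Submodule ℝ (EuclideanSpace ℝ (Fin d)))ᗮ) = 1 := by
    have := Submodule.finrank_add_finrank_orthogonal (α ⊔ β)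
    rw [hsup, hdim] at this; omega
  obtain ⟨v, hv, hvnorm⟩ := stmt4_exists_unit _ (by rw [hvsub]; norm_num)
  have hv0 : v ≠ 0 := by intro h0; rw [h0] at hvnorm; simp at hvnorm
  rw [← Submodule.inf_orthogonal] at hv
  have hαo : finrank ℝ (αᗮ) = 2 := by
    have := Submodule.finrank_add_finrank_orthogonal α
    rw [hα, hdim] at this; omega
  have hβo : finrank ℝ (βᗮ) = 2 := by
    have := Submodule.finrank_add_finrank_orthogonal β
    rw [hβ, hdim] at this; omega
  have hvo : finrank ℝ ((ℝ ∙ v)ᗮ) = d - 1 := by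
    have := Submodule.finrank_add_finrank_orthogonal (ℝ ∙ v)
    rw [finrank_span_singleton hv0, hdim] at this; omega
  have key : ∀ K : Submodule ℝ (EuclideanSpace ℝ (Fin d)), finrank ℝ K = 2 →
      0 < finrank ℝ (K ⊓ (ℝ ∙ v)ᗮ : Submodule ℝ _) := by
    intro K hK
    have h1 := Submodule.finrank_sup_add_finrank_inf_eq K ((ℝ ∙ v)ᗮ)
    have h2 := Submodule.finrank_le (K ⊔ (ℝ ∙ v)ᗮ)
    rw [hdim] at h2
    rw [hK, hvo] at h1; omega
  obtain ⟨a₂, ha₂', ha₂n⟩ := stmt4_exists_unit _ (key _ hαo)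
  obtain ⟨b₂, hb₂', hb₂n⟩ := stmt4_exists_unit _ (key _ hβo)
  have ha₂ : a₂ ∈ αᗮ := (Submodule.mem_inf.1 ha₂').1
  have hb₂ : b₂ ∈ βᗮ := (Submodule.mem_inf.1 hb₂').1
  have hva₂ : ⟪v, a₂⟫ = 0 :=
    (Submodule.mem_inf.1 ha₂').2 v (Submodule.mem_span_singleton_self v)
  have hvb₂ : ⟪v, b₂⟫ = 0 :=
    (Submodule.mem_inf.1 hb₂').2 v (Submodule.mem_span_singleton_self v)
  have hvα : v ∈ αᗮ := hv.1
  have hvβ : v ∈ βᗮ := hv.2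
  -- The quadratic form F
  set c : ℝ := ⟪a₂, b₂⟫ with hc
  set F : EuclideanSpace ℝ (Fin d) → ℝ :=
    fun x => ⟪a₂, x⟫ * ⟪b₂, x⟫ + ⟪v, x⟫ ^ 2 * c with hF
  have hFanalytic : AnalyticOnNhd ℝ F Set.univ := by
    have ha : AnalyticOnNhd ℝ (fun x : EuclideanSpace ℝ (Fin d) => ⟪a₂, x⟫) Set.univ :=
      fun x _ => (innerSL ℝ a₂).analyticAt x
    have hb : AnalyticOnNhd ℝ (fun x : EuclideanSpace ℝ (Fin d) => ⟪b₂, x⟫) Set.univ :=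
      fun x _ => (innerSL ℝ b₂).analyticAt x
    have hvv : AnalyticOnNhd ℝ (fun x : EuclideanSpace ℝ (Fin d) => ⟪v, x⟫) Set.univ :=
      fun x _ => (innerSL ℝ v).analyticAt x
    exact (ha.mul hb).add ((hvv.pow 2).mul analyticOnNhd_const)
  have hFhom : ∀ (t : ℝ) x, F (t • x) = t ^ 2 * F x := by
    intro t x
    simp only [hF, real_inner_smul_right]
    ring
  -- F does not vanish identically
  have haa : ⟪a₂, a₂⟫ = (1 : ℝ) := by
    rw [real_inner_self_eq_norm_sq, ha₂n]; norm_num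
  have hbb : ⟪b₂, b₂⟫ = (1 : ℝ) := by
    rw [real_inner_self_eq_norm_sq, hb₂n]; norm_num
  have hba : ⟪b₂, a₂⟫ = c := by rw [real_inner_comm]
  have hwitness : ∃ x₀, F x₀ ≠ 0 := by
    by_cases hc0 : c = 0
    · refine ⟨a₂ + b₂, ?_⟩
      have e1 : F (a₂ + b₂) = (1 + c) * (c + 1) + (0 + 0) ^ 2 * c := by
        simp only [hF, inner_add_right, hva₂, hvb₂, haa, hbb, hba, ← hc]
      rw [e1, hc0]; norm_num
    · refine ⟨a₂, ?_⟩
      have e1 : F a₂ = 1 * c + 0 ^ 2 * c := by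
        simp only [hF, haa, hva₂, hba]
      rw [e1]; simpa using hc0
  obtain ⟨x₀, hx₀⟩ := hwitness
  -- The target set is contained in the zero set of F on the sphere
  have hsub : ((↑) ⁻¹' {ξ : EuclideanSpace ℝ (Fin d) |
          ξ ∉ (α : Set (EuclideanSpace ℝ (Fin d))) ∧
          ξ ∉ (β : Set (EuclideanSpace ℝ (Fin d))) ∧
          ∀ u ∈ (α.map (projPerp ξ))ᗮ ⊓ (ℝ ∙ ξ)ᗮ,
            ∀ w ∈ (β.map (projPerp ξ))ᗮ ⊓ (ℝ ∙ ξ)ᗮ, ⟪u, w⟫ = 0}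
        : Set (Metric.sphere (0 : EuclideanSpace ℝ (Fin d)) 1)) ⊆
      {ξ : Metric.sphere (0 : EuclideanSpace ℝ (Fin d)) 1 | F ξ.1 = 0} := by
    rintro ⟨ξ, hξs⟩ ⟨-, -, H⟩
    simp only [Set.mem_setOf_eq]
    set u : EuclideanSpace ℝ (Fin d) := ⟪a₂, ξ⟫ • v - ⟪v, ξ⟫ • a₂ with hu
    set w : EuclideanSpace ℝ (Fin d) := ⟪b₂, ξ⟫ • v - ⟪v, ξ⟫ • b₂ with hw
    have mem_perp : ∀ (p : EuclideanSpace ℝ (Fin d)), p ∈ (ℝ ∙ ξ)ᗮ → ⟪p, ξ⟫ = 0 →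
        ∀ (γ : Submodule ℝ (EuclideanSpace ℝ (Fin d))), p ∈ γᗮ →
        p ∈ (γ.map (projPerp ξ))ᗮ ⊓ (ℝ ∙ ξ)ᗮ := by
      intro p hpξ hpξ' γ hpγ
      refine Submodule.mem_inf.2 ⟨?_, hpξ⟩
      intro y hy
      obtain ⟨a, ha, rfl⟩ := Submodule.mem_map.1 hy
      have : (projPerp ξ) a = (ℝ ∙ ξ)ᗮ.starProjection a := rfl
      rw [this, Submodule.inner_starProjection_left_eq_right,
        Submodule.starProjection_eq_self_iff.2 hpξ]
      exact hpγ a ha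
    have huξ' : ⟪u, ξ⟫ = 0 := by
      simp only [hu, inner_sub_left, real_inner_smul_left]
      ring
    have huξ : u ∈ (ℝ ∙ ξ)ᗮ := by
      rw [Submodule.mem_orthogonal]
      intro x hx
      obtain ⟨r, rfl⟩ := Submodule.mem_span_singleton.1 hx
      rw [real_inner_smul_left, real_inner_comm, huξ', mul_zero]
    have hwξ' : ⟪w, ξ⟫ = 0 := by
      simp only [hw, inner_sub_left, real_inner_smul_left]
      ring
    have hwξ : w ∈ (ℝ ∙ ξ)ᗮ := by
      rw [Submodule.mem_orthogonal]
      intro x hx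
      obtain ⟨r, rfl⟩ := Submodule.mem_span_singleton.1 hx
      rw [real_inner_smul_left, real_inner_comm, hwξ', mul_zero]
    have huα : u ∈ αᗮ := αᗮ.sub_mem (αᗮ.smul_mem _ hvα) (αᗮ.smul_mem _ ha₂)
    have hwβ : w ∈ βᗮ := βᗮ.sub_mem (βᗮ.smul_mem _ hvβ) (βᗮ.smul_mem _ hb₂)
    have hmain := H u (mem_perp u huξ huξ' α huα) w (mem_perp w hwξ hwξ' β hwβ)
    simp only [hu, hw, inner_sub_left, inner_sub_right, real_inner_smul_left,
      real_inner_smul_right] at hmain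
    rw [real_inner_self_eq_norm_sq] at hmain
    have hav : ⟪a₂, v⟫ = (0 : ℝ) := by rw [real_inner_comm]; exact hva₂
    simp only [hvnorm, hav, hvb₂] at hmain
    show ⟪a₂, ξ⟫ * ⟪b₂, ξ⟫ + ⟪v, ξ⟫ ^ 2 * ⟪a₂, b₂⟫ = 0
    linear_combination hmain
  -- Conclude
  have hclosed : IsClosed {ξ : Metric.sphere (0 : EuclideanSpace ℝ (Fin d)) 1 | F ξ.1 = 0} := by
    have hFc : Continuous F := by
      apply Continuous.add
      · exact ((continuous_const.inner continuous_id)).mul (continuous_const.inner continuous_id)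
      · exact ((continuous_const.inner continuous_id).pow 2).mul continuous_const
    exact (isClosed_singleton.preimage hFc).preimage continuous_subtype_val
  have hint := stmt4_aux_nowhere F hFanalytic hFhom x₀ hx₀
  unfold IsNowhereDense
  have h1 := closure_minimal hsub hclosed
  have h2 := interior_mono h1
  rw [hint] at h2
  exact Set.eq_empty_of_subset_empty h2
end

section
/- Let l₁, l₂, l₃, l₄ be four lines in ℝ^d, d ≥ 3, none passing through the origin, with l₁ not parallel to l₂, and let U ⊆ S^{d-1} be a nonempty open set such that for every ξ ∈ U each line l_i meets ξ^⊥ in exactly one point v_i(ξ), and |v₁(ξ) − v₂(ξ)| = |v₃(ξ) − v₄(ξ)| for all ξ ∈ U. Then one of the following holds: l₁ = ±l₃ and l₂ = ±l₄, or l₁ = ±l₄ and l₂ = ±l₃. -/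
open scoped RealInnerProductSpace

section Helpers

variable {E : Type*} [NormedAddCommGroup E] [InnerProductSpace ℝ E]
variable {F : Type*} [NormedAddCommGroup F] [InnerProductSpace ℝ F]



lemma an_inner {f g : E → F} {s : Set E}
    (hf : AnalyticOnNhd ℝ f s) (hg : AnalyticOnNhd ℝ g s) :
    AnalyticOnNhd ℝ (fun x => ⟪f x, g x⟫) s := fun x hx =>
  ((innerSL ℝ (E := F)).analyticAt_bilinear (f x, g x)).comp₂ (hf x hx) (hg x hx)

lemma an_normsq {f : E → F} {s : Set E} (hf : AnalyticOnNhd ℝ f s) :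
    AnalyticOnNhd ℝ (fun x => ‖f x‖ ^ 2) s := by
  have h := an_inner hf hf
  simpa [real_inner_self_eq_norm_sq] using h

lemma an_innerR (c : E) : AnalyticOnNhd ℝ (fun ξ : E => ⟪c, ξ⟫) Set.univ :=
  (innerSL ℝ c).analyticOnNhd _

lemma zero_of_open {f : E → ℝ} (hf : AnalyticOnNhd ℝ f Set.univ) {s : Set E}
    (hs : IsOpen s) (hne : s.Nonempty) (hz : ∀ x ∈ s, f x = 0) (x : E) : f x = 0 := by
  obtain ⟨z₀, hz₀⟩ := hne
  have h := hf.eqOn_zero_of_preconnected_of_eventuallyEq_zero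
    (convex_univ.isPreconnected) (Set.mem_univ z₀)
    (Filter.eventuallyEq_of_mem (hs.mem_nhds hz₀) hz)
  exact h (Set.mem_univ x)

lemma lem_split (a c : E) (h : E → ℝ) (hh : Continuous h)
    (H : ∀ ξ, ⟪a, ξ⟫ = 0 → ⟪c, ξ⟫ * h ξ = 0) :
    (∀ ξ, ⟪a, ξ⟫ = 0 → ⟪c, ξ⟫ = 0) ∨ (∀ ξ, ⟪a, ξ⟫ = 0 → h ξ = 0) := by
  by_cases hl : ∀ ξ, ⟪a, ξ⟫ = 0 → ⟪c, ξ⟫ = 0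
  · exact Or.inl hl
  push_neg at hl
  obtain ⟨x, hax, hcx⟩ := hl
  right
  intro y hy
  have key : ∀ t : ℝ, ⟪c, y⟫ + t * ⟪c, x⟫ ≠ 0 → h (y + t • x) = 0 := by
    intro t ht
    have h1 : ⟪a, y + t • x⟫ = 0 := by
      rw [inner_add_right, real_inner_smul_right, hy, hax]; ring
    have h2 := H _ h1
    rw [inner_add_right, real_inner_smul_right] at h2
    rcases mul_eq_zero.1 h2 with h3 | h3
    · exact absurd h3 ht
    · exact h3
  set t0 : ℝ := -⟪c, y⟫ / ⟪c, x⟫ with ht0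
  have key2 : ∀ t : ℝ, t ≠ t0 → h (y + t • x) = 0 := by
    intro t ht
    apply key
    intro hc
    apply ht
    rw [ht0, eq_div_iff hcx]
    linarith [hc]
  have hcont : Filter.Tendsto (fun t : ℝ => h (y + t • x)) (nhdsWithin 0 {t0}ᶜ) (nhds (h y)) := by
    have : Continuous fun t : ℝ => h (y + t • x) := by
      exact hh.comp (continuous_const.add (continuous_id.smul continuous_const))
    have := this.tendsto 0
    simp only [zero_smul, add_zero] at this
    exact this.mono_left nhdsWithin_le_nhds
  have hne : (nhdsWithin (0:ℝ) {t0}ᶜ).NeBot := by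
    apply mem_closure_iff_nhdsWithin_neBot.1
    have : Dense ({t0}ᶜ : Set ℝ) := dense_compl_singleton t0
    exact this 0
  have hzero : Filter.Tendsto (fun t : ℝ => h (y + t • x)) (nhdsWithin 0 {t0}ᶜ) (nhds 0) := by
    apply Filter.Tendsto.congr' _ tendsto_const_nhds
    filter_upwards [self_mem_nhdsWithin] with t ht
    exact (key2 t ht).symm
  exact tendsto_nhds_unique hcont hzero

lemma lem_split_sq (a c : E) (h : E → ℝ) (hh : Continuous h)
    (H : ∀ ξ, ⟪a, ξ⟫ = 0 → ⟪c, ξ⟫ * (⟪c, ξ⟫ * h ξ) = 0) :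
    (∀ ξ, ⟪a, ξ⟫ = 0 → ⟪c, ξ⟫ = 0) ∨ (∀ ξ, ⟪a, ξ⟫ = 0 → h ξ = 0) := by
  rcases lem_split a c _ ((continuous_const.inner continuous_id).mul hh) H with h1 | h1
  · exact Or.inl h1
  · exact lem_split a c h hh h1

lemma lem_par (a c : E) (ha : a ≠ 0) (H : ∀ ξ, ⟪a, ξ⟫ = 0 → ⟪c, ξ⟫ = 0) :
    ∃ μ : ℝ, c = μ • a := by
  set μ : ℝ := ⟪c, a⟫ / ⟪a, a⟫ with hμ
  refine ⟨μ, ?_⟩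
  set ξ := c - μ • a with hξ
  have haa : ⟪a, a⟫ ≠ 0 := by
    rw [real_inner_self_eq_norm_sq]
    have : ‖a‖ ≠ 0 := norm_ne_zero_iff.2 ha
    positivity
  have h1 : ⟪a, ξ⟫ = 0 := by
    rw [hξ, inner_sub_right, real_inner_smul_right, hμ, real_inner_comm c a]
    field_simp
    ring
  have h2 : ⟪c, ξ⟫ = 0 := H ξ h1
  have h3 : ⟪ξ, ξ⟫ = 0 := by
    have : ⟪ξ, ξ⟫ = ⟪c, ξ⟫ - μ * ⟪a, ξ⟫ := by
      rw [hξ, inner_sub_left, real_inner_smul_left]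
    rw [this, h1, h2]; ring
  have h4 : ξ = 0 := by
    have := real_inner_self_eq_norm_sq ξ
    rw [h3] at this
    have : ‖ξ‖ = 0 := by nlinarith [norm_nonneg ξ]
    simpa using this
  rw [hξ] at h4
  exact sub_eq_zero.1 h4

lemma lem_v (a b : E) (ha : a ≠ 0) (v ξ : E)
    (hint : {x | ∃ t : ℝ, x = b + t • a} ∩ {x | ⟪x, ξ⟫ = 0} = {v}) :
    ⟪a, ξ⟫ ≠ 0 ∧ ⟪a, ξ⟫ • v = ⟪a, ξ⟫ • b - ⟪b, ξ⟫ • a := by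
  have hv : v ∈ {x | ∃ t : ℝ, x = b + t • a} ∩ {x | ⟪x, ξ⟫ = 0} := by
    rw [hint]; rfl
  obtain ⟨⟨t, htv⟩, hperp⟩ := hv
  have hperp' : ⟪b, ξ⟫ + t * ⟪a, ξ⟫ = 0 := by
    have : ⟪v, ξ⟫ = 0 := hperp
    rw [htv, inner_add_left, real_inner_smul_left] at this
    linarith
  by_cases hF : ⟪a, ξ⟫ = 0
  · exfalso
    have hb : ⟪b, ξ⟫ = 0 := by rw [hF] at hperp'; linarith
    have hmem : b + (t + 1) • a ∈ {x | ∃ t : ℝ, x = b + t • a} ∩ {x | ⟪x, ξ⟫ = 0} := by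
      constructor
      · exact ⟨t + 1, rfl⟩
      · show ⟪b + (t+1) • a, ξ⟫ = 0
        rw [inner_add_left, real_inner_smul_left, hb, hF]; ring
    rw [hint] at hmem
    have : b + (t + 1) • a = b + t • a := by rw [Set.mem_singleton_iff.1 hmem, htv]
    have h2 : (1 : ℝ) • a = 0 := by
      have := add_left_cancel this
      have h3 : ((t+1) - t) • a = 0 := by rw [sub_smul, this, sub_self]
      simpa using h3
    simp at h2
    exact ha h2
  · refine ⟨hF, ?_⟩
    rw [htv, smul_add, smul_smul]
    have ht : ⟪a, ξ⟫ * t = -⟪b, ξ⟫ := by linarith [mul_comm t ⟪a, ξ⟫]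
    rw [ht]
    module

lemma line_eq_of (a0 b0 b2 : E) (l s : ℝ) (hl : l ≠ 0) (h : b0 - b2 = s • a0) :
    {x : E | ∃ t : ℝ, x = b0 + t • a0} = {x : E | ∃ t : ℝ, x = b2 + t • (l • a0)} := by
  have hb2 : b2 = b0 - s • a0 := by rw [← h]; abel
  ext x
  constructor
  · rintro ⟨t, rfl⟩
    exact ⟨(t + s) / l, by rw [hb2, smul_smul]; field_simp; module⟩
  · rintro ⟨t, rfl⟩
    exact ⟨t * l - s, by rw [hb2]; module⟩

lemma line_neg_of (a0 b0 b2 : E) (l s : ℝ) (hl : l ≠ 0) (h : b0 + b2 = s • a0) :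
    {x : E | ∃ t : ℝ, x = b0 + t • a0} =
      (fun x => -x) '' {x : E | ∃ t : ℝ, x = b2 + t • (l • a0)} := by
  have hb2 : b2 = -b0 + s • a0 := by rw [← h]; abel
  ext x
  constructor
  · rintro ⟨t, rfl⟩
    refine ⟨b2 + (-(t + s) / l) • (l • a0), ⟨_, rfl⟩, ?_⟩
    rw [hb2, smul_smul]
    field_simp
    module
  · rintro ⟨y, ⟨t, rfl⟩, rfl⟩
    exact ⟨-(t * l) - s, by rw [hb2]; module⟩

lemma lem_res (a0 a1 p r : E) (ha0 : a0 ≠ 0)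
    (hnp : ¬ ∃ c : ℝ, a1 = c • a0)
    (H : ∀ ξ, ⟪a0, ξ⟫ = 0 →
      ⟪a1, ξ⟫ * (⟪a1, ξ⟫ * ((⟪p, ξ⟫ - ⟪r, ξ⟫) * (⟪p, ξ⟫ + ⟪r, ξ⟫))) = 0) :
    (∃ s : ℝ, p - r = s • a0) ∨ (∃ s : ℝ, p + r = s • a0) := by
  have hcont : Continuous fun ξ : E => (⟪p, ξ⟫ - ⟪r, ξ⟫) * (⟪p, ξ⟫ + ⟪r, ξ⟫) :=
    ((continuous_const.inner continuous_id).sub (continuous_const.inner continuous_id)).mul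
      ((continuous_const.inner continuous_id).add (continuous_const.inner continuous_id))
  rcases lem_split_sq a0 a1 _ hcont H with h1 | h1
  · exact absurd (lem_par a0 a1 ha0 h1) hnp
  · have h2 : ∀ ξ, ⟪a0, ξ⟫ = 0 → ⟪p - r, ξ⟫ * ⟪p + r, ξ⟫ = 0 := by
      intro ξ hξ
      have := h1 ξ hξ
      rw [inner_sub_left, inner_add_left]
      exact this
    rcases lem_split a0 (p - r) (fun ξ => ⟪p + r, ξ⟫)
        (continuous_const.inner continuous_id) h2 with h3 | h3
    · exact Or.inl (lem_par a0 (p - r) ha0 h3)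
    · exact Or.inr (lem_par a0 (p + r) ha0 h3)

lemma exists_both (a0 a1 : E) (h0 : a0 ≠ 0) (h1 : a1 ≠ 0) :
    ∃ ξ, ⟪a0, ξ⟫ ≠ 0 ∧ ⟪a1, ξ⟫ ≠ 0 := by
  by_contra h
  push_neg at h
  have H : ∀ ξ : E, ⟪(0 : E), ξ⟫ = 0 → ⟪a0, ξ⟫ * ⟪a1, ξ⟫ = 0 := by
    intro ξ _
    by_cases h' : ⟪a0, ξ⟫ = 0
    · rw [h']; ring
    · rw [h ξ h']; ring
  rcases lem_split (0 : E) a0 (fun ξ => ⟪a1, ξ⟫)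
      (continuous_const.inner continuous_id) H with h2 | h2
  · have h3 := h2 a0 (by simp)
    have h4 : ‖a0‖ ^ 2 = 0 := by rw [← real_inner_self_eq_norm_sq]; exact h3
    exact h0 (norm_eq_zero.1 (pow_eq_zero_iff two_ne_zero |>.1 h4))
  · have h3 := h2 a1 (by simp)
    have h4 : ‖a1‖ ^ 2 = 0 := by rw [← real_inner_self_eq_norm_sq]; exact h3
    exact h1 (norm_eq_zero.1 (pow_eq_zero_iff two_ne_zero |>.1 h4))

lemma normsq_smul (c : ℝ) (u : E) : ‖c • u‖ ^ 2 = c ^ 2 * ‖u‖ ^ 2 := by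
  rw [norm_smul, mul_pow, Real.norm_eq_abs, sq_abs]

lemma lem_cont2 (a0 a1 b0 b1 p q : E) (l m : ℝ) (hl : l ≠ 0) (hm : m ≠ 0)
    (ha0 : a0 ≠ 0) (ha1 : a1 ≠ 0)
    (hP : ∀ ξ, (⟪a0, ξ⟫ * ⟪a1, ξ⟫) ^ 2 * (l * m) ^ 2 *
      (‖⟪a1, ξ⟫ • (⟪a0, ξ⟫ • b0 - ⟪b0, ξ⟫ • a0) - ⟪a0, ξ⟫ • (⟪a1, ξ⟫ • b1 - ⟪b1, ξ⟫ • a1)‖ ^ 2 -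
       ‖⟪a1, ξ⟫ • (⟪a0, ξ⟫ • p - ⟪p, ξ⟫ • a0) - ⟪a0, ξ⟫ • (⟪a1, ξ⟫ • q - ⟪q, ξ⟫ • a1)‖ ^ 2) = 0) :
    ∀ ξ, ‖⟪a1, ξ⟫ • (⟪a0, ξ⟫ • b0 - ⟪b0, ξ⟫ • a0) - ⟪a0, ξ⟫ • (⟪a1, ξ⟫ • b1 - ⟪b1, ξ⟫ • a1)‖ ^ 2 -
       ‖⟪a1, ξ⟫ • (⟪a0, ξ⟫ • p - ⟪p, ξ⟫ • a0) - ⟪a0, ξ⟫ • (⟪a1, ξ⟫ • q - ⟪q, ξ⟫ • a1)‖ ^ 2 = 0 := by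
  have hQa : AnalyticOnNhd ℝ (fun ξ =>
      ‖⟪a1, ξ⟫ • (⟪a0, ξ⟫ • b0 - ⟪b0, ξ⟫ • a0) - ⟪a0, ξ⟫ • (⟪a1, ξ⟫ • b1 - ⟪b1, ξ⟫ • a1)‖ ^ 2 -
      ‖⟪a1, ξ⟫ • (⟪a0, ξ⟫ • p - ⟪p, ξ⟫ • a0) - ⟪a0, ξ⟫ • (⟪a1, ξ⟫ • q - ⟪q, ξ⟫ • a1)‖ ^ 2)
      Set.univ := by
    have W : ∀ c c' : E, AnalyticOnNhd ℝ (fun ξ : E => ⟪c, ξ⟫ • c' - ⟪c', ξ⟫ • c) Set.univ :=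
      fun c c' => ((an_innerR c).smul analyticOnNhd_const).sub
        ((an_innerR c').smul analyticOnNhd_const)
    exact (an_normsq (((an_innerR a1).smul (W a0 b0)).sub ((an_innerR a0).smul (W a1 b1)))).sub
      (an_normsq (((an_innerR a1).smul (W a0 p)).sub ((an_innerR a0).smul (W a1 q))))
  apply zero_of_open hQa
    (IsOpen.inter (isOpen_compl_singleton.preimage (continuous_const.inner continuous_id))
      (isOpen_compl_singleton.preimage (continuous_const.inner continuous_id)))
    (by
      obtain ⟨ξ, h1, h2⟩ := exists_both a0 a1 ha0 ha1
      exact ⟨ξ, h1, h2⟩)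
  rintro ξ ⟨h1, h2⟩
  have h1' : ⟪a0, ξ⟫ ≠ 0 := h1
  have h2' : ⟪a1, ξ⟫ ≠ 0 := h2
  have := hP ξ
  rcases mul_eq_zero.1 this with h3 | h3
  · rcases mul_eq_zero.1 h3 with h4 | h4
    · exact absurd (pow_eq_zero_iff two_ne_zero |>.1 h4)
        (mul_ne_zero h1' h2')
    · exact absurd (pow_eq_zero_iff two_ne_zero |>.1 h4) (mul_ne_zero hl hm)
  · exact h3

lemma lem_caseA (a0 a1 b0 b1 b2 b3 : E)
    (ha0 : a0 ≠ 0) (ha1 : a1 ≠ 0)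
    (hnp : ¬ ∃ c : ℝ, a1 = c • a0) (hnp' : ¬ ∃ c : ℝ, a0 = c • a1)
    (hQ : ∀ ξ, ‖⟪a1, ξ⟫ • (⟪a0, ξ⟫ • b0 - ⟪b0, ξ⟫ • a0) - ⟪a0, ξ⟫ • (⟪a1, ξ⟫ • b1 - ⟪b1, ξ⟫ • a1)‖ ^ 2 -
       ‖⟪a1, ξ⟫ • (⟪a0, ξ⟫ • b2 - ⟪b2, ξ⟫ • a0) - ⟪a0, ξ⟫ • (⟪a1, ξ⟫ • b3 - ⟪b3, ξ⟫ • a1)‖ ^ 2 = 0) :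
    ((∃ s : ℝ, b0 - b2 = s • a0) ∨ (∃ s : ℝ, b0 + b2 = s • a0)) ∧
    ((∃ s : ℝ, b1 - b3 = s • a1) ∨ (∃ s : ℝ, b1 + b3 = s • a1)) := by
  have hn0 : ‖a0‖ ^ 2 ≠ 0 := pow_ne_zero 2 (norm_ne_zero_iff.2 ha0)
  have hn1 : ‖a1‖ ^ 2 ≠ 0 := pow_ne_zero 2 (norm_ne_zero_iff.2 ha1)
  constructor
  · apply lem_res a0 a1 b0 b2 ha0 hnp
    intro ξ hξ
    have h := hQ ξ
    rw [hξ] at h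
    simp only [zero_smul, zero_sub, sub_zero, smul_neg, norm_neg, smul_smul, normsq_smul] at h
    have h2 : ⟪a1, ξ⟫ * (⟪a1, ξ⟫ * ((⟪b0, ξ⟫ - ⟪b2, ξ⟫) * (⟪b0, ξ⟫ + ⟪b2, ξ⟫))) * ‖a0‖ ^ 2 = 0 := by
      linear_combination h
    exact (mul_eq_zero.1 h2).resolve_right hn0
  · apply lem_res a1 a0 b1 b3 ha1 hnp'
    intro ξ hξ
    have h := hQ ξ
    rw [hξ] at h
    simp only [zero_smul, zero_sub, sub_zero, smul_neg, norm_neg, smul_smul, normsq_smul] at h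
    have h2 : ⟪a0, ξ⟫ * (⟪a0, ξ⟫ * ((⟪b1, ξ⟫ - ⟪b3, ξ⟫) * (⟪b1, ξ⟫ + ⟪b3, ξ⟫))) * ‖a1‖ ^ 2 = 0 := by
      linear_combination h
    exact (mul_eq_zero.1 h2).resolve_right hn1
end Helpers

theorem stmt6 {d : ℕ} (hd : 3 ≤ d)
    (a b : Fin 4 → EuclideanSpace ℝ (Fin d)) (ha : ∀ i, a i ≠ 0)
    (L : Fin 4 → Set (EuclideanSpace ℝ (Fin d)))
    (hL : ∀ i, L i = {x | ∃ t : ℝ, x = b i + t • a i})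
    (h0 : ∀ i, (0 : EuclideanSpace ℝ (Fin d)) ∉ L i)
    (hnpar : ¬ ∃ c : ℝ, a 1 = c • a 0)
    (U : Set (EuclideanSpace ℝ (Fin d))) (hUs : U ⊆ Metric.sphere 0 1)
    (hUopen : ∃ V : Set (EuclideanSpace ℝ (Fin d)), IsOpen V ∧ U = V ∩ Metric.sphere 0 1)
    (hUne : U.Nonempty)
    (v : Fin 4 → EuclideanSpace ℝ (Fin d) → EuclideanSpace ℝ (Fin d))
    (hv : ∀ ξ ∈ U, ∀ i, L i ∩ {x | ⟪x, ξ⟫ = 0} = {v i ξ})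
    (hlen : ∀ ξ ∈ U, ‖v 0 ξ - v 1 ξ‖ = ‖v 2 ξ - v 3 ξ‖) :
    ((L 0 = L 2 ∨ L 0 = (fun x => -x) '' L 2) ∧ (L 1 = L 3 ∨ L 1 = (fun x => -x) '' L 3)) ∨
    ((L 0 = L 3 ∨ L 0 = (fun x => -x) '' L 3) ∧ (L 1 = L 2 ∨ L 1 = (fun x => -x) '' L 2)) := by
  classical
  obtain ⟨V, hVopen, hUV⟩ := hUopen
  have hstep : ∀ ξ ∈ U, ∀ i, ⟪a i, ξ⟫ ≠ 0 ∧
      ⟪a i, ξ⟫ • v i ξ = ⟪a i, ξ⟫ • b i - ⟪b i, ξ⟫ • a i := by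
    intro ξ hξ i
    apply lem_v (a i) (b i) (ha i) (v i ξ) ξ
    rw [← hL i]
    exact hv ξ hξ i
  set W : Fin 4 → EuclideanSpace ℝ (Fin d) → EuclideanSpace ℝ (Fin d) :=
    fun i ξ => ⟪a i, ξ⟫ • b i - ⟪b i, ξ⟫ • a i with hWdef
  set P : EuclideanSpace ℝ (Fin d) → ℝ := fun ξ =>
    (⟪a 2, ξ⟫ * ⟪a 3, ξ⟫) ^ 2 * ‖⟪a 1, ξ⟫ • W 0 ξ - ⟪a 0, ξ⟫ • W 1 ξ‖ ^ 2 -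
    (⟪a 0, ξ⟫ * ⟪a 1, ξ⟫) ^ 2 * ‖⟪a 3, ξ⟫ • W 2 ξ - ⟪a 2, ξ⟫ • W 3 ξ‖ ^ 2 with hPdef
  have hPU : ∀ ξ ∈ U, P ξ = 0 := by
    intro ξ hξ
    obtain ⟨hn0, he0⟩ := hstep ξ hξ 0
    obtain ⟨hn1, he1⟩ := hstep ξ hξ 1
    obtain ⟨hn2, he2⟩ := hstep ξ hξ 2
    obtain ⟨hn3, he3⟩ := hstep ξ hξ 3
    have e01 : ⟪a 1, ξ⟫ • W 0 ξ - ⟪a 0, ξ⟫ • W 1 ξ =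
        (⟪a 0, ξ⟫ * ⟪a 1, ξ⟫) • (v 0 ξ - v 1 ξ) := by
      simp only [hWdef]
      rw [← he0, ← he1]
      module
    have e23 : ⟪a 3, ξ⟫ • W 2 ξ - ⟪a 2, ξ⟫ • W 3 ξ =
        (⟪a 2, ξ⟫ * ⟪a 3, ξ⟫) • (v 2 ξ - v 3 ξ) := by
      simp only [hWdef]
      rw [← he2, ← he3]
      module
    simp only [hPdef]
    rw [e01, e23, normsq_smul, normsq_smul, hlen ξ hξ]
    ring
  have hP0 : ∀ ξ, P ξ = 0 := by
    have hWh : ∀ (i : Fin 4) (r : ℝ) ξ, W i (r • ξ) = r • W i ξ := by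
      intro i r ξ
      simp only [hWdef]
      rw [real_inner_smul_right, real_inner_smul_right]
      module
    have hsm : ∀ (r c c' : ℝ) (u u' : EuclideanSpace ℝ (Fin d)),
        (r * c) • (r • u) - (r * c') • (r • u') = (r ^ 2) • (c • u - c' • u') := by
      intros; module
    have hPh : ∀ (r : ℝ) ξ, P (r • ξ) = r ^ 8 * P ξ := by
      intro r ξ
      simp only [hPdef, real_inner_smul_right, hWh, hsm, normsq_smul]
      ring
    have hPa : AnalyticOnNhd ℝ P Set.univ := by
      have hWa : ∀ i : Fin 4, AnalyticOnNhd ℝ (W i) Set.univ := by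
        intro i
        simp only [hWdef]
        exact ((an_innerR (a i)).smul analyticOnNhd_const).sub
          ((an_innerR (b i)).smul analyticOnNhd_const)
      simp only [hPdef]
      exact ((((an_innerR (a 2)).mul (an_innerR (a 3))).pow 2).mul
          (an_normsq (((an_innerR (a 1)).smul (hWa 0)).sub ((an_innerR (a 0)).smul (hWa 1))))).sub
        ((((an_innerR (a 0)).mul (an_innerR (a 1))).pow 2).mul
          (an_normsq (((an_innerR (a 3)).smul (hWa 2)).sub ((an_innerR (a 2)).smul (hWa 3)))))
    have hcont : ContinuousOn (fun x : EuclideanSpace ℝ (Fin d) => ‖x‖⁻¹ • x)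
        {x : EuclideanSpace ℝ (Fin d) | x ≠ 0} :=
      ContinuousOn.smul (continuous_norm.continuousOn.inv₀
        (fun x hx => norm_ne_zero_iff.2 hx)) continuousOn_id
    have hCopen : IsOpen ({x : EuclideanSpace ℝ (Fin d) | x ≠ 0} ∩
        (fun x : EuclideanSpace ℝ (Fin d) => ‖x‖⁻¹ • x) ⁻¹' V) :=
      hcont.isOpen_inter_preimage isOpen_ne hVopen
    apply zero_of_open hPa hCopen
    · obtain ⟨ξ0, hξ0⟩ := hUne
      have hm : ξ0 ∈ V ∩ Metric.sphere 0 1 := by rw [← hUV]; exact hξ0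
      have hn : ‖ξ0‖ = 1 := mem_sphere_zero_iff_norm.1 hm.2
      refine ⟨ξ0, ?_, ?_⟩
      · intro h; rw [h] at hn; simp at hn
      · show ‖ξ0‖⁻¹ • ξ0 ∈ V
        rw [hn]; simpa using hm.1
    · rintro x ⟨hx0, hxV⟩
      have hx0' : x ≠ 0 := hx0
      have hnx : ‖x‖ ≠ 0 := norm_ne_zero_iff.2 hx0'
      have hnorm : ‖(‖x‖⁻¹ • x : EuclideanSpace ℝ (Fin d))‖ = 1 := by
        rw [norm_smul, Real.norm_eq_abs, abs_inv, abs_norm, inv_mul_cancel₀ hnx]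
      have hξU : (‖x‖⁻¹ • x : EuclideanSpace ℝ (Fin d)) ∈ U := by
        rw [hUV]
        exact ⟨hxV, mem_sphere_zero_iff_norm.2 hnorm⟩
      have hx : x = ‖x‖ • (‖x‖⁻¹ • x : EuclideanSpace ℝ (Fin d)) :=
        (smul_inv_smul₀ hnx x).symm
      rw [hx, hPh, hPU _ hξU, mul_zero]
  have cInner : ∀ c : EuclideanSpace ℝ (Fin d),
      Continuous fun ξ : EuclideanSpace ℝ (Fin d) => ⟪c, ξ⟫ :=
    fun c => continuous_const.inner continuous_id
  have hn0 : ‖a 0‖ ^ 2 ≠ 0 := pow_ne_zero 2 (norm_ne_zero_iff.2 (ha 0))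
  have hn1 : ‖a 1‖ ^ 2 ≠ 0 := pow_ne_zero 2 (norm_ne_zero_iff.2 (ha 1))
  have hnpar' : ¬ ∃ c : ℝ, a 0 = c • a 1 := by
    rintro ⟨c, hc⟩
    have hc0 : c ≠ 0 := by
      rintro rfl
      rw [zero_smul] at hc
      exact ha 0 hc
    exact hnpar ⟨c⁻¹, by rw [hc, smul_smul, inv_mul_cancel₀ hc0, one_smul]⟩
  have key0 : ∀ ξ, ⟪a 0, ξ⟫ = 0 → ⟪a 1, ξ⟫ * (⟪a 1, ξ⟫ * (⟪a 2, ξ⟫ * (⟪a 2, ξ⟫ *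
      (⟪a 3, ξ⟫ * (⟪a 3, ξ⟫ * (⟪b 0, ξ⟫ * ⟪b 0, ξ⟫)))))) = 0 := by
    intro ξ hξ
    have h := hP0 ξ
    simp only [hPdef, hWdef] at h
    rw [hξ] at h
    simp only [zero_smul, zero_sub, sub_zero, smul_neg, norm_neg, smul_smul, normsq_smul,
      zero_mul, mul_zero, ne_eq, OfNat.ofNat_ne_zero, not_false_iff, zero_pow] at h
    have h2 : ⟪a 1, ξ⟫ * (⟪a 1, ξ⟫ * (⟪a 2, ξ⟫ * (⟪a 2, ξ⟫ *
        (⟪a 3, ξ⟫ * (⟪a 3, ξ⟫ * (⟪b 0, ξ⟫ * ⟪b 0, ξ⟫)))))) * ‖a 0‖ ^ 2 = 0 := by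
      linear_combination h
    exact (mul_eq_zero.1 h2).resolve_right hn0
  have key1 : ∀ ξ, ⟪a 1, ξ⟫ = 0 → ⟪a 0, ξ⟫ * (⟪a 0, ξ⟫ * (⟪a 2, ξ⟫ * (⟪a 2, ξ⟫ *
      (⟪a 3, ξ⟫ * (⟪a 3, ξ⟫ * (⟪b 1, ξ⟫ * ⟪b 1, ξ⟫)))))) = 0 := by
    intro ξ hξ
    have h := hP0 ξ
    simp only [hPdef, hWdef] at h
    rw [hξ] at h
    simp only [zero_smul, zero_sub, sub_zero, smul_neg, norm_neg, smul_smul, normsq_smul,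
      zero_mul, mul_zero, ne_eq, OfNat.ofNat_ne_zero, not_false_iff, zero_pow] at h
    have h2 : ⟪a 0, ξ⟫ * (⟪a 0, ξ⟫ * (⟪a 2, ξ⟫ * (⟪a 2, ξ⟫ *
        (⟪a 3, ξ⟫ * (⟪a 3, ξ⟫ * (⟪b 1, ξ⟫ * ⟪b 1, ξ⟫)))))) * ‖a 1‖ ^ 2 = 0 := by
      linear_combination h
    exact (mul_eq_zero.1 h2).resolve_right hn1
  have hb_notpar : ∀ i : Fin 4, ∀ c : EuclideanSpace ℝ (Fin d), a i = c →
      (∀ ξ, ⟪c, ξ⟫ = 0 → ⟪b i, ξ⟫ * ⟪b i, ξ⟫ = 0) → False := by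
    intro i c hc hb
    obtain ⟨s, hs⟩ := lem_par c (b i) (hc ▸ ha i)
      (fun ξ hξ => mul_self_eq_zero.1 (hb ξ hξ))
    apply h0 i
    rw [hL i]
    exact ⟨-s, by rw [hs, ← hc]; module⟩
  have hsplit0 : (∃ l : ℝ, a 2 = l • a 0) ∨ (∃ l : ℝ, a 3 = l • a 0) := by
    rcases lem_split_sq (a 0) (a 1) _
      ((cInner (a 2)).mul ((cInner (a 2)).mul ((cInner (a 3)).mul ((cInner (a 3)).mul
        ((cInner (b 0)).mul (cInner (b 0))))))) key0 with h | h
    · exact absurd (lem_par _ _ (ha 0) h) hnpar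
    rcases lem_split_sq (a 0) (a 2) _
      ((cInner (a 3)).mul ((cInner (a 3)).mul ((cInner (b 0)).mul (cInner (b 0))))) h with h | h
    · exact Or.inl (lem_par _ _ (ha 0) h)
    rcases lem_split_sq (a 0) (a 3) _
      ((cInner (b 0)).mul (cInner (b 0))) h with h | h
    · exact Or.inr (lem_par _ _ (ha 0) h)
    · exact absurd (hb_notpar 0 (a 0) rfl h) (fun hf => hf)
  have hsplit1 : (∃ l : ℝ, a 2 = l • a 1) ∨ (∃ l : ℝ, a 3 = l • a 1) := by
    rcases lem_split_sq (a 1) (a 0) _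
      ((cInner (a 2)).mul ((cInner (a 2)).mul ((cInner (a 3)).mul ((cInner (a 3)).mul
        ((cInner (b 1)).mul (cInner (b 1))))))) key1 with h | h
    · exact absurd (lem_par _ _ (ha 1) h) hnpar'
    rcases lem_split_sq (a 1) (a 2) _
      ((cInner (a 3)).mul ((cInner (a 3)).mul ((cInner (b 1)).mul (cInner (b 1))))) h with h | h
    · exact Or.inl (lem_par _ _ (ha 1) h)
    rcases lem_split_sq (a 1) (a 3) _
      ((cInner (b 1)).mul (cInner (b 1))) h with h | h
    · exact Or.inr (lem_par _ _ (ha 1) h)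
    · exact absurd (hb_notpar 1 (a 1) rfl h) (fun hf => hf)
  have hlne : ∀ (i : Fin 4) (l : ℝ) (c : EuclideanSpace ℝ (Fin d)), a i = l • c → l ≠ 0 := by
    intro i l c h hl0
    rw [hl0, zero_smul] at h
    exact ha i h
  rcases hsplit0 with ⟨l2, hl2⟩ | ⟨l3, hl3⟩ <;> rcases hsplit1 with ⟨m2, hm2⟩ | ⟨m3, hm3⟩
  · exfalso
    have hm2' : m2 ≠ 0 := hlne 2 m2 (a 1) hm2
    apply hnpar
    refine ⟨m2⁻¹ * l2, ?_⟩
    have : m2 • a 1 = l2 • a 0 := by rw [← hm2, ← hl2]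
    rw [mul_smul, ← this, smul_smul, inv_mul_cancel₀ hm2', one_smul]
  · -- Case A : a 2 = l2 • a 0, a 3 = m3 • a 1
    left
    have hl2' : l2 ≠ 0 := hlne 2 l2 (a 0) hl2
    have hm3' : m3 ≠ 0 := hlne 3 m3 (a 1) hm3
    have hQ := lem_cont2 (a 0) (a 1) (b 0) (b 1) (b 2) (b 3) l2 m3 hl2' hm3' (ha 0) (ha 1) ?_
    · obtain ⟨hc02, hc13⟩ := lem_caseA (a 0) (a 1) (b 0) (b 1) (b 2) (b 3)
        (ha 0) (ha 1) hnpar hnpar' hQ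
      constructor
      · rcases hc02 with ⟨s, hs⟩ | ⟨s, hs⟩
        · left; rw [hL 0, hL 2, hl2]; exact line_eq_of _ _ _ _ _ hl2' hs
        · right; rw [hL 0, hL 2, hl2]; exact line_neg_of _ _ _ _ _ hl2' hs
      · rcases hc13 with ⟨s, hs⟩ | ⟨s, hs⟩
        · left; rw [hL 1, hL 3, hm3]; exact line_eq_of _ _ _ _ _ hm3' hs
        · right; rw [hL 1, hL 3, hm3]; exact line_neg_of _ _ _ _ _ hm3' hs
    · intro ξ
      have h := hP0 ξ
      simp only [hPdef, hWdef] at h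
      rw [hl2, hm3] at h
      simp only [real_inner_smul_left] at h
      have ev : (m3 * ⟪a 1, ξ⟫) • ((l2 * ⟪a 0, ξ⟫) • b 2 - ⟪b 2, ξ⟫ • l2 • a 0) -
          (l2 * ⟪a 0, ξ⟫) • ((m3 * ⟪a 1, ξ⟫) • b 3 - ⟪b 3, ξ⟫ • m3 • a 1) =
          (l2 * m3) • (⟪a 1, ξ⟫ • (⟪a 0, ξ⟫ • b 2 - ⟪b 2, ξ⟫ • a 0) -
            ⟪a 0, ξ⟫ • (⟪a 1, ξ⟫ • b 3 - ⟪b 3, ξ⟫ • a 1)) := by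
        module
      rw [ev, normsq_smul] at h
      linear_combination h
  · -- Case B : a 3 = l3 • a 0, a 2 = m2 • a 1
    right
    have hl3' : l3 ≠ 0 := hlne 3 l3 (a 0) hl3
    have hm2' : m2 ≠ 0 := hlne 2 m2 (a 1) hm2
    have hQ := lem_cont2 (a 0) (a 1) (b 0) (b 1) (b 3) (b 2) l3 m2 hl3' hm2' (ha 0) (ha 1) ?_
    · obtain ⟨hc03, hc12⟩ := lem_caseA (a 0) (a 1) (b 0) (b 1) (b 3) (b 2)
        (ha 0) (ha 1) hnpar hnpar' hQ
      constructor
      · rcases hc03 with ⟨s, hs⟩ | ⟨s, hs⟩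
        · left; rw [hL 0, hL 3, hl3]; exact line_eq_of _ _ _ _ _ hl3' hs
        · right; rw [hL 0, hL 3, hl3]; exact line_neg_of _ _ _ _ _ hl3' hs
      · rcases hc12 with ⟨s, hs⟩ | ⟨s, hs⟩
        · left; rw [hL 1, hL 2, hm2]; exact line_eq_of _ _ _ _ _ hm2' hs
        · right; rw [hL 1, hL 2, hm2]; exact line_neg_of _ _ _ _ _ hm2' hs
    · intro ξ
      have h := hP0 ξ
      simp only [hPdef, hWdef] at h
      rw [hl3, hm2] at h
      simp only [real_inner_smul_left] at h
      have ev : (l3 * ⟪a 0, ξ⟫) • ((m2 * ⟪a 1, ξ⟫) • b 2 - ⟪b 2, ξ⟫ • m2 • a 1) -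
          (m2 * ⟪a 1, ξ⟫) • ((l3 * ⟪a 0, ξ⟫) • b 3 - ⟪b 3, ξ⟫ • l3 • a 0) =
          (-(l3 * m2)) • (⟪a 1, ξ⟫ • (⟪a 0, ξ⟫ • b 3 - ⟪b 3, ξ⟫ • a 0) -
            ⟪a 0, ξ⟫ • (⟪a 1, ξ⟫ • b 2 - ⟪b 2, ξ⟫ • a 1)) := by
        module
      rw [ev, normsq_smul] at h
      linear_combination h
  · exfalso
    have hm3' : m3 ≠ 0 := hlne 3 m3 (a 1) hm3
    apply hnpar
    refine ⟨m3⁻¹ * l3, ?_⟩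
    have : m3 • a 1 = l3 • a 0 := by rw [← hm3, ← hl3]
    rw [mul_smul, ← this, smul_smul, inv_mul_cancel₀ hm3', one_smul]
end

section
/- Let l₁, l₂, l₃, l₄ be four lines in ℝ^d, d ≥ 3, none passing through the origin, such that l₁ and l₂ are not parallel and the linear span of l₁ ∪ l₂ is 3-dimensional. Let U ⊆ S^{d-1} be a nonempty open set such that for every ξ ∈ U each line l_i meets ξ^⊥ in a single point v_i(ξ) and |v₁(ξ) − v₂(ξ)| = |v₃(ξ) − v₄(ξ)|. Then one of the following holds: (l₁ = l₃ and l₂ = l₄), or (l₁ = −l₃ and l₂ = −l₄), or (l₁ = l₄ and l₂ = l₃), or (l₁ = −l₄ and l₂ = −l₃). -/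
open scoped RealInnerProductSpace

noncomputable def Qf {E : Type*} [NormedAddCommGroup E] [InnerProductSpace ℝ E]
    (p x q y : E) (ξ : E) : ℝ :=
  ⟪x - y, x - y⟫ * (⟪p,ξ⟫^2 * ⟪q,ξ⟫^2)
  - 2*⟪x,ξ⟫*⟪p,ξ⟫*⟪q,ξ⟫^2*⟪p, x - y⟫
  + 2*⟪y,ξ⟫*⟪q,ξ⟫*⟪p,ξ⟫^2*⟪q, x - y⟫
  + ⟪x,ξ⟫^2*⟪q,ξ⟫^2*⟪p,p⟫
  + ⟪y,ξ⟫^2*⟪p,ξ⟫^2*⟪q,q⟫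
  - 2*⟪x,ξ⟫*⟪y,ξ⟫*⟪p,ξ⟫*⟪q,ξ⟫*⟪p,q⟫

noncomputable def Kf {E : Type*} [NormedAddCommGroup E] [InnerProductSpace ℝ E]
    (p x q y : E) (ξ : E) : ℝ :=
  ⟪x,y⟫*⟪p,ξ⟫*⟪q,ξ⟫ - ⟪y,ξ⟫*⟪p,ξ⟫*⟪q,x⟫ - ⟪x,ξ⟫*⟪q,ξ⟫*⟪p,y⟫ + ⟪x,ξ⟫*⟪y,ξ⟫*⟪p,q⟫

section AuxAll

set_option linter.unusedSectionVars false
set_option linter.unusedVariables false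

variable {E : Type*} [NormedAddCommGroup E] [InnerProductSpace ℝ E] [FiniteDimensional ℝ E]



lemma exists_forall_ne {ι : Type*} (s : Finset ι) (f : ι → E →ₗ[ℝ] ℝ) (W : Submodule ℝ E)
    (h : ∀ i ∈ s, ∃ x ∈ W, f i x ≠ 0) : ∃ x ∈ W, ∀ i ∈ s, f i x ≠ 0 := by
  classical
  induction s using Finset.induction_on with
  | empty => exact ⟨0, W.zero_mem, by simp⟩
  | @insert a s ha ih =>
    obtain ⟨x, hxW, hx⟩ := ih (fun i hi => h i (Finset.mem_insert_of_mem hi))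
    obtain ⟨y, hyW, hy⟩ := h a (Finset.mem_insert_self a s)
    set T : Finset ℝ := insert (-(f a x) / f a y) (s.image fun i => -(f i x) / f i y) with hT
    obtain ⟨t, ht⟩ := Infinite.exists_notMem_finset T
    refine ⟨x + t • y, W.add_mem hxW (W.smul_mem t hyW), ?_⟩
    intro i hi hzero
    rw [map_add, map_smul, smul_eq_mul] at hzero
    rcases Finset.mem_insert.1 hi with rfl | his
    · have : t = -(f i x) / f i y := by field_simp; linarith
      exact ht (this ▸ Finset.mem_insert_self _ _)
    · by_cases hfy : f i y = 0
      · rw [hfy, mul_zero, add_zero] at hzero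
        exact hx i his hzero
      · have : t = -(f i x) / f i y := by field_simp; linarith
        refine ht (Finset.mem_insert_of_mem ?_)
        rw [this]
        exact Finset.mem_image_of_mem _ his

lemma lin_disj {ι : Type*} (s : Finset ι) (f : ι → E →ₗ[ℝ] ℝ) (W : Submodule ℝ E)
    (h : ∀ x ∈ W, ∃ i ∈ s, f i x = 0) : ∃ i ∈ s, ∀ x ∈ W, f i x = 0 := by
  by_contra hcon
  push_neg at hcon
  obtain ⟨x, hxW, hx⟩ := exists_forall_ne s f W (fun i hi => hcon i hi)
  obtain ⟨i, his, hi⟩ := h x hxW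
  exact hx i his hi

lemma span_orth (aa c : E) (h : ∀ x : E, ⟪aa, x⟫ = 0 → ⟪c, x⟫ = 0) : ∃ r : ℝ, c = r • aa := by
  have hc : c ∈ (ℝ ∙ aa)ᗮᗮ := by
    rw [Submodule.mem_orthogonal]
    intro x hx
    have : ⟪aa, x⟫ = 0 := hx aa (Submodule.mem_span_singleton_self aa)
    rw [real_inner_comm]
    exact h x this
  rw [Submodule.orthogonal_orthogonal, Submodule.mem_span_singleton] at hc
  obtain ⟨r, hr⟩ := hc
  exact ⟨r, hr.symm⟩

lemma inner_disj {n : ℕ} (aa : E) (c : Fin n → E)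
    (h : ∀ x, ⟪aa, x⟫ = 0 → ∃ i, ⟪c i, x⟫ = 0) : ∃ i, ∃ r : ℝ, c i = r • aa := by
  obtain ⟨i, -, hi⟩ := lin_disj (Finset.univ : Finset (Fin n))
    (fun i => ((innerSL ℝ (c i)) : E →ₗ[ℝ] ℝ)) ((ℝ ∙ aa)ᗮ) (by
      intro x hxW
      obtain ⟨i, hi⟩ := h x (Submodule.mem_orthogonal_singleton_iff_inner_right.1 hxW)
      exact ⟨i, Finset.mem_univ i, hi⟩)
  refine ⟨i, span_orth aa (c i) (fun x hx => ?_)⟩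
  exact hi x (Submodule.mem_orthogonal_singleton_iff_inner_right.2 hx)


lemma Qf_eq (p x q y ξ : E) (hp : ⟪p,ξ⟫ ≠ 0) (hq : ⟪q,ξ⟫ ≠ 0) :
    Qf p x q y ξ
      = ‖(x - (⟪x,ξ⟫/⟪p,ξ⟫)•p) - (y - (⟪y,ξ⟫/⟪q,ξ⟫)•q)‖^2 * (⟪p,ξ⟫^2*⟪q,ξ⟫^2) := by
  rw [← real_inner_self_eq_norm_sq, Qf]
  simp only [inner_sub_left, inner_sub_right, real_inner_smul_left, real_inner_smul_right]
  rw [real_inner_comm x y, real_inner_comm x p, real_inner_comm x q, real_inner_comm y p,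
    real_inner_comm y q, real_inner_comm p q]
  field_simp
  ring


lemma an_inner_s7 (c : E) : AnalyticOnNhd ℝ (fun ξ : E => ⟪c,ξ⟫) Set.univ :=
  (innerSL ℝ c).analyticOnNhd _

lemma Qf_an (p x q y : E) : AnalyticOnNhd ℝ (Qf p x q y) Set.univ := by
  unfold Qf
  have hp := an_inner_s7 (E := E) p
  have hq := an_inner_s7 (E := E) q
  have hx := an_inner_s7 (E := E) x
  have hy := an_inner_s7 (E := E) y
  have c2 : AnalyticOnNhd ℝ (fun _ : E => (2:ℝ)) Set.univ := analyticOnNhd_const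
  have cxy : AnalyticOnNhd ℝ (fun _ : E => ⟪x - y, x - y⟫) Set.univ := analyticOnNhd_const
  have cpxy : AnalyticOnNhd ℝ (fun _ : E => ⟪p, x - y⟫) Set.univ := analyticOnNhd_const
  have cqxy : AnalyticOnNhd ℝ (fun _ : E => ⟪q, x - y⟫) Set.univ := analyticOnNhd_const
  have cpp : AnalyticOnNhd ℝ (fun _ : E => ⟪p, p⟫) Set.univ := analyticOnNhd_const
  have cqq : AnalyticOnNhd ℝ (fun _ : E => ⟪q, q⟫) Set.univ := analyticOnNhd_const
  have cpq : AnalyticOnNhd ℝ (fun _ : E => ⟪p, q⟫) Set.univ := analyticOnNhd_const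
  have t1 := cxy.mul ((hp.pow 2).mul (hq.pow 2))
  have t2 := (((c2.mul hx).mul hp).mul (hq.pow 2)).mul cpxy
  have t3 := (((c2.mul hy).mul hq).mul (hp.pow 2)).mul cqxy
  have t4 := ((hx.pow 2).mul (hq.pow 2)).mul cpp
  have t5 := ((hy.pow 2).mul (hp.pow 2)).mul cqq
  have t6 := ((((c2.mul hx).mul hy).mul hp).mul hq).mul cpq
  exact ((((t1.sub t2).add t3).add t4).add t5).sub t6

lemma Kf_an (p x q y : E) : AnalyticOnNhd ℝ (Kf p x q y) Set.univ := by
  unfold Kf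
  have hp := an_inner_s7 (E := E) p
  have hq := an_inner_s7 (E := E) q
  have hx := an_inner_s7 (E := E) x
  have hy := an_inner_s7 (E := E) y
  have cxy : AnalyticOnNhd ℝ (fun _ : E => ⟪x, y⟫) Set.univ := analyticOnNhd_const
  have cqx : AnalyticOnNhd ℝ (fun _ : E => ⟪q, x⟫) Set.univ := analyticOnNhd_const
  have cpy : AnalyticOnNhd ℝ (fun _ : E => ⟪p, y⟫) Set.univ := analyticOnNhd_const
  have cpq : AnalyticOnNhd ℝ (fun _ : E => ⟪p, q⟫) Set.univ := analyticOnNhd_const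
  have t1 := (cxy.mul hp).mul hq
  have t2 := (hy.mul hp).mul cqx
  have t3 := (hx.mul hq).mul cpy
  have t4 := (hx.mul hy).mul cpq
  exact ((t1.sub t2).sub t3).add t4

lemma Qf_hom (p x q y : E) (r : ℝ) (ξ : E) : Qf p x q y (r • ξ) = r ^ 4 * Qf p x q y ξ := by
  simp only [Qf, real_inner_smul_right]; ring

lemma Kf_hom (p x q y : E) (r : ℝ) (ξ : E) : Kf p x q y (r • ξ) = r ^ 2 * Kf p x q y ξ := by
  simp only [Kf, real_inner_smul_right]; ring

lemma Kf_eq (p x q y ξ : E) (hp : ⟪p,ξ⟫ ≠ 0) (hq : ⟪q,ξ⟫ ≠ 0) :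
    Kf p x q y ξ
      = ⟪x - (⟪x,ξ⟫/⟪p,ξ⟫)•p, y - (⟪y,ξ⟫/⟪q,ξ⟫)•q⟫ * (⟪p,ξ⟫*⟪q,ξ⟫) := by
  rw [Kf]
  simp only [inner_sub_left, inner_sub_right, real_inner_smul_left, real_inner_smul_right]
  rw [real_inner_comm q x]
  field_simp
  ring


lemma ext_zero (F : E → ℝ) (hF : AnalyticOnNhd ℝ F Set.univ) (k : ℕ)
    (hhom : ∀ (r : ℝ) (x : E), 0 < r → F (r • x) = r ^ k * F x)
    (U : Set E) (hUs : U ⊆ Metric.sphere 0 1)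
    (hUopen : ∃ V : Set E, IsOpen V ∧ U = V ∩ Metric.sphere 0 1)
    (hUne : U.Nonempty) (hzero : ∀ ξ ∈ U, F ξ = 0) : ∀ x, F x = 0 := by
  obtain ⟨V, hV, hUV⟩ := hUopen
  set C : Set E := {x | x ≠ 0 ∧ ‖x‖⁻¹ • x ∈ V} with hC
  have hCopen : IsOpen C := by
    have h1 : IsOpen {x : E | x ≠ 0} := isOpen_compl_singleton
    have h2 : ContinuousOn (fun x : E => ‖x‖⁻¹ • x) {x : E | x ≠ 0} := by
      apply ContinuousOn.smul
      · exact (continuous_norm.continuousOn).inv₀ (fun x hx => norm_ne_zero_iff.2 hx)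
      · exact continuous_id.continuousOn
    exact h2.isOpen_inter_preimage h1 hV
  have hCzero : ∀ x ∈ C, F x = 0 := by
    rintro x ⟨hx0, hxV⟩
    have hn : (0:ℝ) < ‖x‖ := norm_pos_iff.2 hx0
    have hsph : ‖x‖⁻¹ • x ∈ Metric.sphere (0:E) 1 := by
      simp [norm_smul, abs_of_pos (inv_pos.2 hn), inv_mul_cancel₀ hn.ne']
    have hmem : ‖x‖⁻¹ • x ∈ U := by rw [hUV]; exact ⟨hxV, hsph⟩
    have := hhom ‖x‖ (‖x‖⁻¹ • x) hn
    rw [smul_inv_smul₀ hn.ne'] at this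
    rw [this, hzero _ hmem, mul_zero]
  obtain ⟨z, hz⟩ := hUne
  have hzC : z ∈ C := by
    have hz1 : ‖z‖ = 1 := by simpa using hUs hz
    have hz0 : z ≠ 0 := by intro h; rw [h] at hz1; simp at hz1
    refine ⟨hz0, ?_⟩
    rw [hz1, inv_one, one_smul]
    have := hUs hz
    rw [hUV] at hz; exact hz.1
  have := hF.eqOn_zero_of_preconnected_of_eventuallyEq_zero isPreconnected_univ (Set.mem_univ z)
    (Filter.eventuallyEq_of_mem (hCopen.mem_nhds hzC) hCzero)
  exact fun x => this (Set.mem_univ x)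


lemma quad_lemma {a0 a1 b0 b1 : E} (h01 : ⟪a0, a1⟫ = 0) (h0b1 : ⟪a0, b1⟫ = 0)
    (h1b0 : ⟪a1, b0⟫ = 0) (hbb : ⟪b0, b1⟫ = 0) (ha0 : a0 ≠ 0) (ha1 : a1 ≠ 0)
    (hnb0 : ∀ r : ℝ, b0 ≠ r • a0) (hnb1 : ∀ r : ℝ, b1 ≠ r • a1)
    (hspan : Module.finrank ℝ (Submodule.span ℝ ({a0, b0, a1, b1} : Set E)) = 3) : False := by
  set c0 : ℝ := ⟪a0, b0⟫ / ⟪a0, a0⟫ with hc0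
  set c1 : ℝ := ⟪a1, b1⟫ / ⟪a1, a1⟫ with hc1
  set b0' : E := b0 - c0 • a0 with hb0'
  set b1' : E := b1 - c1 • a1 with hb1'
  have ha0i : ⟪a0, a0⟫ ≠ 0 := fun h => ha0 (inner_self_eq_zero.1 h)
  have ha1i : ⟪a1, a1⟫ ≠ 0 := fun h => ha1 (inner_self_eq_zero.1 h)
  have hb0n : b0' ≠ 0 := by
    intro h; exact hnb0 c0 (by rw [← sub_eq_zero]; exact h)
  have hb1n : b1' ≠ 0 := by
    intro h; exact hnb1 c1 (by rw [← sub_eq_zero]; exact h)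
  set g : Fin 4 → E := ![a0, a1, b0', b1'] with hg
  have hli : LinearIndependent ℝ g := by
    apply linearIndependent_of_ne_zero_of_inner_eq_zero
    · intro i; fin_cases i <;> simpa [hg] using by assumption
    · intro i j hij
      have e1 : ⟪a0, b0'⟫ = 0 := by
        rw [hb0', inner_sub_right, real_inner_smul_right, hc0]; field_simp; ring
      have e2 : ⟪a1, b0'⟫ = 0 := by
        rw [hb0', inner_sub_right, real_inner_smul_right, h1b0, real_inner_comm a0 a1, h01]; ring
      have e3 : ⟪a0, b1'⟫ = 0 := by
        rw [hb1', inner_sub_right, real_inner_smul_right, h0b1, h01]; ring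
      have e4 : ⟪a1, b1'⟫ = 0 := by
        rw [hb1', inner_sub_right, real_inner_smul_right, hc1]; field_simp; ring
      have e5 : ⟪b0', b1'⟫ = 0 := by
        rw [hb0', hb1']
        simp only [inner_sub_left, inner_sub_right, real_inner_smul_left, real_inner_smul_right]
        rw [hbb, h0b1, h01, real_inner_comm a1 b0, h1b0]; ring
      have e1' : ⟪b0', a0⟫ = 0 := by rw [real_inner_comm]; exact e1
      have e2' : ⟪b0', a1⟫ = 0 := by rw [real_inner_comm]; exact e2
      have e3' : ⟪b1', a0⟫ = 0 := by rw [real_inner_comm]; exact e3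
      have e4' : ⟪b1', a1⟫ = 0 := by rw [real_inner_comm]; exact e4
      have e5' : ⟪b1', b0'⟫ = 0 := by rw [real_inner_comm]; exact e5
      have e0 : ⟪a0, a1⟫ = 0 := h01
      have e0' : ⟪a1, a0⟫ = 0 := by rw [real_inner_comm]; exact h01
      fin_cases i <;> fin_cases j <;> simp only [hg] <;>
        first
          | exact absurd rfl hij
          | assumption
          | (simp only [Matrix.cons_val_zero, Matrix.cons_val_one, Matrix.head_cons,
              Matrix.cons_val_two, Matrix.tail_cons, Matrix.cons_val_three]; assumption)
  have hsub : ∀ i, g i ∈ Submodule.span ℝ ({a0, b0, a1, b1} : Set E) := by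
    intro i
    have m0 : a0 ∈ Submodule.span ℝ ({a0, b0, a1, b1} : Set E) := Submodule.subset_span (by simp)
    have m1 : b0 ∈ Submodule.span ℝ ({a0, b0, a1, b1} : Set E) := Submodule.subset_span (by simp)
    have m2 : a1 ∈ Submodule.span ℝ ({a0, b0, a1, b1} : Set E) := Submodule.subset_span (by simp)
    have m3 : b1 ∈ Submodule.span ℝ ({a0, b0, a1, b1} : Set E) := Submodule.subset_span (by simp)
    fin_cases i <;> simp [hg, hb0', hb1'] <;>
      [exact m0; exact m2;
       exact Submodule.sub_mem _ m1 (Submodule.smul_mem _ _ m0);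
       exact Submodule.sub_mem _ m3 (Submodule.smul_mem _ _ m2)]
  have hle : Submodule.span ℝ (Set.range g) ≤ Submodule.span ℝ ({a0, b0, a1, b1} : Set E) := by
    rw [Submodule.span_le]; rintro x ⟨i, rfl⟩; exact hsub i
  have h4 : Module.finrank ℝ (Submodule.span ℝ (Set.range g)) = 4 := by
    rw [finrank_span_eq_card hli]; simp
  have := Submodule.finrank_mono hle
  omega


lemma line_set_eq (aa bb : E) (lam s : ℝ) (hlam : lam ≠ 0) :
    {x : E | ∃ t : ℝ, x = bb + t • aa}
      = {x : E | ∃ t : ℝ, x = (bb + s • aa) + t • (lam • aa)} := by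
  ext x
  constructor
  · rintro ⟨t, rfl⟩
    refine ⟨(t - s) / lam, ?_⟩
    rw [smul_smul, div_mul_cancel₀ _ hlam]
    module
  · rintro ⟨t, rfl⟩
    refine ⟨s + t * lam, ?_⟩
    rw [smul_smul]
    module

lemma line_set_neg (aa bb : E) (lam s : ℝ) (hlam : lam ≠ 0) :
    {x : E | ∃ t : ℝ, x = bb + t • aa}
      = (fun x => -x) '' {x : E | ∃ t : ℝ, x = (-bb + s • aa) + t • (lam • aa)} := by
  ext x
  constructor
  · rintro ⟨t, rfl⟩
    refine ⟨-(bb + t • aa), ⟨(-t - s) / lam, ?_⟩, by simp⟩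
    rw [smul_smul, div_mul_cancel₀ _ hlam]
    module
  · rintro ⟨y, ⟨t, rfl⟩, rfl⟩
    refine ⟨-(s + t * lam), ?_⟩
    rw [smul_smul]
    module

lemma mixed_contra (a0 b0 a1 b1 : E)
    (ha0 : a0 ≠ 0) (ha1 : a1 ≠ 0)
    (hb0 : ∀ r : ℝ, b0 ≠ r • a0) (hb1 : ∀ r : ℝ, b1 ≠ r • a1)
    (hnpar : ∀ c : ℝ, a1 ≠ c • a0)
    (hspan : Module.finrank ℝ (Submodule.span ℝ ({a0, b0, a1, b1} : Set E)) = 3)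
    (hK : ∀ x : E, Kf a0 b0 a1 b1 x = 0) : False := by
  have ha0i : ⟪a0, a0⟫ ≠ 0 := fun h => ha0 (inner_self_eq_zero.1 h)
  have ha1i : ⟪a1, a1⟫ ≠ 0 := fun h => ha1 (inner_self_eq_zero.1 h)
  -- restriction to a0-perp
  have hA : ∃ p : ℝ, ⟪a0,a1⟫ • b1 - ⟪a0,b1⟫ • a1 = p • a0 := by
    obtain ⟨i, r, hr⟩ := inner_disj a0 ![b0, ⟪a0,a1⟫ • b1 - ⟪a0,b1⟫ • a1] (by
      intro x hx
      have h1 : ⟪b0,x⟫ * ⟪⟪a0,a1⟫ • b1 - ⟪a0,b1⟫ • a1, x⟫ = Kf a0 b0 a1 b1 x := by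
        simp only [Kf, inner_sub_left, real_inner_smul_left, hx]
        ring
      rw [hK x] at h1
      rcases mul_eq_zero.1 h1 with h | h
      · exact ⟨0, by simpa using h⟩
      · exact ⟨1, by simpa using h⟩)
    fin_cases i
    · exact absurd (by simpa using hr) (hb0 r)
    · exact ⟨r, by simpa using hr⟩
  have hB : ∃ q : ℝ, ⟪a0,a1⟫ • b0 - ⟪a1,b0⟫ • a0 = q • a1 := by
    obtain ⟨i, r, hr⟩ := inner_disj a1 ![b1, ⟪a0,a1⟫ • b0 - ⟪a1,b0⟫ • a0] (by
      intro x hx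
      have h1 : ⟪b1,x⟫ * ⟪⟪a0,a1⟫ • b0 - ⟪a1,b0⟫ • a0, x⟫ = Kf a0 b0 a1 b1 x := by
        simp only [Kf, inner_sub_left, real_inner_smul_left, hx]
        ring
      rw [hK x] at h1
      rcases mul_eq_zero.1 h1 with h | h
      · exact ⟨0, by simpa using h⟩
      · exact ⟨1, by simpa using h⟩)
    fin_cases i
    · exact absurd (by simpa using hr) (hb1 r)
    · exact ⟨r, by simpa using hr⟩
  obtain ⟨p, hp⟩ := hA
  obtain ⟨q, hq⟩ := hB
  by_cases hip : ⟪a0, a1⟫ = 0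
  · -- orthogonal directions
    have h0b1 : ⟪a0, b1⟫ = 0 := by
      by_contra hne
      rw [hip, zero_smul, zero_sub] at hp
      have e1 : ⟪a0,b1⟫ • a1 = (-p) • a0 := by rw [neg_smul, ← hp, neg_neg]
      have e2 : a1 = (⟪a0,b1⟫⁻¹ * (-p)) • a0 := by
        rw [mul_smul, ← e1, inv_smul_smul₀ hne]
      exact hnpar _ e2
    have h1b0 : ⟪a1, b0⟫ = 0 := by
      by_contra hne
      rw [hip, zero_smul, zero_sub] at hq
      have e1 : q • a1 = (-⟪a1,b0⟫) • a0 := by rw [neg_smul, ← hq]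
      have hq0 : q ≠ 0 := by
        intro h
        rw [h, zero_smul] at e1
        rcases smul_eq_zero.1 e1.symm with h' | h'
        · exact hne (by simpa using h')
        · exact ha0 h'
      have e2 : a1 = (q⁻¹ * (-⟪a1,b0⟫)) • a0 := by
        rw [mul_smul, ← e1, inv_smul_smul₀ hq0]
      exact hnpar _ e2
    have hbb : ⟪b0, b1⟫ = 0 := by
      have h1 : ⟪b0,b1⟫ * (⟪a0,a0⟫ * ⟪a1,a1⟫) = Kf a0 b0 a1 b1 (a0 + a1) := by
        simp only [Kf, inner_add_right, hip, h0b1, h1b0]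
        rw [real_inner_comm a0 a1, hip]
        ring
      rw [hK _] at h1
      rcases mul_eq_zero.1 h1 with h | h
      · exact h
      · rcases mul_eq_zero.1 h with h | h
        · exact absurd h ha0i
        · exact absurd h ha1i
    exact quad_lemma hip h0b1 h1b0 hbb ha0 ha1 hb0 hb1 hspan
  · -- b0, b1 ∈ span {a0, a1}
    have hm1 : b1 ∈ Submodule.span ℝ ({a0, a1} : Set E) := by
      have e : b1 = (⟪a0,a1⟫)⁻¹ • (p • a0 + ⟪a0,b1⟫ • a1) := by
        have : ⟪a0,a1⟫ • b1 = p • a0 + ⟪a0,b1⟫ • a1 := by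
          rw [← hp]; abel
        rw [← this, inv_smul_smul₀ hip]
      rw [e]
      exact Submodule.smul_mem _ _ (Submodule.add_mem _
        (Submodule.smul_mem _ _ (Submodule.subset_span (by simp)))
        (Submodule.smul_mem _ _ (Submodule.subset_span (by simp))))
    have hm0 : b0 ∈ Submodule.span ℝ ({a0, a1} : Set E) := by
      have e : b0 = (⟪a0,a1⟫)⁻¹ • (q • a1 + ⟪a1,b0⟫ • a0) := by
        have : ⟪a0,a1⟫ • b0 = q • a1 + ⟪a1,b0⟫ • a0 := by
          rw [← hq]; abel
        rw [← this, inv_smul_smul₀ hip]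
      rw [e]
      exact Submodule.smul_mem _ _ (Submodule.add_mem _
        (Submodule.smul_mem _ _ (Submodule.subset_span (by simp)))
        (Submodule.smul_mem _ _ (Submodule.subset_span (by simp))))
    have hle : Submodule.span ℝ ({a0, b0, a1, b1} : Set E)
        ≤ Submodule.span ℝ ({a0, a1} : Set E) := by
      rw [Submodule.span_le]
      intro x hx
      simp only [Set.mem_insert_iff, Set.mem_singleton_iff] at hx
      rcases hx with rfl | rfl | rfl | rfl
      · exact Submodule.subset_span (by simp)
      · exact hm0
      · exact Submodule.subset_span (by simp)
      · exact hm1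
    have h2 : Module.finrank ℝ (Submodule.span ℝ ({a0, a1} : Set E)) ≤ 2 := by
      classical
      have h := finrank_span_finset_le_card (R := ℝ) ({a0, a1} : Finset E)
      have hcard : ({a0, a1} : Finset E).card ≤ 2 :=
        le_trans (Finset.card_insert_le _ _) (by simp)
      have hcoe : ((({a0, a1} : Finset E) : Set E)) = ({a0, a1} : Set E) := by simp
      rw [← hcoe]
      exact le_trans h hcard
    have := Submodule.finrank_mono hle
    rw [hspan] at this
    omega



lemma core (a0 b0 a1 b1 b2 b3 : E)
    (ha0 : a0 ≠ 0) (ha1 : a1 ≠ 0)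
    (hb0 : ∀ r : ℝ, b0 ≠ r • a0) (hb1 : ∀ r : ℝ, b1 ≠ r • a1)
    (hnpar : ∀ c : ℝ, a1 ≠ c • a0)
    (hspan : Module.finrank ℝ (Submodule.span ℝ ({a0, b0, a1, b1} : Set E)) = 3)
    (U : Set E) (hUs : U ⊆ Metric.sphere 0 1)
    (hUopen : ∃ V : Set E, IsOpen V ∧ U = V ∩ Metric.sphere 0 1)
    (hUne : U.Nonempty)
    (w0 w1 w2 w3 : E → E)
    (hw : ∀ ξ ∈ U, ⟪a0,ξ⟫ ≠ 0 ∧ ⟪a1,ξ⟫ ≠ 0 ∧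
      w0 ξ = b0 - (⟪b0,ξ⟫/⟪a0,ξ⟫) • a0 ∧ w1 ξ = b1 - (⟪b1,ξ⟫/⟪a1,ξ⟫) • a1 ∧
      w2 ξ = b2 - (⟪b2,ξ⟫/⟪a0,ξ⟫) • a0 ∧ w3 ξ = b3 - (⟪b3,ξ⟫/⟪a1,ξ⟫) • a1)
    (hlen : ∀ ξ ∈ U, ‖w0 ξ - w1 ξ‖ = ‖w2 ξ - w3 ξ‖) :
    ((∃ s : ℝ, b2 = b0 + s • a0) ∧ (∃ u : ℝ, b3 = b1 + u • a1)) ∨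
    ((∃ s : ℝ, b2 = -b0 + s • a0) ∧ (∃ u : ℝ, b3 = -b1 + u • a1)) := by
  -- the polynomial identity
  have hH0 : ∀ x : E, Qf a0 b0 a1 b1 x - Qf a0 b2 a1 b3 x = 0 := by
    apply ext_zero (fun x => Qf a0 b0 a1 b1 x - Qf a0 b2 a1 b3 x)
      ((Qf_an a0 b0 a1 b1).sub (Qf_an a0 b2 a1 b3)) 4
      (fun r x hr => by
        show Qf a0 b0 a1 b1 (r • x) - Qf a0 b2 a1 b3 (r • x)
          = r ^ 4 * (Qf a0 b0 a1 b1 x - Qf a0 b2 a1 b3 x)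
        simp only [Qf, real_inner_smul_right]; ring) U hUs hUopen hUne
    intro ξ hξ
    show Qf a0 b0 a1 b1 ξ - Qf a0 b2 a1 b3 ξ = 0
    obtain ⟨h0, h1, e0, e1, e2, e3⟩ := hw ξ hξ
    have q01 := Qf_eq a0 b0 a1 b1 ξ h0 h1
    have q23 := Qf_eq a0 b2 a1 b3 ξ h0 h1
    rw [← e0, ← e1] at q01
    rw [← e2, ← e3] at q23
    rw [q01, q23, hlen ξ hξ]
    ring
  -- sign for b2
  have hε : (∃ s : ℝ, b2 = b0 + s • a0) ∨ (∃ s : ℝ, b2 = -b0 + s • a0) := by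
    obtain ⟨i, r, hr⟩ := inner_disj a0 ![b0 - b2, b0 + b2, a1] (by
      intro x hx
      have h1 : ⟪b0 - b2, x⟫ * ⟪b0 + b2, x⟫ * (⟪a1,x⟫ * ⟪a1,x⟫ * ⟪a0,a0⟫)
          = Qf a0 b0 a1 b1 x - Qf a0 b2 a1 b3 x := by
        simp only [Qf, inner_sub_left, inner_add_left, hx]
        ring
      rw [hH0 x] at h1
      rcases mul_eq_zero.1 h1 with h | h
      · rcases mul_eq_zero.1 h with h' | h'
        · exact ⟨0, by simpa using h'⟩
        · exact ⟨1, by simpa using h'⟩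
      · rcases mul_eq_zero.1 h with h' | h'
        · rcases mul_eq_zero.1 h' with h'' | h''
          · exact ⟨2, by simpa using h''⟩
          · exact ⟨2, by simpa using h''⟩
        · exact absurd h' (fun hc => ha0 (inner_self_eq_zero.1 hc)))
    fin_cases i
    · left
      have hr' : b0 - b2 = r • a0 := by simpa using hr
      exact ⟨-r, by rw [neg_smul, ← hr']; abel⟩
    · right
      have hr' : b0 + b2 = r • a0 := by simpa using hr
      exact ⟨r, by rw [← hr']; abel⟩
    · exact absurd (by simpa using hr) (hnpar r)
  -- sign for b3
  have hδ : (∃ u : ℝ, b3 = b1 + u • a1) ∨ (∃ u : ℝ, b3 = -b1 + u • a1) := by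
    obtain ⟨i, r, hr⟩ := inner_disj a1 ![b1 - b3, b1 + b3, a0] (by
      intro x hx
      have h1 : ⟪b1 - b3, x⟫ * ⟪b1 + b3, x⟫ * (⟪a0,x⟫ * ⟪a0,x⟫ * ⟪a1,a1⟫)
          = Qf a0 b0 a1 b1 x - Qf a0 b2 a1 b3 x := by
        simp only [Qf, inner_sub_left, inner_add_left, hx]
        ring
      rw [hH0 x] at h1
      rcases mul_eq_zero.1 h1 with h | h
      · rcases mul_eq_zero.1 h with h' | h'
        · exact ⟨0, by simpa using h'⟩
        · exact ⟨1, by simpa using h'⟩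
      · rcases mul_eq_zero.1 h with h' | h'
        · rcases mul_eq_zero.1 h' with h'' | h''
          · exact ⟨2, by simpa using h''⟩
          · exact ⟨2, by simpa using h''⟩
        · exact absurd h' (fun hc => ha1 (inner_self_eq_zero.1 hc)))
    fin_cases i
    · left
      have hr' : b1 - b3 = r • a1 := by simpa using hr
      exact ⟨-r, by rw [neg_smul, ← hr']; abel⟩
    · right
      have hr' : b1 + b3 = r • a1 := by simpa using hr
      exact ⟨r, by rw [← hr']; abel⟩
    · -- a0 = r • a1 : contradiction with non-parallel
      have hr : a0 = r • a1 := by simpa using hr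
      have hr0 : r ≠ 0 := by
        intro h; rw [h, zero_smul] at hr; exact ha0 hr
      exact absurd (by rw [hr, inv_smul_smul₀ hr0] : (r:ℝ)⁻¹ • a0 = a1).symm
        (by simpa [eq_comm] using hnpar r⁻¹)
  -- helper : formulas for w2 w3 under sign hypotheses
  have hw2pos : ∀ s : ℝ, b2 = b0 + s • a0 → ∀ ξ ∈ U, w2 ξ = w0 ξ := by
    intro s hs ξ hξ
    obtain ⟨h0, h1, e0, e1, e2, e3⟩ := hw ξ hξ
    rw [e2, e0, hs]
    rw [inner_add_left, real_inner_smul_left]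
    have : (⟪b0,ξ⟫ + s * ⟪a0,ξ⟫)/⟪a0,ξ⟫ = ⟪b0,ξ⟫/⟪a0,ξ⟫ + s := by field_simp
    rw [this, add_smul]
    abel
  have hw2neg : ∀ s : ℝ, b2 = -b0 + s • a0 → ∀ ξ ∈ U, w2 ξ = -w0 ξ := by
    intro s hs ξ hξ
    obtain ⟨h0, h1, e0, e1, e2, e3⟩ := hw ξ hξ
    rw [e2, e0, hs]
    rw [inner_add_left, real_inner_smul_left, inner_neg_left]
    have : (-⟪b0,ξ⟫ + s * ⟪a0,ξ⟫)/⟪a0,ξ⟫ = -(⟪b0,ξ⟫/⟪a0,ξ⟫) + s := by field_simp; try ring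
    rw [this, add_smul, neg_smul]
    abel
  have hw3pos : ∀ u : ℝ, b3 = b1 + u • a1 → ∀ ξ ∈ U, w3 ξ = w1 ξ := by
    intro u hs ξ hξ
    obtain ⟨h0, h1, e0, e1, e2, e3⟩ := hw ξ hξ
    rw [e3, e1, hs]
    rw [inner_add_left, real_inner_smul_left]
    have : (⟪b1,ξ⟫ + u * ⟪a1,ξ⟫)/⟪a1,ξ⟫ = ⟪b1,ξ⟫/⟪a1,ξ⟫ + u := by field_simp
    rw [this, add_smul]
    abel
  have hw3neg : ∀ u : ℝ, b3 = -b1 + u • a1 → ∀ ξ ∈ U, w3 ξ = -w1 ξ := by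
    intro u hs ξ hξ
    obtain ⟨h0, h1, e0, e1, e2, e3⟩ := hw ξ hξ
    rw [e3, e1, hs]
    rw [inner_add_left, real_inner_smul_left, inner_neg_left]
    have : (-⟪b1,ξ⟫ + u * ⟪a1,ξ⟫)/⟪a1,ξ⟫ = -(⟪b1,ξ⟫/⟪a1,ξ⟫) + u := by field_simp; try ring
    rw [this, add_smul, neg_smul]
    abel
  -- mixed signs are impossible
  rcases hε with ⟨s, hs⟩ | ⟨s, hs⟩
  · rcases hδ with ⟨u, hu⟩ | ⟨u, hu⟩
    · exact Or.inl ⟨⟨s, hs⟩, ⟨u, hu⟩⟩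
    · -- mixed : w2 = w0, w3 = -w1
      exfalso
      have hKU : ∀ ξ ∈ U, Kf a0 b0 a1 b1 ξ = 0 := by
        intro ξ hξ
        obtain ⟨h0, h1, e0, e1, e2, e3⟩ := hw ξ hξ
        have hl := hlen ξ hξ
        rw [hw2pos s hs ξ hξ, hw3neg u hu ξ hξ, sub_neg_eq_add] at hl
        have hperp : ⟪w0 ξ, w1 ξ⟫ = 0 := by
          have h2 : ‖w0 ξ - w1 ξ‖^2 = ‖w0 ξ + w1 ξ‖^2 := by rw [hl]
          rw [norm_add_sq_real, norm_sub_sq_real] at h2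
          linarith
        rw [Kf_eq a0 b0 a1 b1 ξ h0 h1, ← e0, ← e1, hperp, zero_mul]
      have hK : ∀ x : E, Kf a0 b0 a1 b1 x = 0 :=
        ext_zero (Kf a0 b0 a1 b1) (Kf_an a0 b0 a1 b1) 2
          (fun r x hr => by
            show Kf a0 b0 a1 b1 (r • x) = r ^ 2 * Kf a0 b0 a1 b1 x
            simp only [Kf, real_inner_smul_right]; ring) U hUs hUopen hUne hKU
      exact mixed_contra a0 b0 a1 b1 ha0 ha1 hb0 hb1 hnpar hspan hK
  · rcases hδ with ⟨u, hu⟩ | ⟨u, hu⟩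
    · -- mixed : w2 = -w0, w3 = w1
      exfalso
      have hKU : ∀ ξ ∈ U, Kf a0 b0 a1 b1 ξ = 0 := by
        intro ξ hξ
        obtain ⟨h0, h1, e0, e1, e2, e3⟩ := hw ξ hξ
        have hl := hlen ξ hξ
        rw [hw2neg s hs ξ hξ, hw3pos u hu ξ hξ] at hl
        have hl2 : ‖w0 ξ - w1 ξ‖ = ‖w0 ξ + w1 ξ‖ := by
          rw [hl, ← norm_neg]
          congr 1
          abel
        have hperp : ⟪w0 ξ, w1 ξ⟫ = 0 := by
          have h2 : ‖w0 ξ - w1 ξ‖^2 = ‖w0 ξ + w1 ξ‖^2 := by rw [hl2]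
          rw [norm_add_sq_real, norm_sub_sq_real] at h2
          linarith
        rw [Kf_eq a0 b0 a1 b1 ξ h0 h1, ← e0, ← e1, hperp, zero_mul]
      have hK : ∀ x : E, Kf a0 b0 a1 b1 x = 0 :=
        ext_zero (Kf a0 b0 a1 b1) (Kf_an a0 b0 a1 b1) 2
          (fun r x hr => by
            show Kf a0 b0 a1 b1 (r • x) = r ^ 2 * Kf a0 b0 a1 b1 x
            simp only [Kf, real_inner_smul_right]; ring) U hUs hUopen hUne hKU
      exact mixed_contra a0 b0 a1 b1 ha0 ha1 hb0 hb1 hnpar hspan hK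
    · exact Or.inr ⟨⟨s, hs⟩, ⟨u, hu⟩⟩




end AuxAll

set_option maxHeartbeats 1000000 in
theorem stmt7 {d : ℕ} (hd : 3 ≤ d)
    (a b : Fin 4 → EuclideanSpace ℝ (Fin d)) (ha : ∀ i, a i ≠ 0)
    (L : Fin 4 → Set (EuclideanSpace ℝ (Fin d)))
    (hL : ∀ i, L i = {x | ∃ t : ℝ, x = b i + t • a i})
    (h0 : ∀ i, (0 : EuclideanSpace ℝ (Fin d)) ∉ L i)
    (hnpar : ¬ ∃ c : ℝ, a 1 = c • a 0)
    (hspan : Module.finrank ℝ (Submodule.span ℝ (L 0 ∪ L 1)) = 3)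
    (U : Set (EuclideanSpace ℝ (Fin d))) (hUs : U ⊆ Metric.sphere 0 1)
    (hUopen : ∃ V : Set (EuclideanSpace ℝ (Fin d)), IsOpen V ∧ U = V ∩ Metric.sphere 0 1)
    (hUne : U.Nonempty)
    (v : Fin 4 → EuclideanSpace ℝ (Fin d) → EuclideanSpace ℝ (Fin d))
    (hv : ∀ ξ ∈ U, ∀ i, L i ∩ {x | ⟪x, ξ⟫ = 0} = {v i ξ})
    (hlen : ∀ ξ ∈ U, ‖v 0 ξ - v 1 ξ‖ = ‖v 2 ξ - v 3 ξ‖) :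
    (L 0 = L 2 ∧ L 1 = L 3) ∨
    (L 0 = (fun x => -x) '' L 2 ∧ L 1 = (fun x => -x) '' L 3) ∨
    (L 0 = L 3 ∧ L 1 = L 2) ∨
    (L 0 = (fun x => -x) '' L 3 ∧ L 1 = (fun x => -x) '' L 2) := by
  -- Step 0 : basic structure of the section points
  have hvprop : ∀ ξ ∈ U, ∀ i, ⟪a i, ξ⟫ ≠ 0 ∧
      v i ξ = b i - (⟪b i, ξ⟫ / ⟪a i, ξ⟫) • a i := by
    intro ξ hξ i
    have hset := hv ξ hξ i
    have hvmem : v i ξ ∈ L i ∩ {x | ⟪x, ξ⟫ = 0} := by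
      rw [hset]; exact Set.mem_singleton _
    obtain ⟨hvL, hvperp⟩ := hvmem
    rw [hL i] at hvL
    obtain ⟨t, ht⟩ := hvL
    have hvperp' : ⟪v i ξ, ξ⟫ = 0 := hvperp
    have hα : ⟪a i, ξ⟫ ≠ 0 := by
      intro hαz
      have hβz : ⟪b i, ξ⟫ = 0 := by
        have h1 := hvperp'
        rw [ht, inner_add_left, real_inner_smul_left, hαz, mul_zero, add_zero] at h1
        exact h1
      have hmem2 : b i + (t+1) • a i ∈ L i ∩ {x | ⟪x, ξ⟫ = 0} := by
        refine ⟨by rw [hL i]; exact ⟨t+1, rfl⟩, ?_⟩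
        show ⟪b i + (t+1) • a i, ξ⟫ = 0
        rw [inner_add_left, real_inner_smul_left, hαz, hβz]
        ring
      rw [hset, Set.mem_singleton_iff] at hmem2
      have h3 : b i + (t+1) • a i = b i + t • a i := by rw [hmem2, ht]
      have h4 : ((t+1) - t) • a i = 0 := by
        rw [sub_smul, sub_eq_zero]
        exact add_left_cancel h3
      have h5 : a i = 0 := by simpa using h4
      exact ha i h5
    refine ⟨hα, ?_⟩
    have hβt : ⟪b i, ξ⟫ + t * ⟪a i, ξ⟫ = 0 := by
      have h1 := hvperp'
      rw [ht, inner_add_left, real_inner_smul_left] at h1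
      exact h1
    have htv : t = -(⟪b i, ξ⟫ / ⟪a i, ξ⟫) := by
      rw [neg_div' , eq_div_iff hα]
      linarith
    rw [ht, htv, neg_smul, ← sub_eq_add_neg]
  -- lines do not pass through the origin
  have hbna : ∀ i, ∀ r : ℝ, b i ≠ r • a i := by
    intro i r h
    apply h0 i
    rw [hL i]
    exact ⟨-r, by rw [h]; module⟩
  have hnpar' : ∀ c : ℝ, a 1 ≠ c • a 0 := fun c h => hnpar ⟨c, h⟩
  have hsc : ∀ (β α c : ℝ), α ≠ 0 → c ≠ 0 → β/(c*α)*c = β/α := by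
    intro β α c h1 h2
    field_simp
  -- translate the span hypothesis
  have hspan' : Module.finrank ℝ
      (Submodule.span ℝ ({a 0, b 0, a 1, b 1} : Set (EuclideanSpace ℝ (Fin d)))) = 3 := by
    have hseteq : Submodule.span ℝ (L 0 ∪ L 1)
        = Submodule.span ℝ ({a 0, b 0, a 1, b 1} : Set (EuclideanSpace ℝ (Fin d))) := by
      apply le_antisymm
      · rw [Submodule.span_le]
        rintro x (hx | hx) <;> rw [hL _] at hx <;> obtain ⟨t, rfl⟩ := hx <;>
          refine SetLike.mem_coe.2 (Submodule.add_mem _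
            (Submodule.subset_span (by simp))
            (Submodule.smul_mem _ _ (Submodule.subset_span (by simp))))
      · rw [Submodule.span_le]
        have hb0m : b 0 ∈ Submodule.span ℝ (L 0 ∪ L 1) :=
          Submodule.subset_span (Or.inl (by rw [hL 0]; exact ⟨0, by simp⟩))
        have hb1m : b 1 ∈ Submodule.span ℝ (L 0 ∪ L 1) :=
          Submodule.subset_span (Or.inr (by rw [hL 1]; exact ⟨0, by simp⟩))
        have ha0m : a 0 ∈ Submodule.span ℝ (L 0 ∪ L 1) := by
          have h1 : b 0 + (1:ℝ) • a 0 ∈ Submodule.span ℝ (L 0 ∪ L 1) :=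
            Submodule.subset_span (Or.inl (by rw [hL 0]; exact ⟨1, rfl⟩))
          have := Submodule.sub_mem _ h1 hb0m
          simpa using this
        have ha1m : a 1 ∈ Submodule.span ℝ (L 0 ∪ L 1) := by
          have h1 : b 1 + (1:ℝ) • a 1 ∈ Submodule.span ℝ (L 0 ∪ L 1) :=
            Submodule.subset_span (Or.inr (by rw [hL 1]; exact ⟨1, rfl⟩))
          have := Submodule.sub_mem _ h1 hb1m
          simpa using this
        intro x hx
        simp only [Set.mem_insert_iff, Set.mem_singleton_iff] at hx
        rcases hx with rfl | rfl | rfl | rfl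
        · exact ha0m
        · exact hb0m
        · exact ha1m
        · exact hb1m
    rw [← hseteq]
    exact hspan
  -- the big polynomial identity
  have hG0 : ∀ x : EuclideanSpace ℝ (Fin d), Qf (a 0) (b 0) (a 1) (b 1) x * (⟪a 2, x⟫^2 * ⟪a 3, x⟫^2)
      - Qf (a 2) (b 2) (a 3) (b 3) x * (⟪a 0, x⟫^2 * ⟪a 1, x⟫^2) = 0 := by
    apply ext_zero (fun x : EuclideanSpace ℝ (Fin d) => Qf (a 0) (b 0) (a 1) (b 1) x * (⟪a 2, x⟫^2 * ⟪a 3, x⟫^2)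
        - Qf (a 2) (b 2) (a 3) (b 3) x * (⟪a 0, x⟫^2 * ⟪a 1, x⟫^2))
      (((Qf_an (a 0) (b 0) (a 1) (b 1)).mul
          (((an_inner_s7 (a 2)).pow 2).mul ((an_inner_s7 (a 3)).pow 2))).sub
        ((Qf_an (a 2) (b 2) (a 3) (b 3)).mul
          (((an_inner_s7 (a 0)).pow 2).mul ((an_inner_s7 (a 1)).pow 2)))) 8
      (fun r x hr => by
        show Qf (a 0) (b 0) (a 1) (b 1) (r • x) * (⟪a 2, r • x⟫^2 * ⟪a 3, r • x⟫^2)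
          - Qf (a 2) (b 2) (a 3) (b 3) (r • x) * (⟪a 0, r • x⟫^2 * ⟪a 1, r • x⟫^2) = _
        simp only [Qf, real_inner_smul_right]
        ring) U hUs hUopen hUne
    intro ξ hξ
    show Qf (a 0) (b 0) (a 1) (b 1) ξ * (⟪a 2, ξ⟫^2 * ⟪a 3, ξ⟫^2)
      - Qf (a 2) (b 2) (a 3) (b 3) ξ * (⟪a 0, ξ⟫^2 * ⟪a 1, ξ⟫^2) = 0
    obtain ⟨hα0, hf0⟩ := hvprop ξ hξ 0
    obtain ⟨hα1, hf1⟩ := hvprop ξ hξ 1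
    obtain ⟨hα2, hf2⟩ := hvprop ξ hξ 2
    obtain ⟨hα3, hf3⟩ := hvprop ξ hξ 3
    have q01 := Qf_eq (a 0) (b 0) (a 1) (b 1) ξ hα0 hα1
    have q23 := Qf_eq (a 2) (b 2) (a 3) (b 3) ξ hα2 hα3
    rw [← hf0, ← hf1] at q01
    rw [← hf2, ← hf3] at q23
    rw [q01, q23, hlen ξ hξ]
    ring
  -- matching of directions
  have dir0 : (∃ r : ℝ, r ≠ 0 ∧ a 2 = r • a 0) ∨ (∃ r : ℝ, r ≠ 0 ∧ a 3 = r • a 0) := by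
    obtain ⟨i, r, hr⟩ := inner_disj (a 0) ![b 0, a 1, a 2, a 3] (by
      intro x hx
      have h1 : (⟪b 0, x⟫ * ⟪a 1, x⟫ * ⟪a 2, x⟫ * ⟪a 3, x⟫)^2 * ⟪a 0, a 0⟫
          = Qf (a 0) (b 0) (a 1) (b 1) x * (⟪a 2, x⟫^2 * ⟪a 3, x⟫^2)
            - Qf (a 2) (b 2) (a 3) (b 3) x * (⟪a 0, x⟫^2 * ⟪a 1, x⟫^2) := by
        simp only [Qf, hx]
        ring
      rw [hG0 x] at h1
      rcases mul_eq_zero.1 h1 with h | h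
      · have h2 := pow_eq_zero_iff (n := 2) (by norm_num) |>.1 h
        rcases mul_eq_zero.1 h2 with h3 | h3
        · rcases mul_eq_zero.1 h3 with h4 | h4
          · rcases mul_eq_zero.1 h4 with h5 | h5
            · exact ⟨0, by simpa using h5⟩
            · exact ⟨1, by simpa using h5⟩
          · exact ⟨2, by simpa using h4⟩
        · exact ⟨3, by simpa using h3⟩
      · exact absurd h (fun hc => ha 0 (inner_self_eq_zero.1 hc)))
    fin_cases i
    · exact absurd (by simpa using hr) (hbna 0 r)
    · exact absurd (by simpa using hr) (hnpar' r)
    · have hr' : a 2 = r • a 0 := by simpa using hr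
      have hr0 : r ≠ 0 := by intro h; rw [h, zero_smul] at hr'; exact ha 2 hr'
      exact Or.inl ⟨r, hr0, hr'⟩
    · have hr' : a 3 = r • a 0 := by simpa using hr
      have hr0 : r ≠ 0 := by intro h; rw [h, zero_smul] at hr'; exact ha 3 hr'
      exact Or.inr ⟨r, hr0, hr'⟩
  have dir1 : (∃ r : ℝ, r ≠ 0 ∧ a 2 = r • a 1) ∨ (∃ r : ℝ, r ≠ 0 ∧ a 3 = r • a 1) := by
    obtain ⟨i, r, hr⟩ := inner_disj (a 1) ![b 1, a 0, a 2, a 3] (by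
      intro x hx
      have h1 : (⟪b 1, x⟫ * ⟪a 0, x⟫ * ⟪a 2, x⟫ * ⟪a 3, x⟫)^2 * ⟪a 1, a 1⟫
          = Qf (a 0) (b 0) (a 1) (b 1) x * (⟪a 2, x⟫^2 * ⟪a 3, x⟫^2)
            - Qf (a 2) (b 2) (a 3) (b 3) x * (⟪a 0, x⟫^2 * ⟪a 1, x⟫^2) := by
        simp only [Qf, hx]
        ring
      rw [hG0 x] at h1
      rcases mul_eq_zero.1 h1 with h | h
      · have h2 := pow_eq_zero_iff (n := 2) (by norm_num) |>.1 h
        rcases mul_eq_zero.1 h2 with h3 | h3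
        · rcases mul_eq_zero.1 h3 with h4 | h4
          · rcases mul_eq_zero.1 h4 with h5 | h5
            · exact ⟨0, by simpa using h5⟩
            · exact ⟨1, by simpa using h5⟩
          · exact ⟨2, by simpa using h4⟩
        · exact ⟨3, by simpa using h3⟩
      · exact absurd h (fun hc => ha 1 (inner_self_eq_zero.1 hc)))
    fin_cases i
    · exact absurd (by simpa using hr) (hbna 1 r)
    · -- a 0 = r • a 1
      have hr' : a 0 = r • a 1 := by simpa using hr
      have hr0 : r ≠ 0 := by intro h; rw [h, zero_smul] at hr'; exact ha 0 hr'
      exact absurd (by rw [hr', inv_smul_smul₀ hr0] : (r:ℝ)⁻¹ • a 0 = a 1).symm (hnpar' r⁻¹)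
    · have hr' : a 2 = r • a 1 := by simpa using hr
      have hr0 : r ≠ 0 := by intro h; rw [h, zero_smul] at hr'; exact ha 2 hr'
      exact Or.inl ⟨r, hr0, hr'⟩
    · have hr' : a 3 = r • a 1 := by simpa using hr
      have hr0 : r ≠ 0 := by intro h; rw [h, zero_smul] at hr'; exact ha 3 hr'
      exact Or.inr ⟨r, hr0, hr'⟩
  rcases dir0 with ⟨lam, hlam, hA2⟩ | ⟨lam, hlam, hA2⟩
  · rcases dir1 with ⟨kap, hkap, hK2⟩ | ⟨mu, hmu, hM2⟩
    · -- a 2 parallel to both a 0 and a 1 : impossible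
      exfalso
      have : a 1 = (kap⁻¹ * lam) • a 0 := by
        rw [mul_smul, ← hA2, hK2, inv_smul_smul₀ hkap]
      exact hnpar' _ this
    · -- Case A : a 2 ∥ a 0, a 3 ∥ a 1
      have hw : ∀ ξ ∈ U, ⟪a 0, ξ⟫ ≠ 0 ∧ ⟪a 1, ξ⟫ ≠ 0 ∧
          v 0 ξ = b 0 - (⟪b 0, ξ⟫/⟪a 0, ξ⟫) • a 0 ∧
          v 1 ξ = b 1 - (⟪b 1, ξ⟫/⟪a 1, ξ⟫) • a 1 ∧
          v 2 ξ = b 2 - (⟪b 2, ξ⟫/⟪a 0, ξ⟫) • a 0 ∧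
          v 3 ξ = b 3 - (⟪b 3, ξ⟫/⟪a 1, ξ⟫) • a 1 := by
        intro ξ hξ
        obtain ⟨hα0, hf0⟩ := hvprop ξ hξ 0
        obtain ⟨hα1, hf1⟩ := hvprop ξ hξ 1
        obtain ⟨hα2, hf2⟩ := hvprop ξ hξ 2
        obtain ⟨hα3, hf3⟩ := hvprop ξ hξ 3
        refine ⟨hα0, hα1, hf0, hf1, ?_, ?_⟩
        · rw [hf2, hA2, real_inner_smul_left, smul_smul, hsc _ _ _ hα0 hlam]
        · rw [hf3, hM2, real_inner_smul_left, smul_smul, hsc _ _ _ hα1 hmu]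
      have hcore := core (a 0) (b 0) (a 1) (b 1) (b 2) (b 3) (ha 0) (ha 1)
        (hbna 0) (hbna 1) hnpar' hspan' U hUs hUopen hUne
        (v 0) (v 1) (v 2) (v 3) hw hlen
      rcases hcore with ⟨⟨s, hs⟩, ⟨u, hu⟩⟩ | ⟨⟨s, hs⟩, ⟨u, hu⟩⟩
      · left
        constructor
        · rw [hL 0, hL 2, hA2, hs]
          exact line_set_eq (a 0) (b 0) lam s hlam
        · rw [hL 1, hL 3, hM2, hu]
          exact line_set_eq (a 1) (b 1) mu u hmu
      · right; left
        constructor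
        · rw [hL 0, hL 2, hA2, hs]
          exact line_set_neg (a 0) (b 0) lam s hlam
        · rw [hL 1, hL 3, hM2, hu]
          exact line_set_neg (a 1) (b 1) mu u hmu
  · rcases dir1 with ⟨mu, hmu, hM2⟩ | ⟨kap, hkap, hK2⟩
    · -- Case B : a 3 ∥ a 0, a 2 ∥ a 1
      have hw : ∀ ξ ∈ U, ⟪a 0, ξ⟫ ≠ 0 ∧ ⟪a 1, ξ⟫ ≠ 0 ∧
          v 0 ξ = b 0 - (⟪b 0, ξ⟫/⟪a 0, ξ⟫) • a 0 ∧
          v 1 ξ = b 1 - (⟪b 1, ξ⟫/⟪a 1, ξ⟫) • a 1 ∧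
          v 3 ξ = b 3 - (⟪b 3, ξ⟫/⟪a 0, ξ⟫) • a 0 ∧
          v 2 ξ = b 2 - (⟪b 2, ξ⟫/⟪a 1, ξ⟫) • a 1 := by
        intro ξ hξ
        obtain ⟨hα0, hf0⟩ := hvprop ξ hξ 0
        obtain ⟨hα1, hf1⟩ := hvprop ξ hξ 1
        obtain ⟨hα2, hf2⟩ := hvprop ξ hξ 2
        obtain ⟨hα3, hf3⟩ := hvprop ξ hξ 3
        refine ⟨hα0, hα1, hf0, hf1, ?_, ?_⟩
        · rw [hf3, hA2, real_inner_smul_left, smul_smul, hsc _ _ _ hα0 hlam]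
        · rw [hf2, hM2, real_inner_smul_left, smul_smul, hsc _ _ _ hα1 hmu]
      have hlen' : ∀ ξ ∈ U, ‖v 0 ξ - v 1 ξ‖ = ‖v 3 ξ - v 2 ξ‖ := by
        intro ξ hξ
        rw [norm_sub_rev (v 3 ξ)]
        exact hlen ξ hξ
      have hcore := core (a 0) (b 0) (a 1) (b 1) (b 3) (b 2) (ha 0) (ha 1)
        (hbna 0) (hbna 1) hnpar' hspan' U hUs hUopen hUne
        (v 0) (v 1) (v 3) (v 2) hw hlen'
      rcases hcore with ⟨⟨s, hs⟩, ⟨u, hu⟩⟩ | ⟨⟨s, hs⟩, ⟨u, hu⟩⟩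
      · right; right; left
        constructor
        · rw [hL 0, hL 3, hA2, hs]
          exact line_set_eq (a 0) (b 0) lam s hlam
        · rw [hL 1, hL 2, hM2, hu]
          exact line_set_eq (a 1) (b 1) mu u hmu
      · right; right; right
        constructor
        · rw [hL 0, hL 3, hA2, hs]
          exact line_set_neg (a 0) (b 0) lam s hlam
        · rw [hL 1, hL 2, hM2, hu]
          exact line_set_neg (a 1) (b 1) mu u hmu
    · -- a 3 parallel to both : impossible
      exfalso
      have : a 1 = (kap⁻¹ * lam) • a 0 := by
        rw [mul_smul, ← hA2, hK2, inv_smul_smul₀ hkap]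
      exact hnpar' _ this
end

section
/- Let a₁, a₂, b₁, b₂ ∈ ℝ³ with a₁, a₂ unit vectors, a₁ not parallel to a₂, aᵢ · bᵢ = 0, b₁ ≠ 0, b₂ ≠ 0. Then it is impossible that (b₁ − ((ξ·b₁)/(ξ·a₁))a₁) · (b₂ − ((ξ·b₂)/(ξ·a₂))a₂) = 0 for all ξ in a nonempty open subset of S² on which ξ·a₁ ≠ 0 and ξ·a₂ ≠ 0. -/
open scoped RealInnerProductSpace

theorem stmt8 (a₁ a₂ b₁ b₂ : EuclideanSpace ℝ (Fin 3))
    (ha₁ : ‖a₁‖ = 1) (ha₂ : ‖a₂‖ = 1) (hnpar : ¬ ∃ c : ℝ, a₂ = c • a₁)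
    (hab₁ : ⟪a₁, b₁⟫ = 0) (hab₂ : ⟪a₂, b₂⟫ = 0) (hb₁ : b₁ ≠ 0) (hb₂ : b₂ ≠ 0)
    (U : Set (EuclideanSpace ℝ (Fin 3))) (hUs : U ⊆ Metric.sphere 0 1)
    (hUopen : ∃ V : Set (EuclideanSpace ℝ (Fin 3)), IsOpen V ∧ U = V ∩ Metric.sphere 0 1)
    (hUne : U.Nonempty)
    (hU0 : ∀ ξ ∈ U, ⟪ξ, a₁⟫ ≠ 0 ∧ ⟪ξ, a₂⟫ ≠ 0) :
    ¬ ∀ ξ ∈ U, ⟪b₁ - (⟪ξ, b₁⟫ / ⟪ξ, a₁⟫) • a₁, b₂ - (⟪ξ, b₂⟫ / ⟪ξ, a₂⟫) • a₂⟫ = 0 := by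
  intro hQ0
  obtain ⟨V, hVopen, hUV⟩ := hUopen
  obtain ⟨x₀, hx₀U⟩ := hUne
  set Q : EuclideanSpace ℝ (Fin 3) → ℝ := fun ξ =>
    ⟪b₁, b₂⟫ * (⟪ξ, a₁⟫ * ⟪ξ, a₂⟫) - ⟪a₁, b₂⟫ * (⟪ξ, a₂⟫ * ⟪ξ, b₁⟫)
      - ⟪a₂, b₁⟫ * (⟪ξ, a₁⟫ * ⟪ξ, b₂⟫) + ⟪a₁, a₂⟫ * (⟪ξ, b₁⟫ * ⟪ξ, b₂⟫) with hQdef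
  set R : EuclideanSpace ℝ (Fin 3) → EuclideanSpace ℝ (Fin 3) → ℝ := fun x y =>
    ⟪b₁, b₂⟫ * (⟪x, a₁⟫ * ⟪y, a₂⟫ + ⟪y, a₁⟫ * ⟪x, a₂⟫)
      - ⟪a₁, b₂⟫ * (⟪x, a₂⟫ * ⟪y, b₁⟫ + ⟪y, a₂⟫ * ⟪x, b₁⟫)
      - ⟪a₂, b₁⟫ * (⟪x, a₁⟫ * ⟪y, b₂⟫ + ⟪y, a₁⟫ * ⟪x, b₂⟫)
      + ⟪a₁, a₂⟫ * (⟪x, b₁⟫ * ⟪y, b₂⟫ + ⟪y, b₁⟫ * ⟪x, b₂⟫) with hRdef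
  -- expansion lemma
  have hexp : ∀ (x y : EuclideanSpace ℝ (Fin 3)) (t : ℝ),
      Q (x + t • y) = Q x + t * R x y + t ^ 2 * Q y := by
    intro x y t
    simp only [hQdef, hRdef, inner_add_left, real_inner_smul_left]
    ring
  -- Q vanishes on U
  have hQU : ∀ ξ ∈ U, Q ξ = 0 := by
    intro ξ hξ
    obtain ⟨h1, h2⟩ := hU0 ξ hξ
    have h := hQ0 ξ hξ
    simp only [inner_sub_left, inner_sub_right, real_inner_smul_left, real_inner_smul_right] at h
    rw [real_inner_comm a₂ b₁] at h
    simp only [hQdef]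
    set q₁ := (⟪ξ, a₁⟫ : ℝ) with hq₁
    set q₂ := (⟪ξ, a₂⟫ : ℝ) with hq₂
    set p₁ := (⟪ξ, b₁⟫ : ℝ) with hp₁
    set p₂ := (⟪ξ, b₂⟫ : ℝ) with hp₂
    set d₀ := (⟪b₁, b₂⟫ : ℝ) with hd₀
    set d₁ := (⟪a₁, b₂⟫ : ℝ) with hd₁
    set d₂ := (⟪a₂, b₁⟫ : ℝ) with hd₂
    set d₃ := (⟪a₁, a₂⟫ : ℝ) with hd₃
    have hne : q₁ * q₂ ≠ 0 := mul_ne_zero h1 h2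
    field_simp at h
    apply mul_left_cancel₀ hne
    linear_combination (q₁ * q₂) * h
  -- homogeneity
  have hQhom : ∀ (t : ℝ) (ξ : EuclideanSpace ℝ (Fin 3)), Q (t • ξ) = t ^ 2 * Q ξ := by
    intro t ξ
    simp only [hQdef, real_inner_smul_left]
    ring
  -- the open cone
  set C : Set (EuclideanSpace ℝ (Fin 3)) :=
    {x | x ≠ 0} ∩ (fun x : EuclideanSpace ℝ (Fin 3) => ‖x‖⁻¹ • x) ⁻¹' V with hCdef
  have hCopen : IsOpen C := by
    apply ContinuousOn.isOpen_inter_preimage _ _ hVopen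
    · refine (?_ : ContinuousOn (fun x : EuclideanSpace ℝ (Fin 3) => ‖x‖⁻¹) {x | x ≠ 0}).smul continuousOn_id
      exact (continuous_norm.continuousOn).inv₀ (fun x hx => norm_ne_zero_iff.mpr hx)
    · exact isOpen_ne
  have hQC : ∀ x ∈ C, Q x = 0 := by
    intro x hx
    obtain ⟨hx0, hxV⟩ := hx
    have hx0' : x ≠ 0 := hx0
    have hn : ‖x‖ ≠ 0 := norm_ne_zero_iff.mpr hx0'
    have hsph : ‖x‖⁻¹ • x ∈ Metric.sphere (0 : EuclideanSpace ℝ (Fin 3)) 1 := by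
      simp [norm_smul, abs_of_nonneg (inv_nonneg.mpr (norm_nonneg x)), inv_mul_cancel₀ hn]
    have hmem : ‖x‖⁻¹ • x ∈ U := by rw [hUV]; exact ⟨hxV, hsph⟩
    have h := hQU _ hmem
    have hx' : x = ‖x‖ • (‖x‖⁻¹ • x) := by
      rw [smul_smul, mul_inv_cancel₀ hn, one_smul]
    calc Q x = Q (‖x‖ • (‖x‖⁻¹ • x)) := by rw [← hx']
      _ = ‖x‖ ^ 2 * Q (‖x‖⁻¹ • x) := hQhom _ _
      _ = 0 := by rw [h]; ring
  -- x₀ ∈ C and get a ball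
  have hx₀C : x₀ ∈ C := by
    have hs : x₀ ∈ Metric.sphere (0 : EuclideanSpace ℝ (Fin 3)) 1 := hUs hx₀U
    have hn : ‖x₀‖ = 1 := by simpa using hs
    constructor
    · intro h0; rw [h0] at hn; simp at hn
    · show ‖x₀‖⁻¹ • x₀ ∈ V
      rw [hn, inv_one, one_smul]
      rw [hUV] at hx₀U; exact hx₀U.1
  obtain ⟨ε, hε, hball⟩ := Metric.isOpen_iff.mp hCopen x₀ hx₀C
  -- Q vanishes everywhere
  have hQall : ∀ y, Q y = 0 := by
    intro y
    by_cases hy : y = 0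
    · simp [hy, hQdef]
    · have hny : (0:ℝ) < ‖y‖ := norm_pos_iff.mpr hy
      have key : ∀ t : ℝ, |t| * ‖y‖ < ε → Q x₀ + t * R x₀ y + t ^ 2 * Q y = 0 := by
        intro t ht
        have : x₀ + t • y ∈ Metric.ball x₀ ε := by
          simp only [Metric.mem_ball, dist_eq_norm]
          simpa [norm_smul] using ht
        have := hQC _ (hball this)
        rwa [hexp] at this
      set t₁ : ℝ := ε / (2 * ‖y‖) with ht₁
      set t₂ : ℝ := ε / (4 * ‖y‖) with ht₂
      have ht₁pos : 0 < t₁ := by positivity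
      have ht₂pos : 0 < t₂ := by positivity
      have ht₁small : |t₁| * ‖y‖ < ε := by
        rw [abs_of_pos ht₁pos, ht₁]
        rw [div_mul_eq_mul_div, div_lt_iff₀ (by positivity)]
        nlinarith
      have ht₂small : |t₂| * ‖y‖ < ε := by
        rw [abs_of_pos ht₂pos, ht₂]
        rw [div_mul_eq_mul_div, div_lt_iff₀ (by positivity)]
        nlinarith
      have ht₁small' : |(-t₁)| * ‖y‖ < ε := by rwa [abs_neg]
      have ht₂small' : |(-t₂)| * ‖y‖ < ε := by rwa [abs_neg]
      have e1 := key t₁ ht₁small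
      have e2 := key (-t₁) ht₁small'
      have e3 := key t₂ ht₂small
      have e4 := key (-t₂) ht₂small'
      have ht₁₂ : t₁ ^ 2 ≠ t₂ ^ 2 := by
        have : t₂ < t₁ := by
          rw [ht₁, ht₂]
          apply div_lt_div_of_pos_left hε (by positivity)
          nlinarith
        nlinarith
      have : (t₁ ^ 2 - t₂ ^ 2) * Q y = 0 := by linarith
      rcases mul_eq_zero.mp this with h | h
      · exact absurd (by linarith : t₁ ^ 2 = t₂ ^ 2) ht₁₂
      · exact h
  have hRall : ∀ x y, R x y = 0 := by
    intro x y
    have := hexp x y 1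
    rw [hQall, hQall, hQall] at this
    linarith [this]
  -- scalar algebra
  have haa₁ : ⟪a₁, a₁⟫ = (1:ℝ) := by rw [real_inner_self_eq_norm_sq, ha₁]; norm_num
  have haa₂ : ⟪a₂, a₂⟫ = (1:ℝ) := by rw [real_inner_self_eq_norm_sq, ha₂]; norm_num
  have hbb₁ : ⟪b₁, b₁⟫ = ‖b₁‖ ^ 2 := real_inner_self_eq_norm_sq b₁
  have hbb₂ : ⟪b₂, b₂⟫ = ‖b₂‖ ^ 2 := real_inner_self_eq_norm_sq b₂
  have hnb₁ : (0:ℝ) < ‖b₁‖ ^ 2 := pow_pos (norm_pos_iff.mpr hb₁) 2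
  have hnb₂ : (0:ℝ) < ‖b₂‖ ^ 2 := pow_pos (norm_pos_iff.mpr hb₂) 2
  have hba₁ : ⟪b₁, a₁⟫ = (0:ℝ) := by rw [real_inner_comm]; exact hab₁
  have hba₂ : ⟪b₂, a₂⟫ = (0:ℝ) := by rw [real_inner_comm]; exact hab₂
  have hsym12 : ⟪a₂, a₁⟫ = ⟪a₁, a₂⟫ := real_inner_comm _ _
  have hsymb : ⟪b₂, b₁⟫ = ⟪b₁, b₂⟫ := real_inner_comm _ _
  have hsym1 : ⟪b₂, a₁⟫ = ⟪a₁, b₂⟫ := real_inner_comm _ _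
  have hsym2 : ⟪b₁, a₂⟫ = ⟪a₂, b₁⟫ := real_inner_comm _ _
  -- relation (1): Q a₁ = 0
  have r1 : ⟪b₁, b₂⟫ * ⟪a₁, a₂⟫ - ⟪a₁, b₂⟫ * ⟪a₂, b₁⟫ = 0 := by
    have h := hQall a₁
    simp only [hQdef] at h
    rw [haa₁, hab₁] at h
    linear_combination h
  have r2 : ⟪a₁, b₂⟫ = 0 := by
    have h := hRall a₂ b₁
    simp only [hRdef] at h
    rw [haa₂, hab₂, hba₁, hbb₁, hsym2, hsym12] at h
    have key : (⟪a₁, b₂⟫ : ℝ) * ‖b₁‖ ^ 2 = 0 := by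
      linear_combination (⟪a₂, b₁⟫ : ℝ) * r1 - h
    rcases mul_eq_zero.mp key with h' | h'
    · exact h'
    · exact absurd h' (ne_of_gt hnb₁)
  have r3 : ⟪a₂, b₁⟫ = 0 := by
    have h := hRall a₁ b₂
    simp only [hRdef] at h
    rw [haa₁, hab₁, hba₂, hbb₂, hsym1, hsymb] at h
    have key : (⟪a₂, b₁⟫ : ℝ) * ‖b₂‖ ^ 2 = 0 := by
      linear_combination (⟪a₁, b₂⟫ : ℝ) * r1 - h
    rcases mul_eq_zero.mp key with h' | h'
    · exact h'
    · exact absurd h' (ne_of_gt hnb₂)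
  have r4 : ⟪b₁, b₂⟫ = 0 := by
    have h := hRall a₁ a₂
    simp only [hRdef] at h
    rw [haa₁, haa₂, hab₁, hab₂, hsym12] at h
    have key : (⟪b₁, b₂⟫ : ℝ) * (1 + ⟪a₁, a₂⟫ ^ 2) = 0 := by
      linear_combination h + (⟪a₂, b₁⟫ : ℝ) * (⟪a₁, a₂⟫ : ℝ) * r2
    have hpos : (0:ℝ) < 1 + ⟪a₁, a₂⟫ ^ 2 := by positivity
    rcases mul_eq_zero.mp key with h' | h'
    · exact h'
    · exact absurd h' (ne_of_gt hpos)
  -- final geometric contradiction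
  have hind : LinearIndependent ℝ ![a₂, a₁] := by
    rw [linearIndependent_fin2]
    constructor
    · simp only [Matrix.cons_val_one, Matrix.head_cons, Matrix.cons_val_zero]
      intro h; rw [h] at ha₁; simp at ha₁
    · intro c hc
      simp only [Matrix.cons_val_one, Matrix.head_cons, Matrix.cons_val_zero] at hc
      exact hnpar ⟨c, hc.symm⟩
  have hspan : Module.finrank ℝ (Submodule.span ℝ {a₂, a₁} : Submodule ℝ (EuclideanSpace ℝ (Fin 3))) = 2 := by
    have hr : Set.range ![a₂, a₁] = {a₂, a₁} := by
      simp only [Matrix.range_cons, Matrix.range_empty, Set.union_empty,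
        Set.union_singleton]
      exact Set.pair_comm a₁ a₂
    rw [← hr]
    simpa using finrank_span_eq_card (R := ℝ) hind
  set W := (Submodule.span ℝ {a₂, a₁} : Submodule ℝ (EuclideanSpace ℝ (Fin 3)))ᗮ with hWdef
  have hWrank : Module.finrank ℝ W = 1 := by
    have h := Submodule.finrank_add_finrank_orthogonal
      (𝕜 := ℝ) (Submodule.span ℝ {a₂, a₁} : Submodule ℝ (EuclideanSpace ℝ (Fin 3)))
    rw [hspan, finrank_euclideanSpace_fin, ← hWdef] at h
    omega
  have hb₁W : b₁ ∈ W := by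
    rw [hWdef, Submodule.mem_orthogonal]
    intro u hu
    rw [Submodule.mem_span_pair] at hu
    obtain ⟨m, n, rfl⟩ := hu
    rw [inner_add_left, real_inner_smul_left, real_inner_smul_left, r3, hab₁]
    ring
  have hb₂W : b₂ ∈ W := by
    rw [hWdef, Submodule.mem_orthogonal]
    intro u hu
    rw [Submodule.mem_span_pair] at hu
    obtain ⟨m, n, rfl⟩ := hu
    rw [inner_add_left, real_inner_smul_left, real_inner_smul_left, r2, hab₂]
    ring
  have hle : Submodule.span ℝ {b₁} ≤ W := by
    rw [Submodule.span_le, Set.singleton_subset_iff]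
    exact hb₁W
  have heq : Submodule.span ℝ {b₁} = W := by
    apply Submodule.eq_of_le_of_finrank_eq hle
    rw [hWrank, finrank_span_singleton hb₁]
  have hb₂mem : b₂ ∈ Submodule.span ℝ ({b₁} : Set (EuclideanSpace ℝ (Fin 3))) := by
    rw [heq]; exact hb₂W
  obtain ⟨c, hc⟩ := Submodule.mem_span_singleton.mp hb₂mem
  have : ⟪b₁, b₂⟫ = c * ‖b₁‖ ^ 2 := by
    rw [← hc, real_inner_smul_right, real_inner_self_eq_norm_sq]
  rw [r4] at this
  have hc0 : c = 0 := by
    rcases mul_eq_zero.mp this.symm with h | h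
    · exact h
    · exact absurd h (ne_of_gt hnb₁)
  rw [hc0, zero_smul] at hc
  exact hb₂ hc.symm
end

section
/- Let a₁, b₁, a₂, b₂ ∈ ℝ³ with a₁ · b₁ = 0 and a₂ · b₂ = 0, a₁, a₂ unit vectors, a₁ not parallel to a₂. Suppose the polynomial identity (b₁·b₂)(ξ·a₁)(ξ·a₂) − (b₁·a₂)(ξ·a₁)(ξ·b₂) − (a₁·b₂)(ξ·b₁)(ξ·a₂) + (a₁·a₂)(ξ·b₁)(ξ·b₂) = 0 holds for all ξ ∈ ℝ³. Then b₁ = 0 or b₂ = 0. -/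
open scoped RealInnerProductSpace

private lemma keyprod (u0 u1 u2 v0 v1 v2 k : ℝ)
    (h : ∀ x0 x1 x2 : ℝ, (x0^2+x1^2+x2^2)*k
      = (x0*u0+x1*u1+x2*u2)*(x0*v0+x1*v1+x2*v2)) :
    (u0 = 0 ∧ u1 = 0 ∧ u2 = 0) ∨ (v0 = 0 ∧ v1 = 0 ∧ v2 = 0) := by
  have e0 := h 1 0 0
  have e1 := h 0 1 0
  have e2 := h 0 0 1
  have e01 := h 1 1 0
  have e02 := h 1 0 1
  have e12 := h 0 1 1
  have s01 : u0*v1 + u1*v0 = 0 := by linear_combination e0 + e1 - e01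
  have s02 : u0*v2 + u2*v0 = 0 := by linear_combination e0 + e2 - e02
  have s12 : u1*v2 + u2*v1 = 0 := by linear_combination e1 + e2 - e12
  have q01 : k^2 + (u0*v1)^2 = 0 := by
    linear_combination k*e0 + (u0*v0)*e1 + (u0*v1)*s01
  have q02 : k^2 + (u0*v2)^2 = 0 := by
    linear_combination k*e0 + (u0*v0)*e2 + (u0*v2)*s02
  have q12 : k^2 + (u1*v2)^2 = 0 := by
    linear_combination k*e1 + (u1*v1)*e2 + (u1*v2)*s12
  have hk : k = 0 := by nlinarith [sq_nonneg k, sq_nonneg (u0*v1)]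
  have h01 : u0*v1 = 0 := by nlinarith [sq_nonneg k, sq_nonneg (u0*v1)]
  have h02 : u0*v2 = 0 := by nlinarith [sq_nonneg k, sq_nonneg (u0*v2)]
  have h12 : u1*v2 = 0 := by nlinarith [sq_nonneg k, sq_nonneg (u1*v2)]
  have h10 : u1*v0 = 0 := by linarith
  have h20 : u2*v0 = 0 := by linarith
  have h21 : u2*v1 = 0 := by linarith
  have h00 : u0*v0 = 0 := by linear_combination hk - e0
  have h11 : u1*v1 = 0 := by linear_combination hk - e1
  have h22 : u2*v2 = 0 := by linear_combination hk - e2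
  by_cases hu0 : u0 = 0
  · by_cases hu1 : u1 = 0
    · by_cases hu2 : u2 = 0
      · exact Or.inl ⟨hu0, hu1, hu2⟩
      · exact Or.inr ⟨(mul_eq_zero.mp h20).resolve_left hu2,
          (mul_eq_zero.mp h21).resolve_left hu2,
          (mul_eq_zero.mp h22).resolve_left hu2⟩
    · exact Or.inr ⟨(mul_eq_zero.mp h10).resolve_left hu1,
        (mul_eq_zero.mp h11).resolve_left hu1,
        (mul_eq_zero.mp h12).resolve_left hu1⟩
  · exact Or.inr ⟨(mul_eq_zero.mp h00).resolve_left hu0,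
      (mul_eq_zero.mp h01).resolve_left hu0,
      (mul_eq_zero.mp h02).resolve_left hu0⟩

private lemma vanish (A0 A1 A2 B0 B1 B2 : ℝ)
    (hA : A0*A0 + A1*A1 + A2*A2 = 1)
    (hAB : A0*B0 + A1*B1 + A2*B2 = 0)
    (h1 : A1*B2 - A2*B1 = 0) (h2 : A2*B0 - A0*B2 = 0) (h3 : A0*B1 - A1*B0 = 0) :
    B0 = 0 ∧ B1 = 0 ∧ B2 = 0 := by
  have hB : B0^2 + B1^2 + B2^2 = 0 := by
    linear_combination (-(B0^2+B1^2+B2^2)) * hA + (A0*B0+A1*B1+A2*B2) * hAB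
      + (A1*B2-A2*B1)*h1 + (A2*B0-A0*B2)*h2 + (A0*B1-A1*B0)*h3
  refine ⟨?_, ?_, ?_⟩ <;>
    nlinarith [sq_nonneg B0, sq_nonneg B1, sq_nonneg B2]

theorem stmt9 (a₁ b₁ a₂ b₂ : EuclideanSpace ℝ (Fin 3))
    (hab₁ : ⟪a₁, b₁⟫ = 0) (hab₂ : ⟪a₂, b₂⟫ = 0)
    (ha₁ : ‖a₁‖ = 1) (ha₂ : ‖a₂‖ = 1) (hnpar : ¬ ∃ c : ℝ, a₂ = c • a₁)
    (h : ∀ ξ : EuclideanSpace ℝ (Fin 3),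
      ⟪b₁, b₂⟫ * ⟪ξ, a₁⟫ * ⟪ξ, a₂⟫ - ⟪b₁, a₂⟫ * ⟪ξ, a₁⟫ * ⟪ξ, b₂⟫
        - ⟪a₁, b₂⟫ * ⟪ξ, b₁⟫ * ⟪ξ, a₂⟫ + ⟪a₁, a₂⟫ * ⟪ξ, b₁⟫ * ⟪ξ, b₂⟫ = 0) :
    b₁ = 0 ∨ b₂ = 0 := by
  have hna₁ := real_inner_self_eq_norm_mul_norm a₁
  have hna₂ := real_inner_self_eq_norm_mul_norm a₂
  rw [ha₁] at hna₁
  rw [ha₂] at hna₂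
  simp only [PiLp.inner_apply, RCLike.inner_apply, RCLike.star_def, conj_trivial,
    Fin.sum_univ_three, mul_one] at hna₁ hna₂ hab₁ hab₂
  -- cross products
  set u0 : ℝ := a₁ 1 * b₁ 2 - a₁ 2 * b₁ 1 with hu0
  set u1 : ℝ := a₁ 2 * b₁ 0 - a₁ 0 * b₁ 2 with hu1
  set u2 : ℝ := a₁ 0 * b₁ 1 - a₁ 1 * b₁ 0 with hu2
  set v0 : ℝ := a₂ 1 * b₂ 2 - a₂ 2 * b₂ 1 with hv0
  set v1 : ℝ := a₂ 2 * b₂ 0 - a₂ 0 * b₂ 2 with hv1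
  set v2 : ℝ := a₂ 0 * b₂ 1 - a₂ 1 * b₂ 0 with hv2
  have hP : ∀ x0 x1 x2 : ℝ, (x0^2+x1^2+x2^2)*(u0*v0+u1*v1+u2*v2)
      = (x0*u0+x1*u1+x2*u2)*(x0*v0+x1*v1+x2*v2) := by
    intro x0 x1 x2
    have hx := h ((WithLp.equiv 2 (Fin 3 → ℝ)).symm ![x0,x1,x2])
    simp only [PiLp.inner_apply, RCLike.inner_apply, RCLike.star_def, conj_trivial,
      Fin.sum_univ_three, WithLp.equiv_symm_apply, PiLp.toLp_apply, Matrix.cons_val_zero,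
      Matrix.cons_val_one, Matrix.head_cons, Matrix.cons_val_two, Matrix.tail_cons] at hx
    rw [hu0, hu1, hu2, hv0, hv1, hv2]
    linear_combination hx
  rcases keyprod u0 u1 u2 v0 v1 v2 _ hP with ⟨h1, h2, h3⟩ | ⟨h1, h2, h3⟩
  · left
    obtain ⟨e0, e1, e2⟩ := vanish (a₁ 0) (a₁ 1) (a₁ 2) (b₁ 0) (b₁ 1) (b₁ 2) hna₁ (by linear_combination hab₁)
      (hu0 ▸ h1) (hu1 ▸ h2) (hu2 ▸ h3)
    ext i
    fin_cases i <;> simpa using ‹_›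
  · right
    obtain ⟨e0, e1, e2⟩ := vanish (a₂ 0) (a₂ 1) (a₂ 2) (b₂ 0) (b₂ 1) (b₂ 2) hna₂ (by linear_combination hab₂)
      (hv0 ▸ h1) (hv1 ▸ h2) (hv2 ▸ h3)
    ext i
    fin_cases i <;> simpa using ‹_›
end

section
/- Let P be a convex polytope in ℝ^d and let U₁ be a geodesically convex open subset of S^{d-1} such that no ξ ∈ U₁ is parallel to any facet of P (equivalently, ξ lies in no hyperplane spanned by the normal complement of a facet normal). Then for any ξ₁, ξ₂ ∈ U₁, the shadow boundaries coincide: ∂_{ξ₁}P = ∂_{ξ₂}P. -/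
open scoped RealInnerProductSpace
open Set

variable {E : Type*} [NormedAddCommGroup E] [InnerProductSpace ℝ E]

/-- The set of maximizers of `⟪u, ·⟫` in a finite set. -/
noncomputable def Amax (V : Finset E) (u : E) : Finset E :=
  V.filter (fun v => ∀ w ∈ V, ⟪u, w⟫ ≤ ⟪u, v⟫)

lemma mem_Amax {V : Finset E} {u v : E} :
    v ∈ Amax V u ↔ v ∈ V ∧ ∀ w ∈ V, ⟪u, w⟫ ≤ ⟪u, v⟫ := by
  classical
  simp [Amax]

lemma Amax_nonempty {V : Finset E} (hV : V.Nonempty) (u : E) : (Amax V u).Nonempty := by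
  obtain ⟨v, hv, hmax⟩ := V.exists_max_image (fun v => ⟪u, v⟫) hV
  exact ⟨v, mem_Amax.2 ⟨hv, hmax⟩⟩

lemma Amax_subset {V : Finset E} {u : E} : Amax V u ⊆ V := fun v hv => (mem_Amax.1 hv).1

lemma Amax_inner_eq {V : Finset E} {u a b : E} (ha : a ∈ Amax V u) (hb : b ∈ Amax V u) :
    ⟪u, a⟫ = ⟪u, b⟫ := by
  obtain ⟨haV, ha'⟩ := mem_Amax.1 ha
  obtain ⟨hbV, hb'⟩ := mem_Amax.1 hb
  exact le_antisymm (hb' a haV) (ha' b hbV)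

lemma inner_isLinearMap (u : E) : IsLinearMap ℝ (fun y : E => ⟪u, y⟫) :=
  ⟨fun x y => inner_add_right u x y, fun c x => real_inner_smul_right u x c⟩

lemma hull_inner_le {V : Finset E} {u : E} {M : ℝ} (h : ∀ v ∈ V, ⟪u, v⟫ ≤ M) :
    ∀ y ∈ convexHull ℝ (V : Set E), ⟪u, y⟫ ≤ M := by
  intro y hy
  exact convexHull_min (fun v hv => h v hv) (convex_halfSpace_le (inner_isLinearMap u) M) hy

lemma hull_inner_ge {V : Finset E} {u : E} {M : ℝ} (h : ∀ v ∈ V, M ≤ ⟪u, v⟫) :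
    ∀ y ∈ convexHull ℝ (V : Set E), M ≤ ⟪u, y⟫ := by
  intro y hy
  exact convexHull_min (fun v hv => h v hv) (convex_halfSpace_ge (inner_isLinearMap u) M) hy

/-- The exposed face of a polytope determined by `u` is the hull of the vertex maximizers. -/
lemma face_eq (V : Finset E) (hV : V.Nonempty) (u : E) :
    {y ∈ convexHull ℝ (V : Set E) | ∀ z ∈ convexHull ℝ (V : Set E), ⟪u, z⟫ ≤ ⟪u, y⟫}
      = convexHull ℝ ((Amax V u : Set E)) := by
  obtain ⟨a₀, ha₀⟩ := Amax_nonempty hV u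
  obtain ⟨ha₀V, hVle⟩ := mem_Amax.1 ha₀
  set M := ⟪u, a₀⟫ with hM
  have hAval : ∀ a ∈ Amax V u, ⟪u, a⟫ = M := fun a ha => Amax_inner_eq ha ha₀
  apply Set.Subset.antisymm
  · rintro y ⟨hyP, hysup⟩
    have hyM : ⟪u, y⟫ = M := le_antisymm (hull_inner_le hVle y hyP)
      (hysup a₀ (subset_convexHull ℝ _ ha₀V))
    rw [Finset.convexHull_eq] at hyP ⊢
    obtain ⟨w, hw0, hw1, hwy⟩ := hyP
    have hterm : ∀ v ∈ V, 0 ≤ w v * (M - ⟪u, v⟫) := fun v hv =>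
      mul_nonneg (hw0 v hv) (sub_nonneg.2 (hVle v hv))
    have hsum : ∑ v ∈ V, w v * (M - ⟪u, v⟫) = 0 := by
      have hcm : ⟪u, y⟫ = ∑ v ∈ V, w v * ⟪u, v⟫ := by
        rw [← hwy, Finset.centerMass_eq_of_sum_1 _ _ hw1]
        simp [inner_sum, real_inner_smul_right, mul_comm]
      have hexp : ∑ v ∈ V, w v * (M - ⟪u, v⟫)
          = (∑ v ∈ V, w v) * M - ∑ v ∈ V, w v * ⟪u, v⟫ := by
        rw [Finset.sum_mul, ← Finset.sum_sub_distrib]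
        exact Finset.sum_congr rfl (fun v _ => by ring)
      rw [hexp, hw1, ← hcm, one_mul, hyM, sub_self]
    have hzero : ∀ v ∈ V, v ∉ Amax V u → w v = 0 := by
      intro v hv hvA
      have hlt : ⟪u, v⟫ < M := by
        rcases lt_or_eq_of_le (hVle v hv) with h | h
        · exact h
        · exact absurd (mem_Amax.2 ⟨hv, fun w' hw' => (hVle w' hw').trans h.ge⟩) hvA
      have hz := (Finset.sum_eq_zero_iff_of_nonneg hterm).1 hsum v hv
      exact (mul_eq_zero.1 hz).resolve_right (ne_of_gt (sub_pos.2 hlt))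
    have hsum' : ∑ y ∈ Amax V u, w y = 1 := by
      rw [← hw1]
      exact Finset.sum_subset Amax_subset (fun v hv hvA => hzero v hv hvA)
    refine ⟨w, fun a ha => hw0 a (Amax_subset ha), hsum', ?_⟩
    rw [Finset.centerMass_eq_of_sum_1 _ _ hsum', ← hwy,
      Finset.centerMass_eq_of_sum_1 _ _ hw1]
    exact Finset.sum_subset Amax_subset
      (fun v hv hvA => by rw [hzero v hv hvA, zero_smul])
  · intro y hy
    have hyV : y ∈ convexHull ℝ (V : Set E) :=
      convexHull_mono (by exact_mod_cast Amax_subset) hy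
    have h1 : ⟪u, y⟫ ≤ M := hull_inner_le (fun a ha => (hAval a ha).le) y hy
    have h2 : M ≤ ⟪u, y⟫ := hull_inner_ge (fun a ha => (hAval a ha).ge) y hy
    exact ⟨hyV, fun z hz => (hull_inner_le hVle z hz).trans (h1.antisymm h2).symm.le⟩

lemma vectorSpan_le_orth {s : Set E} {w : E} (h : ∀ a ∈ s, ∀ b ∈ s, ⟪w, a⟫ = ⟪w, b⟫) :
    vectorSpan ℝ s ≤ (ℝ ∙ w)ᗮ := by
  rw [vectorSpan_def]
  refine Submodule.span_le.2 ?_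
  rintro z ⟨a, ha, b, hb, rfl⟩
  rw [SetLike.mem_coe, Submodule.mem_orthogonal_singleton_iff_inner_right]
  show ⟪w, a - b⟫ = 0
  rw [inner_sub_right, h a ha b hb, sub_self]

lemma vectorSpan_Amax_le {V : Finset E} {u : E} :
    vectorSpan ℝ ((Amax V u : Set E)) ≤ (ℝ ∙ u)ᗮ :=
  vectorSpan_le_orth (fun a ha b hb => Amax_inner_eq (Finset.mem_coe.1 ha) (Finset.mem_coe.1 hb))

lemma finrank_Amax_le [FiniteDimensional ℝ E] {V : Finset E} {u : E} (hu : u ≠ 0) :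
    Module.finrank ℝ (vectorSpan ℝ ((Amax V u : Set E))) ≤ Module.finrank ℝ E - 1 := by
  have h1 : Module.finrank ℝ (vectorSpan ℝ ((Amax V u : Set E))) ≤ Module.finrank ℝ ((ℝ ∙ u)ᗮ) :=
    Submodule.finrank_mono vectorSpan_Amax_le
  have h2 : Module.finrank ℝ (ℝ ∙ u) + Module.finrank ℝ ((ℝ ∙ u)ᗮ) = Module.finrank ℝ E :=
    Submodule.finrank_add_finrank_orthogonal _
  have h3 : Module.finrank ℝ (ℝ ∙ u) = 1 := finrank_span_singleton hu
  omega

lemma facet_step [FiniteDimensional ℝ E] {V : Finset E} (hV : V.Nonempty)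
    (hspan : affineSpan ℝ (V : Set E) = ⊤) {u : E} (hu : u ≠ 0)
    (hlt : Module.finrank ℝ (vectorSpan ℝ ((Amax V u : Set E))) < Module.finrank ℝ E - 1) :
    ∃ u' : E, u' ≠ 0 ∧ Amax V u ⊆ Amax V u' ∧
      Module.finrank ℝ (vectorSpan ℝ ((Amax V u : Set E))) <
        Module.finrank ℝ (vectorSpan ℝ ((Amax V u' : Set E))) := by
  classical
  obtain ⟨a₀, ha₀⟩ := Amax_nonempty hV u
  obtain ⟨ha₀V, hVle⟩ := mem_Amax.1 ha₀
  set M := ⟪u, a₀⟫ with hM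
  have hAval : ∀ a ∈ Amax V u, ⟪u, a⟫ = M := fun a ha => Amax_inner_eq ha ha₀
  -- the main construction, for a direction `w'`
  have main : ∀ w' : E, ⟪u, w'⟫ = 0 →
      (∀ z ∈ vectorSpan ℝ ((Amax V u : Set E)), ⟪w', z⟫ = 0) →
      (∃ b ∈ V, ⟪w', a₀⟫ < ⟪w', b⟫) →
      ∃ u' : E, u' ≠ 0 ∧ Amax V u ⊆ Amax V u' ∧
        Module.finrank ℝ (vectorSpan ℝ ((Amax V u : Set E))) <
          Module.finrank ℝ (vectorSpan ℝ ((Amax V u' : Set E))) := by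
    intro w' hw'u hw'A hbex
    set c := ⟪w', a₀⟫ with hc
    have hAc : ∀ a ∈ Amax V u, ⟪w', a⟫ = c := by
      intro a ha
      have hmem : a - a₀ ∈ vectorSpan ℝ ((Amax V u : Set E)) :=
        vsub_mem_vectorSpan ℝ (Finset.mem_coe.2 ha) (Finset.mem_coe.2 ha₀)
      have := hw'A _ hmem
      rw [inner_sub_right] at this
      linarith
    set S := V.filter (fun b => c < ⟪w', b⟫) with hS
    have hSne : S.Nonempty := by
      obtain ⟨b, hbV, hblt⟩ := hbex
      exact ⟨b, Finset.mem_filter.2 ⟨hbV, hblt⟩⟩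
    have hSM : ∀ b ∈ S, ⟪u, b⟫ < M := by
      intro b hb
      obtain ⟨hbV, hbc⟩ := Finset.mem_filter.1 hb
      rcases lt_or_eq_of_le (hVle b hbV) with h | h
      · exact h
      · exfalso
        have hbA : b ∈ Amax V u := mem_Amax.2 ⟨hbV, fun w hw => (hVle w hw).trans h.ge⟩
        exact absurd (hAc b hbA) (ne_of_gt hbc)
    set g : E → ℝ := fun b => (M - ⟪u, b⟫) / (⟪w', b⟫ - c) with hg
    obtain ⟨b₀, hb₀S, hb₀min⟩ := S.exists_min_image g hSne
    obtain ⟨hb₀V, hb₀c⟩ := Finset.mem_filter.1 hb₀S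
    set t := g b₀ with ht
    have htpos : 0 < t := div_pos (sub_pos.2 (hSM b₀ hb₀S)) (sub_pos.2 hb₀c)
    set u' := u + t • w' with hu'def
    have hinsu : ⟪u, u'⟫ = ⟪u, u⟫ := by
      rw [hu'def, inner_add_right, real_inner_smul_right, hw'u, mul_zero, add_zero]
    have hu'ne : u' ≠ 0 := by
      intro h
      rw [h, inner_zero_right] at hinsu
      exact hu (inner_self_eq_zero.1 hinsu.symm)
    have hinner : ∀ v : E, ⟪u', v⟫ = ⟪u, v⟫ + t * ⟪w', v⟫ := by
      intro v
      rw [hu'def, inner_add_left, real_inner_smul_left]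
    have hVle' : ∀ v ∈ V, ⟪u', v⟫ ≤ M + t * c := by
      intro v hv
      rw [hinner]
      by_cases hvS : c < ⟪w', v⟫
      · have hvSmem : v ∈ S := Finset.mem_filter.2 ⟨hv, hvS⟩
        have hmin : t ≤ g v := hb₀min v hvSmem
        have hineq : t * (⟪w', v⟫ - c) ≤ M - ⟪u, v⟫ := by
          rw [hg] at hmin
          have := (le_div_iff₀ (sub_pos.2 hvS)).1 hmin
          linarith
        nlinarith
      · push_neg at hvS
        have h1 : t * ⟪w', v⟫ ≤ t * c := mul_le_mul_of_nonneg_left hvS htpos.le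
        have h2 : ⟪u, v⟫ ≤ M := hVle v hv
        linarith
    have hA' : ∀ a ∈ Amax V u, ⟪u', a⟫ = M + t * c := by
      intro a ha
      rw [hinner, hAval a ha, hAc a ha]
    have hb₀eq : ⟪u', b₀⟫ = M + t * c := by
      rw [hinner]
      have hne0 : ⟪w', b₀⟫ - c ≠ 0 := ne_of_gt (sub_pos.2 hb₀c)
      have : t * (⟪w', b₀⟫ - c) = M - ⟪u, b₀⟫ := by
        rw [ht, hg]
        exact div_mul_cancel₀ _ hne0
      nlinarith [this]
    have hsub : Amax V u ⊆ Amax V u' := by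
      intro a ha
      refine mem_Amax.2 ⟨(mem_Amax.1 ha).1, fun v hv => ?_⟩
      rw [hA' a ha]
      exact hVle' v hv
    have hb₀mem : b₀ ∈ Amax V u' := by
      refine mem_Amax.2 ⟨hb₀V, fun v hv => ?_⟩
      rw [hb₀eq]
      exact hVle' v hv
    refine ⟨u', hu'ne, hsub, ?_⟩
    have hle : vectorSpan ℝ ((Amax V u : Set E)) ≤ vectorSpan ℝ ((Amax V u' : Set E)) :=
      vectorSpan_mono ℝ (Finset.coe_subset.2 hsub)
    have hmem' : b₀ - a₀ ∈ vectorSpan ℝ ((Amax V u' : Set E)) :=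
      vsub_mem_vectorSpan ℝ (Finset.mem_coe.2 hb₀mem) (Finset.mem_coe.2 (hsub ha₀))
    have hnmem : b₀ - a₀ ∉ vectorSpan ℝ ((Amax V u : Set E)) := by
      intro hmem
      have := hw'A _ hmem
      rw [inner_sub_right] at this
      have : ⟪w', b₀⟫ = c := by linarith
      exact absurd this (ne_of_gt hb₀c)
    exact Submodule.finrank_lt_finrank_of_lt (lt_of_le_of_ne hle
      (fun hEq => hnmem (hEq ▸ hmem')))
  -- construct the perturbing direction `w`
  set T := vectorSpan ℝ ((Amax V u : Set E)) ⊔ (ℝ ∙ u) with hT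
  have hTfr : Module.finrank ℝ T < Module.finrank ℝ E := by
    rw [hT]
    have h1 := Submodule.finrank_sup_add_finrank_inf_eq
      (vectorSpan ℝ ((Amax V u : Set E))) (ℝ ∙ u)
    have h2 : Module.finrank ℝ (ℝ ∙ u) = 1 := finrank_span_singleton hu
    omega
  have hTne : T ≠ ⊤ := by
    intro h
    rw [h, finrank_top] at hTfr
    exact lt_irrefl _ hTfr
  obtain ⟨w, hwT, hw0⟩ : ∃ w, w ∈ Tᗮ ∧ w ≠ 0 := by
    have hbot : Tᗮ ≠ ⊥ := fun h => hTne (Submodule.orthogonal_eq_bot_iff.1 h)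
    obtain ⟨w, hw1, hw2⟩ := Submodule.exists_mem_ne_zero_of_ne_bot hbot
    exact ⟨w, hw1, hw2⟩
  have hwu : ⟪u, w⟫ = 0 :=
    hwT u ((le_sup_right : (ℝ ∙ u) ≤ T) (Submodule.mem_span_singleton_self u))
  have hwA : ∀ z ∈ vectorSpan ℝ ((Amax V u : Set E)), ⟪w, z⟫ = 0 := by
    intro z hz
    have := hwT z ((le_sup_left : vectorSpan ℝ ((Amax V u : Set E)) ≤ T) hz)
    rw [real_inner_comm] at this
    exact this
  have hbex : (∃ b ∈ V, ⟪w, a₀⟫ < ⟪w, b⟫) ∨ (∃ b ∈ V, ⟪-w, a₀⟫ < ⟪-w, b⟫) := by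
    by_contra hcon
    push_neg at hcon
    obtain ⟨h1, h2⟩ := hcon
    have hconst : ∀ v ∈ V, ⟪w, v⟫ = ⟪w, a₀⟫ := by
      intro v hv
      have ha := h1 v hv
      have hb := h2 v hv
      rw [inner_neg_left, inner_neg_left, neg_le_neg_iff] at hb
      linarith
    have hsp : vectorSpan ℝ (V : Set E) = ⊤ := by
      rw [← direction_affineSpan, hspan]
      exact AffineSubspace.direction_top ℝ E E
    have hle : vectorSpan ℝ (V : Set E) ≤ (ℝ ∙ w)ᗮ :=
      vectorSpan_le_orth (fun a ha b hb =>
        (hconst a (Finset.mem_coe.1 ha)).trans (hconst b (Finset.mem_coe.1 hb)).symm)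
    rw [hsp, top_le_iff] at hle
    have : w ∈ (ℝ ∙ w)ᗮ := by rw [hle]; trivial
    rw [Submodule.mem_orthogonal_singleton_iff_inner_right] at this
    exact hw0 (inner_self_eq_zero.1 this)
  rcases hbex with h | h
  · exact main w hwu hwA h
  · refine main (-w) ?_ ?_ h
    · rw [inner_neg_right, hwu, neg_zero]
    · intro z hz
      rw [inner_neg_left, hwA z hz, neg_zero]

/-- Every exposed face's maximizer set extends to one spanning a hyperplane (facet). -/
lemma facet_complete [FiniteDimensional ℝ E] {V : Finset E} (hV : V.Nonempty)
    (hspan : affineSpan ℝ (V : Set E) = ⊤) {u : E} (hu : u ≠ 0) :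
    ∃ η : E, η ≠ 0 ∧ Amax V u ⊆ Amax V η ∧
      Module.finrank ℝ (vectorSpan ℝ ((Amax V η : Set E))) = Module.finrank ℝ E - 1 := by
  suffices H : ∀ k : ℕ, ∀ w : E, w ≠ 0 →
      Module.finrank ℝ E - 1 - Module.finrank ℝ (vectorSpan ℝ ((Amax V w : Set E))) ≤ k →
      ∃ η : E, η ≠ 0 ∧ Amax V w ⊆ Amax V η ∧
        Module.finrank ℝ (vectorSpan ℝ ((Amax V η : Set E))) = Module.finrank ℝ E - 1 by
    exact H _ u hu le_rfl
  intro k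
  induction k with
  | zero =>
    intro w hw h0
    have h1 := finrank_Amax_le (V := V) hw
    exact ⟨w, hw, subset_rfl, by omega⟩
  | succ k ih =>
    intro w hw hk
    by_cases heq : Module.finrank ℝ (vectorSpan ℝ ((Amax V w : Set E))) =
        Module.finrank ℝ E - 1
    · exact ⟨w, hw, subset_rfl, heq⟩
    · have hlt : Module.finrank ℝ (vectorSpan ℝ ((Amax V w : Set E))) <
          Module.finrank ℝ E - 1 := lt_of_le_of_ne (finrank_Amax_le hw) heq
      obtain ⟨u', hu', hsub, hfr⟩ := facet_step hV hspan hw hlt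
      have h2 := finrank_Amax_le (V := V) hu'
      obtain ⟨η, hη, hsub', hfr'⟩ := ih u' hu' (by omega)
      exact ⟨η, hη, hsub.trans hsub', hfr'⟩

/-- If all supporting functionals at `x` have the same `ξ`-sign, but one of them is orthogonal
to `ξ`, then `ξ` lies in the span direction of a facet. -/
lemma key_sign [FiniteDimensional ℝ E] {V : Finset E} (hV : V.Nonempty)
    (hspan : affineSpan ℝ (V : Set E) = ⊤) {x ξ u : E} (hu : u ≠ 0)
    (hux : ∀ v ∈ V, ⟪u, v⟫ ≤ ⟪u, x⟫) (hx : x ∈ convexHull ℝ (V : Set E))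
    (hperp : ⟪u, ξ⟫ = 0)
    (hsign : (∀ w : E, (∀ v ∈ V, ⟪w, v⟫ ≤ ⟪w, x⟫) → 0 ≤ ⟪w, ξ⟫) ∨
             (∀ w : E, (∀ v ∈ V, ⟪w, v⟫ ≤ ⟪w, x⟫) → ⟪w, ξ⟫ ≤ 0)) :
    ∃ η : E, η ≠ 0 ∧ ⟪η, ξ⟫ = 0 ∧
      Module.finrank ℝ (vectorSpan ℝ ((Amax V η : Set E))) = Module.finrank ℝ E - 1 := by
  classical
  obtain ⟨η, hη0, hsubA, hfr⟩ := facet_complete hV hspan hu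
  obtain ⟨a₀, ha₀⟩ := Amax_nonempty hV u
  obtain ⟨ha₀V, hVle⟩ := mem_Amax.1 ha₀
  set M := ⟪u, a₀⟫ with hMdef
  obtain ⟨b₀, hb₀⟩ := Amax_nonempty hV η
  obtain ⟨hb₀V, hVleη⟩ := mem_Amax.1 hb₀
  set Mη := ⟪η, b₀⟫ with hMηdef
  have hBval : ∀ b ∈ Amax V η, ⟪η, b⟫ = Mη := fun b hb => Amax_inner_eq hb hb₀
  have hxM : ⟪u, x⟫ = M := le_antisymm (hull_inner_le hVle x hx) (hux a₀ ha₀V)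
  have hxA : x ∈ convexHull ℝ ((Amax V u : Set E)) := by
    rw [← face_eq V hV u]
    exact ⟨hx, fun z hz => le_of_le_of_eq (hull_inner_le hVle z hz) hxM.symm⟩
  have hxAB : x ∈ convexHull ℝ ((Amax V η : Set E)) :=
    convexHull_mono (Finset.coe_subset.2 hsubA) hxA
  have hxMη : ⟪η, x⟫ = Mη := le_antisymm
    (hull_inner_le (fun b hb => (hBval b hb).le) x hxAB)
    (hull_inner_ge (fun b hb => (hBval b hb).ge) x hxAB)
  have hηN : ∀ v ∈ V, ⟪η, v⟫ ≤ ⟪η, x⟫ := fun v hv =>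
    le_of_le_of_eq (hVleη v hv) hxMη.symm
  set C := V.filter (fun v => v ∉ Amax V η) with hC
  have hεex : ∃ ε : ℝ, 0 < ε ∧ ∀ v ∈ V, ⟪u - ε • η, v⟫ ≤ ⟪u - ε • η, x⟫ := by
    have hcomp : ∀ (ε : ℝ) (y : E), ⟪u - ε • η, y⟫ = ⟪u, y⟫ - ε * ⟪η, y⟫ := fun ε y => by
      rw [inner_sub_left, real_inner_smul_left]
    by_cases hCne : C.Nonempty
    · set f : E → ℝ := fun v => (M - ⟪u, v⟫) / (Mη - ⟪η, v⟫) with hf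
      obtain ⟨v₀, hv₀C, hv₀min⟩ := C.exists_min_image f hCne
      have hstrict : ∀ v ∈ C, ⟪η, v⟫ < Mη ∧ ⟪u, v⟫ < M := by
        intro v hv
        obtain ⟨hvV, hvB⟩ := Finset.mem_filter.1 hv
        constructor
        · rcases lt_or_eq_of_le (hVleη v hvV) with h | h
          · exact h
          · exact absurd (mem_Amax.2 ⟨hvV, fun w hw => (hVleη w hw).trans h.ge⟩) hvB
        · have hvA : v ∉ Amax V u := fun hvA => hvB (hsubA hvA)
          rcases lt_or_eq_of_le (hVle v hvV) with h | h
          · exact h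
          · exact absurd (mem_Amax.2 ⟨hvV, fun w hw => (hVle w hw).trans h.ge⟩) hvA
      refine ⟨f v₀, div_pos (sub_pos.2 (hstrict v₀ hv₀C).2) (sub_pos.2 (hstrict v₀ hv₀C).1), ?_⟩
      intro v hv
      rw [hcomp, hcomp, hxM, hxMη]
      by_cases hvB : v ∈ Amax V η
      · rw [hBval v hvB]
        have := hVle v hv
        have hf0 : 0 ≤ f v₀ :=
          (div_pos (sub_pos.2 (hstrict v₀ hv₀C).2) (sub_pos.2 (hstrict v₀ hv₀C).1)).le
        linarith
      · have hvC : v ∈ C := Finset.mem_filter.2 ⟨hv, hvB⟩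
        have hmin := hv₀min v hvC
        have hpos := sub_pos.2 (hstrict v hvC).1
        have hineq : f v₀ * (Mη - ⟪η, v⟫) ≤ M - ⟪u, v⟫ := by
          have := (le_div_iff₀ hpos).1 hmin
          linarith
        nlinarith
    · refine ⟨1, one_pos, ?_⟩
      intro v hv
      have hvB : v ∈ Amax V η := by
        by_contra hvB
        exact hCne ⟨v, Finset.mem_filter.2 ⟨hv, hvB⟩⟩
      rw [hcomp, hcomp, hxM, hxMη, hBval v hvB]
      have := hVle v hv
      linarith
  obtain ⟨ε, hεpos, hεN⟩ := hεex
  have h1 : ⟪u - ε • η, ξ⟫ = -(ε * ⟪η, ξ⟫) := by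
    rw [inner_sub_left, real_inner_smul_left, hperp, zero_sub]
  have hηξ : ⟪η, ξ⟫ = 0 := by
    rcases hsign with hs | hs
    · have h2 := hs _ hεN
      have h3 := hs η hηN
      rw [h1] at h2
      have h4 : ⟪η, ξ⟫ ≤ 0 := by
        by_contra hcon
        push_neg at hcon
        nlinarith
      linarith
    · have h2 := hs _ hεN
      have h3 := hs η hηN
      rw [h1] at h2
      have h4 : 0 ≤ ⟪η, ξ⟫ := by
        by_contra hcon
        push_neg at hcon
        nlinarith
      linarith
  exact ⟨η, hη0, hηξ, hfr⟩

lemma intrinsicInterior_subset_interior_of_affineSpan_top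
    {F : Type*} [NormedAddCommGroup F] [NormedSpace ℝ F] {s : Set F}
    (h : affineSpan ℝ s = ⊤) : intrinsicInterior ℝ s ⊆ interior s := by
  rintro x' hx'
  obtain ⟨y, hy, rfl⟩ := mem_intrinsicInterior.1 hx'
  have h1 : IsOpen ((affineSpan ℝ s : Set F)) := by
    rw [h, AffineSubspace.top_coe]
    exact isOpen_univ
  have h2 := h1.isOpenMap_subtype_val.image_interior_subset
    (((↑) : (affineSpan ℝ s : Set F) → F) ⁻¹' s)
  have h3 : ((↑) : (affineSpan ℝ s : Set F) → F) '' (((↑) : (affineSpan ℝ s : Set F) → F) ⁻¹' s)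
      = s := by
    rw [Subtype.image_preimage_coe, h, AffineSubspace.top_coe, Set.univ_inter]
  have h4 : (y : F) ∈ ((↑) : (affineSpan ℝ s : Set F) → F) '' interior
      (((↑) : (affineSpan ℝ s : Set F) → F) ⁻¹' s) := ⟨y, hy, rfl⟩
  have h5 := h2 h4
  rwa [h3] at h5

/-- Characterization of the shadow boundary via supporting functionals orthogonal to `ξ`. -/
lemma sb_char [FiniteDimensional ℝ E] {V : Finset E} {P : Set E}
    (hP : P = convexHull ℝ (V : Set E)) (hPfull : (interior P).Nonempty)
    {ξ : E} (hξ : ‖ξ‖ = 1) {x : E} (hx : x ∈ P) :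
    ((fun y => y - ⟪y, ξ⟫ • ξ) x ∈
        intrinsicFrontier ℝ ((fun y => y - ⟪y, ξ⟫ • ξ) '' P)) ↔
      ∃ u : E, u ≠ 0 ∧ ⟪u, ξ⟫ = 0 ∧ ∀ y ∈ P, ⟪u, y⟫ ≤ ⟪u, x⟫ := by
  classical
  have hξξ : ⟪ξ, ξ⟫ = (1 : ℝ) := by
    rw [real_inner_self_eq_norm_mul_norm, hξ, one_mul]
  set π : E → E := fun y => y - ⟪y, ξ⟫ • ξ with hπ
  set W : Submodule ℝ E := (ℝ ∙ ξ)ᗮ with hWdef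
  have hπW : ∀ y, π y ∈ W := by
    intro y
    rw [hWdef, Submodule.mem_orthogonal_singleton_iff_inner_right]
    show ⟪ξ, y - ⟪y, ξ⟫ • ξ⟫ = 0
    rw [inner_sub_right, real_inner_smul_right, hξξ, mul_one, real_inner_comm, sub_self]
  have hinner_π : ∀ u : E, u ∈ W → ∀ y, ⟪u, π y⟫ = ⟪u, y⟫ := by
    intro u hu y
    have huξ : ⟪u, ξ⟫ = 0 := Submodule.mem_orthogonal_singleton_iff_inner_left.1 hu
    show ⟪u, y - ⟪y, ξ⟫ • ξ⟫ = ⟪u, y⟫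
    rw [inner_sub_right, real_inner_smul_right, huξ, mul_zero, sub_zero]
  have hπlin : IsLinearMap ℝ π := by
    constructor
    · intro a b
      show a + b - ⟪a + b, ξ⟫ • ξ = (a - ⟪a, ξ⟫ • ξ) + (b - ⟪b, ξ⟫ • ξ)
      rw [inner_add_left, add_smul]
      abel
    · intro c a
      show c • a - ⟪c • a, ξ⟫ • ξ = c • (a - ⟪a, ξ⟫ • ξ)
      rw [real_inner_smul_left, smul_sub, smul_smul]
  have hπcont : Continuous π := by
    exact continuous_id.sub ((continuous_id.inner continuous_const).smul continuous_const)
  have hPconv : Convex ℝ P := by rw [hP]; exact convex_convexHull ℝ _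
  have hPc : IsCompact P := by
    rw [hP]
    exact V.finite_toSet.isCompact_convexHull ℝ
  set Q : Set E := π '' P with hQdef
  have hQc : IsCompact Q := hPc.image hπcont
  have hQconv : Convex ℝ Q := hPconv.is_linear_image hπlin
  obtain ⟨x₀, hx₀⟩ := hPfull
  obtain ⟨r, hr, hball⟩ := Metric.isOpen_iff.1 isOpen_interior x₀ hx₀
  have hballQ : ∀ w : E, w ∈ W → ‖w - π x₀‖ < r → w ∈ Q := by
    intro w hw hlt
    have hwξ : ⟪w, ξ⟫ = 0 := Submodule.mem_orthogonal_singleton_iff_inner_left.1 hw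
    refine ⟨w + ⟪x₀, ξ⟫ • ξ, interior_subset (hball ?_), ?_⟩
    · rw [Metric.mem_ball, dist_eq_norm]
      have heq : w + ⟪x₀, ξ⟫ • ξ - x₀ = w - π x₀ := by
        show _ = w - (x₀ - ⟪x₀, ξ⟫ • ξ)
        abel
      rw [heq]
      exact hlt
    · show w + ⟪x₀, ξ⟫ • ξ - ⟪w + ⟪x₀, ξ⟫ • ξ, ξ⟫ • ξ = w
      rw [inner_add_left, real_inner_smul_left, hwξ, hξξ, mul_one, zero_add]
      abel
  -- transfer to the subtype of W
  set φ : W →ᵃⁱ[ℝ] E := W.subtypeₗᵢ.toAffineIsometry with hφdef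
  have hφcoe : (⇑φ : W → E) = (Subtype.val : W → E) := rfl
  set Q₀ : Set W := (Subtype.val : W → E) ⁻¹' Q with hQ₀def
  have hQW : ∀ q ∈ Q, q ∈ W := by
    rintro q ⟨y, hy, rfl⟩
    exact hπW y
  have himg : (⇑φ : W → E) '' Q₀ = Q := by
    rw [hφcoe]
    ext q
    constructor
    · rintro ⟨w0, hw0, rfl⟩
      exact hw0
    · intro hq
      exact ⟨⟨q, hQW q hq⟩, hq, rfl⟩
  have hII : intrinsicInterior ℝ Q = (Subtype.val : W → E) '' intrinsicInterior ℝ Q₀ := by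
    conv_lhs => rw [← himg]
    rw [AffineIsometry.image_intrinsicInterior, hφcoe]
  set c₀ : W := ⟨π x₀, hπW x₀⟩ with hc₀def
  have hball₀ : Metric.ball c₀ r ⊆ Q₀ := by
    intro w hwball
    rw [Metric.mem_ball, Subtype.dist_eq, dist_eq_norm] at hwball
    exact hballQ _ w.2 hwball
  have haffQ₀ : affineSpan ℝ Q₀ = ⊤ :=
    top_unique (le_trans (IsOpen.affineSpan_eq_top Metric.isOpen_ball
      ⟨c₀, Metric.mem_ball_self hr⟩).symm.le (affineSpan_mono ℝ hball₀))
  have hc₀int : c₀ ∈ interior Q₀ :=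
    (Metric.isOpen_ball.subset_interior_iff.2 hball₀) (Metric.mem_ball_self hr)
  have hπxQ : π x ∈ Q := ⟨x, hx, rfl⟩
  constructor
  · -- frontier → supporting functional
    intro hfront
    rw [← closure_diff_intrinsicInterior] at hfront
    obtain ⟨-, hnotint⟩ := hfront
    rw [hII] at hnotint
    set q₀ : W := ⟨π x, hπW x⟩ with hq₀def
    have hq₀ : q₀ ∉ interior Q₀ := by
      intro h
      exact hnotint ⟨q₀, interior_subset_intrinsicInterior h, rfl⟩
    have hconvQ₀ : Convex ℝ Q₀ := hQconv.linear_preimage W.subtype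
    obtain ⟨f, hf⟩ := geometric_hahn_banach_open_point hconvQ₀.interior isOpen_interior hq₀
    have hfle : ∀ a ∈ Q₀, f a ≤ f q₀ := by
      intro a ha
      have hseg : ∀ t : ℝ, 0 < t → t ≤ 1 → (1 - t) * f a + t * f c₀ < f q₀ := by
        intro t ht ht1
        have hmem : t • c₀ + (1 - t) • a ∈ interior Q₀ :=
          hconvQ₀.combo_interior_closure_mem_interior hc₀int (subset_closure ha) ht
            (by linarith) (by ring)
        have := hf _ hmem
        rw [map_add, map_smul, map_smul, smul_eq_mul, smul_eq_mul] at this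
        linarith
      by_contra hgt
      push_neg at hgt
      by_cases hd : f a - f c₀ ≤ 0
      · have := hseg 1 one_pos le_rfl
        linarith
      · push_neg at hd
        set t : ℝ := min 1 ((f a - f q₀) / (2 * (f a - f c₀))) with htdef
        have htpos : 0 < t := lt_min one_pos (div_pos (by linarith) (by linarith))
        have ht1 : t ≤ 1 := min_le_left _ _
        have ht2 : t ≤ (f a - f q₀) / (2 * (f a - f c₀)) := min_le_right _ _
        have ht3 : t * (f a - f c₀) ≤ (f a - f q₀) / 2 := by
          rw [le_div_iff₀ (by linarith : (0:ℝ) < 2 * (f a - f c₀))] at ht2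
          linarith
        have := hseg t htpos ht1
        nlinarith
    set u₀ : W := (InnerProductSpace.toDual ℝ W).symm f with hu₀def
    have hfu : ∀ z : W, f z = ⟪u₀, z⟫ := by
      intro z
      rw [hu₀def]
      rw [← InnerProductSpace.toDual_apply_apply]
      rw [LinearIsometryEquiv.apply_symm_apply]
    have hu₀ne : u₀ ≠ 0 := by
      intro h0
      have h1 := hf c₀ hc₀int
      rw [hfu, hfu, h0] at h1
      simp at h1
    refine ⟨(u₀ : E), fun h0 => hu₀ne (by exact_mod_cast h0), ?_, ?_⟩
    · exact Submodule.mem_orthogonal_singleton_iff_inner_left.1 u₀.2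
    · intro y hy
      have h2 : (⟨π y, hπW y⟩ : W) ∈ Q₀ := by
        show π y ∈ Q
        exact ⟨y, hy, rfl⟩
      have h3 := hfle _ h2
      rw [hfu, hfu] at h3
      rw [Submodule.coe_inner, Submodule.coe_inner] at h3
      calc ⟪(u₀ : E), y⟫ = ⟪(u₀ : E), π y⟫ := (hinner_π _ u₀.2 y).symm
        _ ≤ ⟪(u₀ : E), π x⟫ := h3
        _ = ⟪(u₀ : E), x⟫ := hinner_π _ u₀.2 x
  · -- supporting functional → frontier
    rintro ⟨u, hu0, huξ, husup⟩
    rw [← closure_diff_intrinsicInterior]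
    refine ⟨subset_closure hπxQ, ?_⟩
    intro hmem
    rw [hII] at hmem
    obtain ⟨y₀, hy₀, hy₀eq⟩ := hmem
    have hy₀int : y₀ ∈ interior Q₀ :=
      intrinsicInterior_subset_interior_of_affineSpan_top haffQ₀ hy₀
    obtain ⟨ε, hε, hsubball⟩ := Metric.mem_nhds_iff.1 (mem_interior_iff_mem_nhds.1 hy₀int)
    have huW : u ∈ W := Submodule.mem_orthogonal_singleton_iff_inner_left.2 huξ
    set u₀ : W := ⟨u, huW⟩ with hu₀def
    have hnu : (0:ℝ) < ‖u₀‖ := by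
      rw [norm_pos_iff]
      intro h
      apply hu0
      have := congrArg (Subtype.val : W → E) h
      exact this
    set z : W := y₀ + (ε / (2 * ‖u₀‖)) • u₀ with hzdef
    have hz : z ∈ Q₀ := by
      apply hsubball
      rw [Metric.mem_ball, dist_eq_norm, hzdef]
      have : y₀ + (ε / (2 * ‖u₀‖)) • u₀ - y₀ = (ε / (2 * ‖u₀‖)) • u₀ := by abel
      rw [this, norm_smul]
      rw [Real.norm_eq_abs, abs_of_pos (by positivity)]
      rw [div_mul_eq_mul_div, div_lt_iff₀ (by positivity)]
      have hlt : ‖u₀‖ < 2 * ‖u₀‖ := by linarith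
      exact mul_lt_mul_of_pos_left hlt hε
    obtain ⟨y, hyP, hyπ⟩ := hz
    have hcontr := husup y hyP
    have h1 : ⟪u, y⟫ = ⟪u, (z : E)⟫ := by
      rw [← hinner_π u huW y, hyπ]
    have h2 : (z : E) = (y₀ : E) + (ε / (2 * ‖u₀‖)) • u := by
      rw [hzdef]
      push_cast
      rfl
    have h3 : ⟪u, (z : E)⟫ = ⟪u, (y₀ : E)⟫ + (ε / (2 * ‖u₀‖)) * ⟪u, u⟫ := by
      rw [h2, inner_add_right, real_inner_smul_right]
    have h4 : ⟪u, x⟫ = ⟪u, (y₀ : E)⟫ := by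
      rw [← hinner_π u huW x, ← hy₀eq]
    have h5 : (0:ℝ) < ⟪u, u⟫ := by
      rw [real_inner_self_eq_norm_mul_norm]
      exact mul_pos (norm_pos_iff.2 hu0) (norm_pos_iff.2 hu0)
    have h6 : (0:ℝ) < ε / (2 * ‖u₀‖) := by positivity
    linarith [mul_pos h6 h5]

lemma glue {X A U : Set E} (hU : IsPreconnected U) (hUX : U ⊆ X)
    (hopen : ∀ ξ ∈ U, ξ ∈ A → ∃ O, IsOpen O ∧ ξ ∈ O ∧ O ∩ X ⊆ A)
    (hcl : ∀ ξ ∈ U, ξ ∉ A → ∃ O, IsOpen O ∧ ξ ∈ O ∧ O ∩ X ∩ A = ∅)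
    {a b : E} (ha : a ∈ U) (hb : b ∈ U) (haA : a ∈ A) : b ∈ A := by
  by_contra hbA
  set uu : Set E := ⋃₀ {O | IsOpen O ∧ O ∩ X ⊆ A} with huu
  set vv : Set E := ⋃₀ {O | IsOpen O ∧ O ∩ X ∩ A = ∅} with hvv
  have hou : IsOpen uu := isOpen_sUnion (fun O hO => hO.1)
  have hov : IsOpen vv := isOpen_sUnion (fun O hO => hO.1)
  have hcover : U ⊆ uu ∪ vv := by
    intro ξ hξ
    by_cases hA : ξ ∈ A
    · obtain ⟨O, hO, hmem, hsub⟩ := hopen ξ hξ hA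
      exact Or.inl ⟨O, ⟨hO, hsub⟩, hmem⟩
    · obtain ⟨O, hO, hmem, hsub⟩ := hcl ξ hξ hA
      exact Or.inr ⟨O, ⟨hO, hsub⟩, hmem⟩
  have h1 : (U ∩ uu).Nonempty := by
    obtain ⟨O, hO, hmem, hsub⟩ := hopen a ha haA
    exact ⟨a, ha, ⟨O, ⟨hO, hsub⟩, hmem⟩⟩
  have h2 : (U ∩ vv).Nonempty := by
    obtain ⟨O, hO, hmem, hsub⟩ := hcl b hb hbA
    exact ⟨b, hb, ⟨O, ⟨hO, hsub⟩, hmem⟩⟩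
  obtain ⟨ζ, hζU, hζu, hζv⟩ := hU uu vv hou hov hcover h1 h2
  obtain ⟨O₁, ⟨hO₁, hs₁⟩, hm₁⟩ := hζu
  obtain ⟨O₂, ⟨hO₂, hs₂⟩, hm₂⟩ := hζv
  have hζA : ζ ∈ A := hs₁ ⟨hm₁, hUX hζU⟩
  have hζ2 : ζ ∈ O₂ ∩ X ∩ A := ⟨⟨hm₂, hUX hζU⟩, hζA⟩
  rw [hs₂] at hζ2
  exact hζ2

theorem stmt12_general [FiniteDimensional ℝ E] {d : ℕ} (hd : 2 ≤ d)
    (hfr : Module.finrank ℝ E = d)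
    (V : Finset E)
    (P : Set E) (hP : P = convexHull ℝ (V : Set E))
    (hPfull : (interior P).Nonempty)
    (Y : Set E)
    (hY : Y = ⋃ F ∈ {F : Set E |
            IsExposed ℝ P F ∧ Module.finrank ℝ (vectorSpan ℝ F) = d - 1},
          {ξ ∈ Metric.sphere (0 : E) 1 | ξ ∈ vectorSpan ℝ F})
    (ξ₀ : E)
    (hξ₀ : ξ₀ ∈ Metric.sphere (0 : E) 1 \ Y)
    (U₁ : Set E)
    (hU₁ : U₁ = connectedComponentIn (Metric.sphere (0 : E) 1 \ Y) ξ₀)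
    (proj : E → E → E)
    (hproj : ∀ ξ x, proj ξ x = x - ⟪x, ξ⟫ • ξ)
    (sb : E → Set E)
    (hsb : ∀ ξ, sb ξ = {x ∈ P | proj ξ x ∈ intrinsicFrontier ℝ (proj ξ '' P)})
    (ξ₁ ξ₂ : E) (h₁ : ξ₁ ∈ U₁) (h₂ : ξ₂ ∈ U₁) :
    sb ξ₁ = sb ξ₂ := by
  classical
  have hVne : V.Nonempty := by
    rcases Finset.eq_empty_or_nonempty V with h | h
    · exfalso
      rw [h] at hP
      simp only [Finset.coe_empty, convexHull_empty] at hP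
      rw [hP] at hPfull
      simp at hPfull
    · exact h
  have hspan : affineSpan ℝ (V : Set E) = ⊤ :=
    affineSpan_eq_top_of_nonempty_interior (by rw [← hP]; exact hPfull)
  set X : Set E := Metric.sphere (0 : E) 1 \ Y with hX
  set A : E → Set E := fun x =>
    {ζ | ∃ u : E, u ≠ 0 ∧ ⟪u, ζ⟫ = 0 ∧ ∀ v ∈ V, ⟪u, v⟫ ≤ ⟪u, x⟫} with hA
  -- facet directions are in Y
  have hxiY : ∀ ζ : E, ζ ∈ Metric.sphere (0 : E) 1 → ∀ η : E, η ≠ 0 → ⟪η, ζ⟫ = 0 →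
      Module.finrank ℝ (vectorSpan ℝ ((Amax V η : Set E))) = Module.finrank ℝ E - 1 →
      ζ ∈ Y := by
    intro ζ hζs η hη0 hηζ hηfr
    set F : Set E := convexHull ℝ ((Amax V η : Set E)) with hF
    have hFexp : IsExposed ℝ P F := by
      intro _
      refine ⟨innerSL ℝ η, ?_⟩
      rw [hP]
      exact (face_eq V hVne η).symm
    have hvsF : vectorSpan ℝ F = vectorSpan ℝ ((Amax V η : Set E)) := by
      rw [← direction_affineSpan, hF, affineSpan_convexHull, direction_affineSpan]
    have hfinF : Module.finrank ℝ (vectorSpan ℝ F) = d - 1 := by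
      rw [hvsF, hηfr, hfr]
    have horth : vectorSpan ℝ ((Amax V η : Set E)) = (ℝ ∙ η)ᗮ := by
      refine Submodule.eq_of_le_of_finrank_eq vectorSpan_Amax_le ?_
      have h1 : Module.finrank ℝ (ℝ ∙ η) + Module.finrank ℝ ((ℝ ∙ η)ᗮ) = Module.finrank ℝ E :=
        Submodule.finrank_add_finrank_orthogonal _
      have h2 : Module.finrank ℝ (ℝ ∙ η) = 1 := finrank_span_singleton hη0
      rw [hηfr]
      omega
    have hζF : ζ ∈ vectorSpan ℝ F := by
      rw [hvsF, horth]
      exact Submodule.mem_orthogonal_singleton_iff_inner_right.2 hηζ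
    rw [hY]
    exact Set.mem_biUnion (show F ∈ {F : Set E | IsExposed ℝ P F ∧
      Module.finrank ℝ (vectorSpan ℝ F) = d - 1} from ⟨hFexp, hfinF⟩) ⟨hζs, hζF⟩
  -- openness around members
  have hopen : ∀ x ∈ P, ∀ ζ ∈ X, ζ ∈ A x → ∃ O, IsOpen O ∧ ζ ∈ O ∧ O ∩ X ⊆ A x := by
    intro x hxP ζ hζX hζA
    obtain ⟨u, hu0, huζ, huN⟩ := hζA
    by_cases hpos : ∃ w : E, (∀ v ∈ V, ⟪w, v⟫ ≤ ⟪w, x⟫) ∧ 0 < ⟪w, ζ⟫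
    · by_cases hneg : ∃ w : E, (∀ v ∈ V, ⟪w, v⟫ ≤ ⟪w, x⟫) ∧ ⟪w, ζ⟫ < 0
      · obtain ⟨up, hupN, hup⟩ := hpos
        obtain ⟨un, hunN, hun⟩ := hneg
        have huspan : ∀ c : ℝ, u ≠ c • up := by
          intro c hc
          rw [hc, real_inner_smul_left] at huζ
          have hc0 : c = 0 := by
            rcases mul_eq_zero.1 huζ with h | h
            · exact h
            · exact absurd h (ne_of_gt hup)
          rw [hc0, zero_smul] at hc
          exact hu0 hc
        obtain ⟨wm, hwmN, hwmneg, hwmnm⟩ : ∃ wm : E, (∀ v ∈ V, ⟪wm, v⟫ ≤ ⟪wm, x⟫) ∧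
            ⟪wm, ζ⟫ < 0 ∧ ∀ c : ℝ, wm ≠ c • up := by
          by_cases hw1 : ∃ c : ℝ, un = c • up
          · obtain ⟨c, hc⟩ := hw1
            refine ⟨un + u, ?_, ?_, ?_⟩
            · intro v hv
              rw [inner_add_left, inner_add_left]
              exact add_le_add (hunN v hv) (huN v hv)
            · rw [inner_add_left, huζ, add_zero]
              exact hun
            · intro c' hc'
              apply huspan (c' - c)
              rw [sub_smul, ← hc', hc]
              abel
          · push_neg at hw1
            exact ⟨un, hunN, hun, hw1⟩
        refine ⟨{ζ' | 0 < ⟪up, ζ'⟫} ∩ {ζ' | ⟪wm, ζ'⟫ < 0}, ?_, ⟨hup, hwmneg⟩, ?_⟩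
        · exact IsOpen.inter
            (isOpen_lt continuous_const (continuous_const.inner continuous_id))
            (isOpen_lt (continuous_const.inner continuous_id) continuous_const)
        · rintro ζ' ⟨⟨ha0, hb0⟩, -⟩
          have ha : (0:ℝ) < ⟪up, ζ'⟫ := ha0
          have hb : ⟪wm, ζ'⟫ < (0:ℝ) := hb0
          set a := ⟪up, ζ'⟫ with hadef
          set b := ⟪wm, ζ'⟫ with hbdef
          refine ⟨a • wm - b • up, ?_, ?_, ?_⟩
          · intro h0
            rw [sub_eq_zero] at h0
            apply hwmnm (b / a)
            calc wm = (a⁻¹ * a) • wm := by rw [inv_mul_cancel₀ (ne_of_gt ha), one_smul]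
              _ = a⁻¹ • (a • wm) := by rw [smul_smul]
              _ = a⁻¹ • (b • up) := by rw [h0]
              _ = (b / a) • up := by rw [smul_smul, div_eq_inv_mul]
          · rw [inner_sub_left, real_inner_smul_left, real_inner_smul_left]
            ring
          · intro v hv
            have h1 : a * ⟪wm, v⟫ ≤ a * ⟪wm, x⟫ :=
              mul_le_mul_of_nonneg_left (hwmN v hv) ha.le
            have h2 : (-b) * ⟪up, v⟫ ≤ (-b) * ⟪up, x⟫ :=
              mul_le_mul_of_nonneg_left (hupN v hv) (by linarith)
            rw [inner_sub_left, inner_sub_left, real_inner_smul_left, real_inner_smul_left,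
              real_inner_smul_left, real_inner_smul_left]
            linarith
      · exfalso
        push_neg at hneg
        have hsign : ∀ w : E, (∀ v ∈ V, ⟪w, v⟫ ≤ ⟪w, x⟫) → 0 ≤ ⟪w, ζ⟫ := hneg
        obtain ⟨η, hη0, hηζ, hηfr⟩ := key_sign hVne hspan hu0 huN
          (by rw [hP] at hxP; exact hxP) huζ (Or.inl hsign)
        exact hζX.2 (hxiY ζ hζX.1 η hη0 hηζ hηfr)
    · exfalso
      push_neg at hpos
      have hsign : ∀ w : E, (∀ v ∈ V, ⟪w, v⟫ ≤ ⟪w, x⟫) → ⟪w, ζ⟫ ≤ 0 := hpos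
      obtain ⟨η, hη0, hηζ, hηfr⟩ := key_sign hVne hspan hu0 huN
        (by rw [hP] at hxP; exact hxP) huζ (Or.inr hsign)
      exact hζX.2 (hxiY ζ hζX.1 η hη0 hηζ hηfr)
  -- openness around non-members
  have hcl : ∀ x : E, ∀ ζ : E, ζ ∉ A x → ∃ O, IsOpen O ∧ ζ ∈ O ∧ O ∩ X ∩ A x = ∅ := by
    intro x ζ hζA
    set N : Set E := {w | ∀ v ∈ V, ⟪w, v⟫ ≤ ⟪w, x⟫} with hN
    set Z : Set E := N ∩ Metric.sphere (0 : E) 1 with hZ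
    have hNc : IsClosed N := by
      have hNeq : N = ⋂ v ∈ V, {w : E | ⟪w, v⟫ ≤ ⟪w, x⟫} := by
        ext w
        simp [hN]
      rw [hNeq]
      exact isClosed_biInter (fun v _ => isClosed_le
        (continuous_id.inner continuous_const) (continuous_id.inner continuous_const))
    have hZc : IsCompact Z := (isCompact_sphere (0 : E) 1).inter_left hNc
    have hnorm : ∀ u : E, u ≠ 0 → (∀ v ∈ V, ⟪u, v⟫ ≤ ⟪u, x⟫) → ‖u‖⁻¹ • u ∈ Z := by
      intro u hu0 huN
      constructor
      · intro v hv
        rw [real_inner_smul_left, real_inner_smul_left]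
        exact mul_le_mul_of_nonneg_left (huN v hv) (by positivity)
      · rw [mem_sphere_zero_iff_norm, norm_smul, norm_inv, norm_norm,
          inv_mul_cancel₀ (norm_ne_zero_iff.2 hu0)]
    by_cases hZne : Z.Nonempty
    · obtain ⟨w₀, hw₀Z, hw₀min'⟩ := hZc.exists_isMinOn hZne
        ((continuous_id.inner continuous_const).abs.continuousOn
          : ContinuousOn (fun w : E => |⟪w, ζ⟫|) Z)
      have hw₀min : ∀ w ∈ Z, |⟪w₀, ζ⟫| ≤ |⟪w, ζ⟫| := fun w hw => hw₀min' hw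
      set m := |⟪w₀, ζ⟫| with hm
      have hw₀ne : w₀ ≠ 0 := by
        intro h
        rw [h] at hw₀Z
        have := hw₀Z.2
        rw [mem_sphere_zero_iff_norm, norm_zero] at this
        norm_num at this
      have hmpos : 0 < m := by
        rw [hm, abs_pos]
        intro h0
        exact hζA ⟨w₀, hw₀ne, h0, hw₀Z.1⟩
      refine ⟨Metric.ball ζ m, Metric.isOpen_ball, Metric.mem_ball_self hmpos, ?_⟩
      rw [Set.eq_empty_iff_forall_notMem]
      rintro ζ' ⟨⟨hζ'b, -⟩, hζ'A⟩
      obtain ⟨u, hu0, huζ', huN⟩ := hζ'A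
      set w : E := ‖u‖⁻¹ • u with hw
      have hwZ : w ∈ Z := hnorm u hu0 huN
      have hwζ' : ⟪w, ζ'⟫ = 0 := by
        rw [hw, real_inner_smul_left, huζ', mul_zero]
      have hle := hw₀min w hwZ
      have hcs : |⟪w, ζ - ζ'⟫| ≤ ‖w‖ * ‖ζ - ζ'‖ := abs_real_inner_le_norm w (ζ - ζ')
      have hwnorm : ‖w‖ = 1 := mem_sphere_zero_iff_norm.1 hwZ.2
      rw [inner_sub_right, hwζ', sub_zero, hwnorm, one_mul] at hcs
      have hdist : ‖ζ - ζ'‖ < m := by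
        rw [Metric.mem_ball, dist_eq_norm] at hζ'b
        rw [norm_sub_rev]
        exact hζ'b
      have : |⟪w, ζ⟫| < m := lt_of_le_of_lt hcs hdist
      linarith
    · refine ⟨Set.univ, isOpen_univ, Set.mem_univ _, ?_⟩
      rw [Set.eq_empty_iff_forall_notMem]
      rintro ζ' ⟨-, hζ'A⟩
      obtain ⟨u, hu0, huζ', huN⟩ := hζ'A
      exact hZne ⟨_, hnorm u hu0 huN⟩
  -- glue
  have hUpre : IsPreconnected U₁ := by
    rw [hU₁]
    exact isPreconnected_connectedComponentIn
  have hUX : U₁ ⊆ X := by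
    rw [hU₁]
    exact connectedComponentIn_subset _ _
  have hiff : ∀ x ∈ P, (ξ₁ ∈ A x ↔ ξ₂ ∈ A x) := by
    intro x hxP
    have hop : ∀ ζ ∈ U₁, ζ ∈ A x → ∃ O, IsOpen O ∧ ζ ∈ O ∧ O ∩ X ⊆ A x := by
      intro ζ hζU hζA
      exact hopen x hxP ζ (hUX hζU) hζA
    have hc : ∀ ζ ∈ U₁, ζ ∉ A x → ∃ O, IsOpen O ∧ ζ ∈ O ∧ O ∩ X ∩ A x = ∅ := by
      intro ζ _ hζA
      exact hcl x ζ hζA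
    exact ⟨fun h => glue hUpre hUX hop hc h₁ h₂ h, fun h => glue hUpre hUX hop hc h₂ h₁ h⟩
  -- conclude using sb_char
  have hprojfun : ∀ ζ : E, proj ζ = fun y => y - ⟪y, ζ⟫ • ζ := fun ζ => funext (hproj ζ)
  have hbridge : ∀ x : E, x ∈ P → ∀ ζ : E,
      ((∃ u : E, u ≠ 0 ∧ ⟪u, ζ⟫ = 0 ∧ ∀ y ∈ P, ⟪u, y⟫ ≤ ⟪u, x⟫) ↔ ζ ∈ A x) := by
    intro x hxP ζ
    constructor
    · rintro ⟨u, hu0, huζ, huP⟩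
      exact ⟨u, hu0, huζ, fun v hv => huP v (by
        rw [hP]
        exact subset_convexHull ℝ _ (Finset.mem_coe.2 hv))⟩
    · rintro ⟨u, hu0, huζ, huV⟩
      refine ⟨u, hu0, huζ, fun y hy => ?_⟩
      rw [hP] at hy
      exact hull_inner_le huV y hy
  have hnorm1 : ∀ ζ ∈ U₁, ‖ζ‖ = 1 := by
    intro ζ hζ
    exact mem_sphere_zero_iff_norm.1 (hUX hζ).1
  ext x
  rw [hsb ξ₁, hsb ξ₂]
  simp only [Set.mem_setOf_eq]
  constructor
  · rintro ⟨hxP, hfront⟩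
    refine ⟨hxP, ?_⟩
    rw [hprojfun ξ₂]
    rw [hprojfun ξ₁] at hfront
    rw [sb_char hP hPfull (hnorm1 ξ₂ h₂) hxP]
    rw [sb_char hP hPfull (hnorm1 ξ₁ h₁) hxP] at hfront
    exact (hbridge x hxP ξ₂).2 ((hiff x hxP).1 ((hbridge x hxP ξ₁).1 hfront))
  · rintro ⟨hxP, hfront⟩
    refine ⟨hxP, ?_⟩
    rw [hprojfun ξ₁]
    rw [hprojfun ξ₂] at hfront
    rw [sb_char hP hPfull (hnorm1 ξ₁ h₁) hxP]
    rw [sb_char hP hPfull (hnorm1 ξ₂ h₂) hxP] at hfront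
    exact (hbridge x hxP ξ₁).2 ((hiff x hxP).2 ((hbridge x hxP ξ₂).1 hfront))


theorem stmt12 {d : ℕ} (hd : 2 ≤ d)
    (V : Finset (EuclideanSpace ℝ (Fin d)))
    (P : Set (EuclideanSpace ℝ (Fin d))) (hP : P = convexHull ℝ (V : Set (EuclideanSpace ℝ (Fin d))))
    (hPfull : (interior P).Nonempty)
    -- `Y` is the union of the great subspheres consisting of directions parallel to a facet of `P`
    (Y : Set (EuclideanSpace ℝ (Fin d)))
    (hY : Y = ⋃ F ∈ {F : Set (EuclideanSpace ℝ (Fin d)) |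
            IsExposed ℝ P F ∧ Module.finrank ℝ (vectorSpan ℝ F) = d - 1},
          {ξ ∈ Metric.sphere (0 : EuclideanSpace ℝ (Fin d)) 1 | ξ ∈ vectorSpan ℝ F})
    (ξ₀ : EuclideanSpace ℝ (Fin d))
    (hξ₀ : ξ₀ ∈ Metric.sphere (0 : EuclideanSpace ℝ (Fin d)) 1 \ Y)
    (U₁ : Set (EuclideanSpace ℝ (Fin d)))
    (hU₁ : U₁ = connectedComponentIn (Metric.sphere (0 : EuclideanSpace ℝ (Fin d)) 1 \ Y) ξ₀)
    -- orthogonal projection onto `ξ^⊥`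
    (proj : EuclideanSpace ℝ (Fin d) → EuclideanSpace ℝ (Fin d) → EuclideanSpace ℝ (Fin d))
    (hproj : ∀ ξ x, proj ξ x = x - ⟪x, ξ⟫ • ξ)
    -- the shadow boundary of `P` in direction `ξ`
    (sb : EuclideanSpace ℝ (Fin d) → Set (EuclideanSpace ℝ (Fin d)))
    (hsb : ∀ ξ, sb ξ = {x ∈ P | proj ξ x ∈ intrinsicFrontier ℝ (proj ξ '' P)})
    (ξ₁ ξ₂ : EuclideanSpace ℝ (Fin d)) (h₁ : ξ₁ ∈ U₁) (h₂ : ξ₂ ∈ U₁) :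
    sb ξ₁ = sb ξ₂ :=
  stmt12_general hd finrank_euclideanSpace_fin V P hP hPfull Y hY ξ₀ hξ₀ U₁ hU₁
    proj hproj sb hsb ξ₁ ξ₂ h₁ h₂
end

section
/- Let P be a convex polytope in ℝ^d containing the origin in its interior, and let U₁ be a connected component of the set of directions ξ ∈ S^{d-1} such that ξ^⊥ contains no vertex of P. Then for any two ξ₁, ξ₂ ∈ U₁, the hyperplanes ξ₁^⊥ and ξ₂^⊥ intersect exactly the same set of (relative interiors of) edges of P. -/
open scoped RealInnerProductSpace

section Helpers

lemma mem_intrinsicInterior_iff'' {E : Type*} [NormedAddCommGroup E] [NormedSpace ℝ E]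
    {s : Set E} {x : E} :
    x ∈ intrinsicInterior ℝ s ↔
      x ∈ affineSpan ℝ s ∧ ∃ ε > 0, ∀ y ∈ affineSpan ℝ s, dist y x < ε → y ∈ s := by
  rw [mem_intrinsicInterior]
  constructor
  · rintro ⟨y, hy, rfl⟩
    refine ⟨y.2, ?_⟩
    rw [mem_interior_iff_mem_nhds, Metric.mem_nhds_iff] at hy
    obtain ⟨ε, hε, hball⟩ := hy
    exact ⟨ε, hε, fun z hz hdz => hball (show (⟨z, hz⟩ : affineSpan ℝ s) ∈ Metric.ball y ε by
      simpa [Metric.mem_ball, Subtype.dist_eq] using hdz)⟩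
  · rintro ⟨hx, ε, hε, h⟩
    refine ⟨⟨x, hx⟩, ?_, rfl⟩
    rw [mem_interior_iff_mem_nhds, Metric.mem_nhds_iff]
    exact ⟨ε, hε, fun z hz => h z z.2 (by simpa [Metric.mem_ball, Subtype.dist_eq] using hz)⟩

lemma combo_mem_intrinsicInterior' {E : Type*} [NormedAddCommGroup E] [NormedSpace ℝ E]
    {s : Set E} (hs : Convex ℝ s) {x y : E} (hx : x ∈ intrinsicInterior ℝ s) (hy : y ∈ s)
    {t : ℝ} (ht0 : 0 ≤ t) (ht1 : t < 1) :
    (1 - t) • x + t • y ∈ intrinsicInterior ℝ s := by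
  rw [mem_intrinsicInterior_iff''] at hx ⊢
  obtain ⟨hxs, ε, hε, hball⟩ := hx
  have hys : y ∈ affineSpan ℝ s := subset_affineSpan ℝ s hy
  have hc : (0:ℝ) < 1 - t := by linarith
  constructor
  · have := AffineMap.lineMap_mem t hxs hys
    rwa [AffineMap.lineMap_apply_module] at this
  · refine ⟨(1 - t) * ε, by positivity, fun w hw hdw => ?_⟩
    set u : E := (1 - t)⁻¹ • (w - t • y) with hu
    have hus : u ∈ affineSpan ℝ s := by
      have := AffineMap.lineMap_mem (1 - t)⁻¹ hys hw
      rw [AffineMap.lineMap_apply_module] at this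
      have heq : (1 - (1 - t)⁻¹) • y + (1 - t)⁻¹ • w = u := by
        rw [hu]; match_scalars <;> field_simp <;> ring
      rwa [heq] at this
    have hdux : dist u x < ε := by
      rw [dist_eq_norm] at hdw ⊢
      have heq : u - x = (1 - t)⁻¹ • (w - ((1 - t) • x + t • y)) := by
        rw [hu]; match_scalars <;> field_simp
      rw [heq, norm_smul, Real.norm_eq_abs, abs_of_pos (inv_pos.mpr hc)]
      calc (1 - t)⁻¹ * ‖w - ((1 - t) • x + t • y)‖
          < (1 - t)⁻¹ * ((1 - t) * ε) := by
            exact mul_lt_mul_of_pos_left hdw (inv_pos.mpr hc)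
        _ = ε := by field_simp
    have hus' : u ∈ s := hball u hus hdux
    have hweq : w = (1 - t) • u + t • y := by
      rw [hu]; match_scalars <;> (field_simp; try ring)
    rw [hweq]
    exact hs hus' hy hc.le ht0 (by ring)

lemma exists_extension' {E : Type*} [NormedAddCommGroup E] [NormedSpace ℝ E]
    {s : Set E} {x y : E} (hx : x ∈ intrinsicInterior ℝ s) (hy : y ∈ s) :
    ∃ δ : ℝ, 0 < δ ∧ x + δ • (x - y) ∈ s := by
  rw [mem_intrinsicInterior_iff''] at hx
  obtain ⟨hxs, ε, hε, hball⟩ := hx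
  have hys : y ∈ affineSpan ℝ s := subset_affineSpan ℝ s hy
  set δ : ℝ := ε / (2 * (‖x - y‖ + 1)) with hδdef
  have hn : (0:ℝ) < ‖x - y‖ + 1 := by positivity
  have hδ : 0 < δ := by positivity
  refine ⟨δ, hδ, hball _ ?_ ?_⟩
  · have := AffineMap.lineMap_mem (1 + δ) hys hxs
    rw [AffineMap.lineMap_apply_module] at this
    have heq : (1 - (1 + δ)) • y + (1 + δ) • x = x + δ • (x - y) := by module
    rwa [heq] at this
  · have heq : x + δ • (x - y) - x = δ • (x - y) := by module
    rw [dist_eq_norm, heq, norm_smul, Real.norm_eq_abs, abs_of_pos hδ]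
    calc δ * ‖x - y‖ < δ * (‖x - y‖ + 1) := by nlinarith
      _ = ε / 2 := by rw [hδdef]; field_simp
      _ < ε := by linarith

lemma cross_aux {E : Type*} [NormedAddCommGroup E] [InnerProductSpace ℝ E]
    {e : Set E} (hec : Convex ℝ e) {c y : E}
    (hc : c ∈ intrinsicInterior ℝ e) (hy : y ∈ e) {ξ : E}
    (h1 : ⟪c, ξ⟫ < 0) (h2 : 0 < ⟪y, ξ⟫) :
    ∃ x ∈ intrinsicInterior ℝ e, ⟪x, ξ⟫ = 0 := by
  set a := ⟪c, ξ⟫ with ha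
  set b := ⟪y, ξ⟫ with hb
  have hab : a - b < 0 := by linarith
  set t : ℝ := a / (a - b) with htdef
  have ht0 : 0 ≤ t := div_nonneg_of_nonpos h1.le hab.le
  have ht1 : t < 1 := by
    rw [htdef, div_lt_one_iff]
    exact Or.inr (Or.inr ⟨hab, by linarith⟩)
  refine ⟨(1 - t) • c + t • y, combo_mem_intrinsicInterior' hec hc hy ht0 ht1, ?_⟩
  rw [inner_add_left, real_inner_smul_left, real_inner_smul_left, ← ha, ← hb, htdef]
  have habne : a - b ≠ 0 := ne_of_lt hab
  field_simp
  ring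

lemma exneg_aux {E : Type*} [NormedAddCommGroup E] [InnerProductSpace ℝ E]
    {e : Set E} (heC : IsCompact e) (hec : Convex ℝ e)
    {x : E} (hx : x ∈ intrinsicInterior ℝ e) {ξ : E} (hfx : ⟪x, ξ⟫ = 0)
    {w : E} (hw : w ∈ Set.extremePoints ℝ e) (hwne : ⟪w, ξ⟫ ≠ 0) :
    ∃ v ∈ Set.extremePoints ℝ e, ⟪v, ξ⟫ < 0 := by
  by_contra hcon
  push_neg at hcon
  have hlin : IsLinearMap ℝ (fun z : E => ⟪z, ξ⟫) :=
    ⟨fun a b => inner_add_left a b ξ, fun c a => real_inner_smul_left a ξ c⟩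
  have hsub : e ⊆ {z : E | 0 ≤ ⟪z, ξ⟫} := by
    rw [← closure_convexHull_extremePoints heC hec]
    refine closure_minimal (convexHull_min (fun v hv => hcon v hv) ?_) ?_
    · exact convex_halfSpace_ge hlin 0
    · exact isClosed_le continuous_const (Continuous.inner continuous_id continuous_const)
  have hw0 : 0 < ⟪w, ξ⟫ := lt_of_le_of_ne (hsub (extremePoints_subset hw)) (Ne.symm hwne)
  obtain ⟨δ, hδ, hmem⟩ := exists_extension' hx (extremePoints_subset hw)
  have h2 := hsub hmem
  simp only [Set.mem_setOf_eq, inner_add_left, inner_sub_left, real_inner_smul_left, hfx] at h2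
  nlinarith

end Helpers

theorem stmt13 {d : ℕ} (hd : 2 ≤ d)
    (V : Finset (EuclideanSpace ℝ (Fin d)))
    (P : Set (EuclideanSpace ℝ (Fin d))) (hP : P = convexHull ℝ (V : Set (EuclideanSpace ℝ (Fin d))))
    (h0 : (0 : EuclideanSpace ℝ (Fin d)) ∈ interior P)
    -- `Y` is the union of the great subspheres of directions `ξ` with a vertex of `P` in `ξ^⊥`
    (Y : Set (EuclideanSpace ℝ (Fin d)))
    (hY : Y = ⋃ v ∈ Set.extremePoints ℝ P,
          {ξ ∈ Metric.sphere (0 : EuclideanSpace ℝ (Fin d)) 1 | ⟪v, ξ⟫ = 0})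
    (ξ₀ : EuclideanSpace ℝ (Fin d))
    (hξ₀ : ξ₀ ∈ Metric.sphere (0 : EuclideanSpace ℝ (Fin d)) 1 \ Y)
    (U₁ : Set (EuclideanSpace ℝ (Fin d)))
    (hU₁ : U₁ = connectedComponentIn (Metric.sphere (0 : EuclideanSpace ℝ (Fin d)) 1 \ Y) ξ₀)
    (ξ₁ ξ₂ : EuclideanSpace ℝ (Fin d)) (h₁ : ξ₁ ∈ U₁) (h₂ : ξ₂ ∈ U₁)
    -- `e` is an arbitrary edge (one-dimensional face) of `P`
    (e : Set (EuclideanSpace ℝ (Fin d))) (he : IsExposed ℝ P e)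
    (he1 : Module.finrank ℝ (vectorSpan ℝ e) = 1) :
    (∃ x ∈ intrinsicInterior ℝ e, ⟪x, ξ₁⟫ = 0) ↔ (∃ x ∈ intrinsicInterior ℝ e, ⟪x, ξ₂⟫ = 0) := by
  have hPc : IsCompact P := hP ▸ V.finite_toSet.isCompact_convexHull (𝕜 := ℝ)
  have hPconv : Convex ℝ P := hP ▸ convex_convexHull ℝ _
  have heC : IsCompact e := he.isCompact hPc
  have hec : Convex ℝ e := he.convex hPconv
  have hene : e.Nonempty := by
    by_contra h
    rw [Set.not_nonempty_iff_eq_empty] at h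
    subst h
    rw [vectorSpan_empty] at he1
    simp [finrank_bot] at he1
  have hSsub : Set.extremePoints ℝ e ⊆ Set.extremePoints ℝ P :=
    he.isExtreme.extremePoints_subset_extremePoints
  have hU₁sub : U₁ ⊆ Metric.sphere (0 : EuclideanSpace ℝ (Fin d)) 1 \ Y :=
    hU₁ ▸ connectedComponentIn_subset _ _
  have hne : ∀ ξ ∈ U₁, ∀ v ∈ Set.extremePoints ℝ P, ⟪v, ξ⟫ ≠ 0 := by
    intro ξ hξ v hv h0'
    exact (hU₁sub hξ).2 (hY ▸ Set.mem_biUnion hv ⟨(hU₁sub hξ).1, h0'⟩)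
  -- sign constancy along `U₁`
  have hsign : ∀ v ∈ Set.extremePoints ℝ P, (⟪v, ξ₁⟫ < 0 ↔ ⟪v, ξ₂⟫ < 0) := by
    intro v hv
    have hconn : IsPreconnected ((fun ξ => ⟪v, ξ⟫) '' U₁) := by
      rw [hU₁]
      exact isPreconnected_connectedComponentIn.image _
        ((Continuous.inner continuous_const continuous_id).continuousOn)
    have h0im : (0:ℝ) ∉ (fun ξ => ⟪v, ξ⟫) '' U₁ := by
      rintro ⟨ξ, hξ, hval⟩
      exact hne ξ hξ v hv hval
    have hord := hconn.ordConnected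
    constructor
    · intro hlt
      by_contra hge
      push_neg at hge
      exact h0im (hord.out ⟨ξ₁, h₁, rfl⟩ ⟨ξ₂, h₂, rfl⟩ ⟨hlt.le, hge⟩)
    · intro hlt
      by_contra hge
      push_neg at hge
      exact h0im (hord.out ⟨ξ₂, h₂, rfl⟩ ⟨ξ₁, h₁, rfl⟩ ⟨hlt.le, hge⟩)
  have hsign' : ∀ v ∈ Set.extremePoints ℝ P, (0 < ⟪v, ξ₁⟫ ↔ 0 < ⟪v, ξ₂⟫) := by
    intro v hv
    constructor
    · intro h
      rcases (hne ξ₂ h₂ v hv).lt_or_gt with h' | h'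
      · exact absurd ((hsign v hv).mpr h') (not_lt.mpr h.le)
      · exact h'
    · intro h
      rcases (hne ξ₁ h₁ v hv).lt_or_gt with h' | h'
      · exact absurd ((hsign v hv).mp h') (not_lt.mpr h.le)
      · exact h'
  -- the key characterization, valid for any `ξ ∈ U₁`
  have key : ∀ ξ ∈ U₁, ((∃ x ∈ intrinsicInterior ℝ e, ⟪x, ξ⟫ = 0) ↔
      ((∃ v ∈ Set.extremePoints ℝ e, ⟪v, ξ⟫ < 0) ∧
        (∃ v ∈ Set.extremePoints ℝ e, 0 < ⟪v, ξ⟫))) := by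
    intro ξ hξ
    constructor
    · rintro ⟨x, hx, hfx⟩
      obtain ⟨w, hwS⟩ := heC.extremePoints_nonempty hene
      have hwne := hne ξ hξ w (hSsub hwS)
      refine ⟨exneg_aux heC hec hx hfx hwS hwne, ?_⟩
      have hwne' : ⟪w, -ξ⟫ ≠ 0 := by
        rw [inner_neg_right]
        simpa using hwne
      have hfx' : ⟪x, -ξ⟫ = 0 := by rw [inner_neg_right, hfx, neg_zero]
      obtain ⟨v, hv, hvlt⟩ := exneg_aux heC hec hx hfx' hwS hwne'
      rw [inner_neg_right] at hvlt
      exact ⟨v, hv, by linarith⟩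
    · rintro ⟨⟨v, hv, hvlt⟩, ⟨w, hw, hwgt⟩⟩
      obtain ⟨c, hc⟩ := hene.intrinsicInterior hec
      rcases lt_trichotomy (⟪c, ξ⟫) 0 with h | h | h
      · exact cross_aux hec hc (extremePoints_subset hw) h hwgt
      · exact ⟨c, hc, h⟩
      · have h1' : ⟪c, -ξ⟫ < 0 := by rw [inner_neg_right]; linarith
        have h2' : 0 < ⟪v, -ξ⟫ := by rw [inner_neg_right]; linarith
        obtain ⟨x, hx, hx0⟩ := cross_aux hec hc (extremePoints_subset hv) h1' h2'
        rw [inner_neg_right, neg_eq_zero] at hx0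
        exact ⟨x, hx, hx0⟩
  rw [key ξ₁ h₁, key ξ₂ h₂]
  constructor
  · rintro ⟨⟨v, hv, hv1⟩, ⟨w, hw, hw1⟩⟩
    exact ⟨⟨v, hv, (hsign v (hSsub hv)).mp hv1⟩, ⟨w, hw, (hsign' w (hSsub hw)).mp hw1⟩⟩
  · rintro ⟨⟨v, hv, hv1⟩, ⟨w, hw, hw1⟩⟩
    exact ⟨⟨v, hv, (hsign v (hSsub hv)).mpr hv1⟩, ⟨w, hw, (hsign' w (hSsub hw)).mpr hw1⟩⟩
end
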